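/- arXiv:2401.00264 — 19 statements merged into one kernel-verified Lean document; each statement's English description precedes it below -/
import Mathlib

section
/- Under the panel binary choice model Y_t = 1{v_t ≤ z_t·β₀ + X_t·γ₀} (t = 1, …, T) together with partial stationarity of the composite errors, the true parameter θ₀ satisfies, for every c ∈ ℝ and all t, s ∈ {1, …, T}, the inequality P(Y_t = 1 and z_t·β₀ + X_t·γ₀ ≤ c) ≤ 1 − P(Y_s = 0 and z_s·β₀ + X_s·γ₀ ≥ c); equivalently, max_{t≤T} L_t(c; θ₀) ≤ min_{s≤T} U_s(c; θ₀) for every c ∈ ℝ, so that θ₀ belongs to the identified set Θ_I defined by these conditional moment inequalities. -/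
open MeasureTheory Matrix

/-! Each observed event forces the error across the threshold `c`: `Y_t = 1` and
`I_t ≤ c` give `v_t ≤ c`, while `Y_s = 0` and `c ≤ I_s` give `c < v_s`. By stationarity
`P(v_t ≤ c) = P(v_s ≤ c)`, and the two events `{v_s ≤ c}` and `{c < v_s}` are complementary. -/

theorem measureReal_le_one_sub_of_subset_compl {Ω : Type*} [MeasurableSpace Ω]
    {P : Measure Ω} [IsProbabilityMeasure P] {S A B : Set Ω} (hS : NullMeasurableSet S P)
    (hA : P A ≤ P S) (hB : B ⊆ Sᶜ) : P.real A ≤ 1 - P.real B :=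
  calc P.real A ≤ P.real S := ENNReal.toReal_mono (measure_ne_top P S) hA
    _ = 1 - P.real Sᶜ := by rw [probReal_compl_eq_one_sub₀ hS, sub_sub_cancel]
    _ ≤ 1 - P.real B := sub_le_sub_left (measureReal_mono hB) 1

theorem stmt_0_general
    {Ω : Type*} [MeasurableSpace Ω] (P : Measure Ω) [IsProbabilityMeasure P]
    {T dz dx : ℕ}
    (z : Fin T → (Fin dz → ℝ))
    (v : Fin T → Ω → ℝ) (X : Fin T → Ω → (Fin dx → ℝ))
    (hv : ∀ t, Measurable (v t))
    (β₀ : Fin dz → ℝ) (γ₀ : Fin dx → ℝ)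
    (Y : Fin T → Ω → ℝ)
    (hY : ∀ t ω, Y t ω = if v t ω ≤ z t ⬝ᵥ β₀ + X t ω ⬝ᵥ γ₀ then 1 else 0)
    (hstat : ∀ t s : Fin T, P.map (v t) = P.map (v s)) :
    ∀ (c : ℝ) (t s : Fin T),
      (P {ω | Y t ω = 1 ∧ z t ⬝ᵥ β₀ + X t ω ⬝ᵥ γ₀ ≤ c}).toReal
        ≤ 1 - (P {ω | Y s ω = 0 ∧ c ≤ z s ⬝ᵥ β₀ + X s ω ⬝ᵥ γ₀}).toReal := by
  intro c t s
  have hident : ProbabilityTheory.IdentDistrib (v t) (v s) P P :=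
    ⟨(hv t).aemeasurable, (hv s).aemeasurable, hstat t s⟩
  have hstat_c : P {ω | v t ω ≤ c} = P {ω | v s ω ≤ c} := hident.measure_mem_eq measurableSet_Iic
  have hlow : {ω | Y t ω = 1 ∧ z t ⬝ᵥ β₀ + X t ω ⬝ᵥ γ₀ ≤ c} ⊆ {ω | v t ω ≤ c} := by
    rintro ω ⟨hY1, hIc⟩
    rw [hY] at hY1
    split_ifs at hY1 with hvI
    · exact hvI.trans hIc
    · norm_num at hY1
  have hhigh : {ω | Y s ω = 0 ∧ c ≤ z s ⬝ᵥ β₀ + X s ω ⬝ᵥ γ₀} ⊆ {ω | v s ω ≤ c}ᶜ := by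
    rintro ω ⟨hY0, hcI⟩ hvc
    rw [hY] at hY0
    split_ifs at hY0 with hvI
    · norm_num at hY0
    · exact hvI (hvc.trans hcI)
  exact measureReal_le_one_sub_of_subset_compl ((hv s) measurableSet_Iic).nullMeasurableSet
    (hstat_c ▸ measure_mono hlow) hhigh

/-- In the panel binary choice model `Y_t = 1{v_t ≤ z_t·β₀ + X_t·γ₀}`,
under partial stationarity of the composite errors `v_t` (conditional on the fixed
covariate realization `z`), the true parameter `θ₀ = (β₀, γ₀)` satisfies, for every
`c ∈ ℝ` and all periods `t, s`,
`P(Y_t = 1 ∧ z_t·β₀ + X_t·γ₀ ≤ c) ≤ 1 − P(Y_s = 0 ∧ z_s·β₀ + X_s·γ₀ ≥ c)`,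
i.e. `θ₀` lies in the identified set defined by these moment inequalities. -/
theorem stmt_0
    {Ω : Type*} [MeasurableSpace Ω] (P : Measure Ω) [IsProbabilityMeasure P]
    {T dz dx : ℕ}
    (z : Fin T → (Fin dz → ℝ))
    (v : Fin T → Ω → ℝ) (X : Fin T → Ω → (Fin dx → ℝ))
    (hv : ∀ t, Measurable (v t)) (hX : ∀ t, Measurable (X t))
    (β₀ : Fin dz → ℝ) (γ₀ : Fin dx → ℝ)
    (Y : Fin T → Ω → ℝ)
    (hY : ∀ t ω, Y t ω = if v t ω ≤ z t ⬝ᵥ β₀ + X t ω ⬝ᵥ γ₀ then 1 else 0)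
    (hstat : ∀ t s : Fin T, P.map (v t) = P.map (v s)) :
    ∀ (c : ℝ) (t s : Fin T),
      (P {ω | Y t ω = 1 ∧ z t ⬝ᵥ β₀ + X t ω ⬝ᵥ γ₀ ≤ c}).toReal
        ≤ 1 - (P {ω | Y s ω = 0 ∧ c ≤ z s ⬝ᵥ β₀ + X s ω ⬝ᵥ γ₀}).toReal :=
  stmt_0_general P z v X hv β₀ γ₀ Y hY hstat
end

section
/- Suppose each endogenous covariate X_t takes values only in the finite set {x̄_1, …, x̄_K} ⊂ ℝ^{d_x}. If a parameter θ = (β, γ) satisfies max_{t≤T} L_t(c; θ) ≤ min_{s≤T} U_s(c; θ) for every c in the finite set 𝒞(θ) := {z_t·β + x̄_k·γ : t = 1, …, T, k = 1, …, K}, then it satisfies max_{t≤T} L_t(c; θ) ≤ min_{s≤T} U_s(c; θ) for every c ∈ ℝ; hence the identified set Θ_I coincides with the set Θ_I^disc defined by the finitely many restrictions at c ∈ 𝒞(θ). -/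
open MeasureTheory Matrix

/-!
On the event `{f ≤ c}` the index `f` only takes values in its finite support `S`, so
`{f ≤ c} = {f ≤ c'}` for the largest `c' ∈ S` below `c`: the lower bound does not change
between consecutive support points, while the upper bound only grows as `c` decreases to `c'`.
If no support point lies below `c`, the lower bound vanishes.
-/

section FiniteSupport

variable {Ω : Type*} {S : Set ℝ} {f : Ω → ℝ}

theorem exists_mem_le_and_setOf_le_eq (hS : S.Finite) (hf : ∀ ω, f ω ∈ S) {c : ℝ}
    {ω₀ : Ω} (hω₀ : f ω₀ ≤ c) :
    ∃ c' ∈ S, c' ≤ c ∧ ∀ ω, f ω ≤ c ↔ f ω ≤ c' := by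
  obtain ⟨c', ⟨hc'S, hc'c⟩, hmax⟩ :=
    Set.exists_max_image (S ∩ Set.Iic c) id (hS.inter_of_left _) ⟨f ω₀, hf ω₀, hω₀⟩
  exact ⟨c', hc'S, hc'c, fun ω => ⟨fun h => hmax (f ω) ⟨hf ω, h⟩, fun h => h.trans hc'c⟩⟩

variable [MeasurableSpace Ω] (P : Measure Ω) [IsProbabilityMeasure P]

theorem measureReal_le_one_sub_of_forall_mem (hS : S.Finite) (hf : ∀ ω, f ω ∈ S)
    (p q : Ω → Prop) (g : Ω → ℝ)
    (hgrid : ∀ c ∈ S, P.real {ω | p ω ∧ f ω ≤ c} ≤ 1 - P.real {ω | q ω ∧ c ≤ g ω})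
    (c : ℝ) : P.real {ω | p ω ∧ f ω ≤ c} ≤ 1 - P.real {ω | q ω ∧ c ≤ g ω} := by
  by_cases hne : ∃ ω, p ω ∧ f ω ≤ c
  · obtain ⟨ω₀, -, hω₀⟩ := hne
    obtain ⟨c', hc'S, hc'c, hiff⟩ := exists_mem_le_and_setOf_le_eq hS hf hω₀
    have hlower : {ω | p ω ∧ f ω ≤ c} = {ω | p ω ∧ f ω ≤ c'} := by
      simp only [hiff]
    have hupper : P.real {ω | q ω ∧ c ≤ g ω} ≤ P.real {ω | q ω ∧ c' ≤ g ω} :=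
      measureReal_mono fun ω ⟨hq, hg⟩ => ⟨hq, hc'c.trans hg⟩
    rw [hlower]
    linarith [hgrid c' hc'S]
  · simp only [not_exists, not_and, not_le] at hne
    have hempty : {ω | p ω ∧ f ω ≤ c} = ∅ :=
      Set.eq_empty_of_forall_notMem fun ω ⟨hp, hle⟩ => (hne ω hp).not_ge hle
    rw [hempty, measureReal_empty, sub_nonneg]
    exact measureReal_le_one

end FiniteSupport

theorem stmt_1_general
    {Ω : Type*} [MeasurableSpace Ω] (P : Measure Ω) [IsProbabilityMeasure P]
    {T dz dx K : ℕ}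
    (z : Fin T → (Fin dz → ℝ))
    (Y : Fin T → Ω → ℝ) (X : Fin T → Ω → (Fin dx → ℝ))
    (xbar : Fin K → (Fin dx → ℝ))
    (hsupp : ∀ t ω, ∃ k, X t ω = xbar k)
    (β : Fin dz → ℝ) (γ : Fin dx → ℝ)
    (hdisc : ∀ c : ℝ, (∃ (t : Fin T) (k : Fin K), c = z t ⬝ᵥ β + xbar k ⬝ᵥ γ) →
      ∀ t s : Fin T,
        (P {ω | Y t ω = 1 ∧ z t ⬝ᵥ β + X t ω ⬝ᵥ γ ≤ c}).toReal
          ≤ 1 - (P {ω | Y s ω = 0 ∧ c ≤ z s ⬝ᵥ β + X s ω ⬝ᵥ γ}).toReal) :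
    ∀ (c : ℝ) (t s : Fin T),
      (P {ω | Y t ω = 1 ∧ z t ⬝ᵥ β + X t ω ⬝ᵥ γ ≤ c}).toReal
        ≤ 1 - (P {ω | Y s ω = 0 ∧ c ≤ z s ⬝ᵥ β + X s ω ⬝ᵥ γ}).toReal := by
  intro c t s
  set grid := Set.range fun tk : Fin T × Fin K => z tk.1 ⬝ᵥ β + xbar tk.2 ⬝ᵥ γ
  have hgrid : grid.Finite := Set.finite_range _
  have hmem : ∀ ω, z t ⬝ᵥ β + X t ω ⬝ᵥ γ ∈ grid := fun ω => by
    obtain ⟨k, hk⟩ := hsupp t ω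
    exact ⟨(t, k), by rw [hk]⟩
  refine measureReal_le_one_sub_of_forall_mem P hgrid hmem _ _ _ (fun c' hc' => ?_) c
  obtain ⟨⟨t', k'⟩, rfl⟩ := hc'
  exact hdisc _ ⟨t', k', rfl⟩ t s

/-- When the endogenous covariates `X_t` take values only in the finite set
`{x̄_1, …, x̄_K}`, a parameter `θ = (β, γ)` satisfying the moment inequalities
`max_t L_t(c; θ) ≤ min_s U_s(c; θ)` (stated pairwise in `t, s`) at every `c` in the finite
set `𝒞(θ) = {z_t·β + x̄_k·γ}` also satisfies them at every `c ∈ ℝ`; hence the identified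
set coincides with the one defined by the finitely many restrictions. -/
theorem stmt_1
    {Ω : Type*} [MeasurableSpace Ω] (P : Measure Ω) [IsProbabilityMeasure P]
    {T dz dx K : ℕ}
    (z : Fin T → (Fin dz → ℝ))
    (Y : Fin T → Ω → ℝ) (X : Fin T → Ω → (Fin dx → ℝ))
    (hYbin : ∀ t ω, Y t ω = 0 ∨ Y t ω = 1)
    (hYm : ∀ t, Measurable (Y t)) (hXm : ∀ t, Measurable (X t))
    (xbar : Fin K → (Fin dx → ℝ))
    (hsupp : ∀ t ω, ∃ k, X t ω = xbar k)
    (β : Fin dz → ℝ) (γ : Fin dx → ℝ)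
    (hdisc : ∀ c : ℝ, (∃ (t : Fin T) (k : Fin K), c = z t ⬝ᵥ β + xbar k ⬝ᵥ γ) →
      ∀ t s : Fin T,
        (P {ω | Y t ω = 1 ∧ z t ⬝ᵥ β + X t ω ⬝ᵥ γ ≤ c}).toReal
          ≤ 1 - (P {ω | Y s ω = 0 ∧ c ≤ z s ⬝ᵥ β + X s ω ⬝ᵥ γ}).toReal) :
    ∀ (c : ℝ) (t s : Fin T),
      (P {ω | Y t ω = 1 ∧ z t ⬝ᵥ β + X t ω ⬝ᵥ γ ≤ c}).toReal
        ≤ 1 - (P {ω | Y s ω = 0 ∧ c ≤ z s ⬝ᵥ β + X s ω ⬝ᵥ γ}).toReal :=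
  stmt_1_general P z Y X xbar hsupp β γ hdisc
end

section
/- Sharpness of the identified set in the discrete case: suppose each X_t takes only finitely many values, and let θ = (β, γ) be any parameter satisfying max_{t≤T} L_t(c; θ) ≤ min_{s≤T} U_s(c; θ) for every c ∈ ℝ. Then there exist a probability space (Ω*, 𝓕*, P*) and random variables X* = (X*_1, …, X*_T) and v* = (v*_1, …, v*_T) on it such that: (i) X* has the same joint distribution as X = (X_1, …, X_T); (ii) the marginal distribution of v*_t under P* is the same for every t (so partial stationarity holds, with fixed effect α* ≡ 0); and (iii) for every x = (x_1, …, x_T) in the support of X (i.e. with P(X = x) > 0) and every y ∈ {0,1}^T, P*( 1{v*_t ≤ z_t·β + x_t·γ} = y_t for all t = 1, …, T │ X* = x ) = P( Y = y │ X = x ). In other words, the model with parameter θ and errors v* is observationally equivalent to the true data-generating process, so the identified set Θ_I^disc is sharp. -/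
/-!
Encode outcome and index of period `t` as one real `Z_t = rankCode (Y_t) (I_t)`, ordered so that
all pairs with `Y_t = 1` precede all pairs with `Y_t = 0`, and by the index within each class.
Given an independent uniform `u`, the distributional transform `W_t` of `Z_t` is uniform for every
`t`, and on the atoms of `Z_t` it satisfies `W_t ≤ L_t(I_t)` if `Y_t = 1` and `W_t > U_t(I_t)` if
`Y_t = 0`. The moment inequalities say that `F = max_t L_t` lies below every `U_s`, so for a
quantile function `G` of `F` the errors `v_t = G(W_t)` all have the law of `G(W)` with `W` uniform,
and `v_t ≤ I_t ↔ Y_t = 1` almost surely. The law of `(X, v)` is then realized on a canonical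
sample space.
-/

open MeasureTheory Matrix

noncomputable section

namespace DiscreteSharpness

open Set

def unif : Measure ℝ := volume.restrict (Ioc 0 1)

instance : IsProbabilityMeasure unif := ⟨by simp [unif]⟩

lemma ae_unif_mem_Ioc : ∀ᵐ u ∂unif, u ∈ Ioc (0 : ℝ) 1 := ae_restrict_mem measurableSet_Ioc

lemma unif_Iic (a : ℝ) : unif (Iic a) = ENNReal.ofReal (min 1 a) := by
  rw [unif, Measure.restrict_apply measurableSet_Iic, inter_comm, Ioc_inter_Iic, Real.volume_Ioc,
    sub_zero]

lemma ofReal_mul_unif_setOf_add_mul_le {q : ℝ} (hq : 0 ≤ q) (l a : ℝ) :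
    ENNReal.ofReal q * unif {u | l + u * q ≤ a} = ENNReal.ofReal (min q (a - l)) := by
  rcases hq.eq_or_lt with rfl | hq
  · simp
  have hset : {u | l + u * q ≤ a} = Iic ((a - l) / q) := by
    ext u
    rw [mem_ofPred_eq, mem_Iic, le_div_iff₀ hq]
    constructor <;> intro <;> linarith
  rw [hset, unif_Iic, ← ENNReal.ofReal_mul hq.le, mul_min_of_nonneg _ _ hq.le, mul_one,
    mul_div_cancel₀ _ hq.ne']

lemma ofReal_min_add_ofReal_min_sub {S q : ℝ} (hS : 0 ≤ S) (hq : 0 ≤ q) (a : ℝ) :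
    ENNReal.ofReal (min S a) + ENNReal.ofReal (min q (a - S)) =
      ENNReal.ofReal (min (S + q) a) := by
  rcases le_or_gt a S with haS | hSa
  · rw [min_eq_right haS, ENNReal.ofReal_of_nonpos (min_le_of_right_le (by linarith)), add_zero,
      min_eq_right (by linarith)]
  · rw [min_eq_left hSa.le, ← ENNReal.ofReal_add hS (le_min hq (by linarith)), ← min_add_add_left,
      add_sub_cancel]

lemma sum_ofReal_min_sub_sum_lt {α : Type*} [LinearOrder α] (s : Finset α) {q : α → ℝ}
    (hq : ∀ r, 0 ≤ q r) (a : ℝ) :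
    ∑ r ∈ s, ENNReal.ofReal (min (q r) (a - ∑ r' ∈ s with r' < r, q r')) =
      ENNReal.ofReal (min (∑ r ∈ s, q r) a) := by
  induction s using Finset.induction_on_max with
  | empty => simp
  | insert b s hb ih =>
    have hbs : b ∉ s := fun h => lt_irrefl b (hb b h)
    have hfilter : ∀ r ∈ s, (insert b s).filter (· < r) = s.filter (· < r) := fun r hr => by
      rw [Finset.filter_insert, if_neg (hb r hr).not_gt]
    have hrest : ∑ r ∈ s, ENNReal.ofReal (min (q r) (a - ∑ r' ∈ insert b s with r' < r, q r')) =
        ∑ r ∈ s, ENNReal.ofReal (min (q r) (a - ∑ r' ∈ s with r' < r, q r')) :=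
      Finset.sum_congr rfl fun r hr => by rw [hfilter r hr]
    rw [Finset.sum_insert hbs, hrest, ih, Finset.filter_insert, if_neg (lt_irrefl b),
      Finset.filter_true_of_mem hb, add_comm,
      ofReal_min_add_ofReal_min_sub (Finset.sum_nonneg fun r _ => hq r) (hq b),
      Finset.sum_insert hbs, add_comm (q b)]

section DistribTransform

variable {Ω : Type*} [MeasurableSpace Ω] (P : Measure Ω) (Z : Ω → ℝ)

/-- Rüschendorf's randomized distributional transform. -/
def distribTransform (p : Ω × ℝ) : ℝ :=
  P.real (Z ⁻¹' Iio (Z p.1)) + p.2 * P.real (Z ⁻¹' {Z p.1})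

variable {Z}

lemma ae_measure_preimage_singleton_ne_zero (hZ : (range Z).Countable) :
    ∀ᵐ ω ∂P, P (Z ⁻¹' {Z ω}) ≠ 0 := by
  rw [ae_iff]
  refine measure_mono_null (t := Z ⁻¹' {r ∈ range Z | P (Z ⁻¹' {r}) = 0}) (fun ω hω => ?_) ?_
  · simpa using hω
  · exact (measure_preimage_eq_zero_iff_of_countable (hZ.mono (sep_subset _ _))).2 fun r hr => hr.2

variable [IsFiniteMeasure P]

lemma measureReal_preimage_Iio_add_singleton (hZ : Measurable Z) (r : ℝ) :
    P.real (Z ⁻¹' Iio r) + P.real (Z ⁻¹' {r}) = P.real (Z ⁻¹' Iic r) := by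
  have hdisj : Disjoint (Iio r) {r} := disjoint_singleton_right.2 (lt_irrefl r)
  rw [← measureReal_union (hdisj.preimage Z) (hZ (measurableSet_singleton r)), ← preimage_union,
    Iio_union_right]

lemma measurable_distribTransform (hZ : Measurable Z) : Measurable (distribTransform P Z) := by
  have hL : Measurable fun r => P.real (Z ⁻¹' Iio r) :=
    Monotone.measurable fun r r' h => measureReal_mono (preimage_mono (Iio_subset_Iio h))
  have hU : Measurable fun r => P.real (Z ⁻¹' Iic r) :=
    Monotone.measurable fun r r' h => measureReal_mono (preimage_mono (Iic_subset_Iic.2 h))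
  have hQ : Measurable fun r => P.real (Z ⁻¹' {r}) := by
    convert hU.sub hL using 1
    ext r
    rw [Pi.sub_apply, ← measureReal_preimage_Iio_add_singleton P hZ, add_sub_cancel_left]
  exact (hL.comp (hZ.comp measurable_fst)).add
    (measurable_snd.mul (hQ.comp (hZ.comp measurable_fst)))

lemma distribTransform_le (hZ : Measurable Z) {p : Ω × ℝ} (hp : p.2 ≤ 1) :
    distribTransform P Z p ≤ P.real (Z ⁻¹' Iic (Z p.1)) := by
  rw [distribTransform, ← measureReal_preimage_Iio_add_singleton P hZ]
  gcongr
  exact mul_le_of_le_one_left measureReal_nonneg hp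

lemma lt_distribTransform {p : Ω × ℝ} (hp : 0 < p.2) (hatom : P (Z ⁻¹' {Z p.1}) ≠ 0) :
    P.real (Z ⁻¹' Iio (Z p.1)) < distribTransform P Z p :=
  lt_add_of_pos_right _ (mul_pos hp (ENNReal.toReal_pos hatom (measure_ne_top _ _)))

theorem map_distribTransform [IsProbabilityMeasure P] (hZ : Measurable Z)
    (hfin : (range Z).Finite) : (P.prod unif).map (distribTransform P Z) = unif := by
  refine Measure.ext_of_Iic _ _ fun a => ?_
  set R := hfin.toFinset
  have hR : ∀ ω, Z ω ∈ R := by simp [R]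
  have hfiber : ∀ r ∈ R, MeasurableSet (Z ⁻¹' {r}) := fun r _ => hZ (measurableSet_singleton r)
  have hbelow : ∀ r, P.real (Z ⁻¹' Iio r) = ∑ r' ∈ R with r' < r, P.real (Z ⁻¹' {r'}) := by
    intro r
    rw [sum_measureReal_preimage_singleton _ fun r' _ => hZ (measurableSet_singleton r')]
    congr 1
    ext ω
    simp [hR]
  have htotal : ∑ r ∈ R, P.real (Z ⁻¹' {r}) = 1 := by
    rw [sum_measureReal_preimage_singleton _ hfiber, show Z ⁻¹' R = univ from eq_univ_of_forall hR,
      probReal_univ]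
  have hcover : distribTransform P Z ⁻¹' Iic a = ⋃ r ∈ R,
      (Z ⁻¹' {r}) ×ˢ {u | P.real (Z ⁻¹' Iio r) + u * P.real (Z ⁻¹' {r}) ≤ a} := by
    ext ⟨ω, u⟩
    simp [distribTransform, hR]
  rw [Measure.map_apply (measurable_distribTransform P hZ) measurableSet_Iic, hcover,
    measure_biUnion_finset
      (fun r hr r' hr' hne => (pairwiseDisjoint_fiber Z _ hr hr' hne).set_prod_left _ _)
      fun r hr => (hfiber r hr).prod (measurableSet_le (by fun_prop) measurable_const), unif_Iic]
  calc _ = ∑ r ∈ R, ENNReal.ofReal (min (P.real (Z ⁻¹' {r}))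
        (a - ∑ r' ∈ R with r' < r, P.real (Z ⁻¹' {r'}))) := by
        refine Finset.sum_congr rfl fun r _ => ?_
        rw [Measure.prod_prod, ← ofReal_measureReal, ofReal_mul_unif_setOf_add_mul_le
          measureReal_nonneg, hbelow]
    _ = ENNReal.ofReal (min 1 a) := by
        rw [sum_ofReal_min_sub_sum_lt R (fun _ => measureReal_nonneg), htotal]

end DistribTransform

def rankCode (b : Bool) (c : ℝ) : ℝ := Real.arctan c + if b then 0 else Real.pi

lemma rankCode_le_rankCode_true_iff {b : Bool} {c c' : ℝ} :
    rankCode b c ≤ rankCode true c' ↔ b = true ∧ c ≤ c' := by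
  have := Real.arctan_lt_pi_div_two c'
  have := Real.neg_pi_div_two_lt_arctan c
  cases b <;> simp [rankCode, Real.arctan_strictMono.le_iff_le]
  linarith

lemma rankCode_lt_rankCode_false_iff {b : Bool} {c c' : ℝ} :
    rankCode b c < rankCode false c' ↔ ¬(b = false ∧ c' ≤ c) := by
  have := Real.arctan_lt_pi_div_two c
  have := Real.neg_pi_div_two_lt_arctan c'
  cases b <;> simp [rankCode, Real.arctan_strictMono.lt_iff_lt]
  linarith

lemma measurable_rankCode {Ω : Type*} [MeasurableSpace Ω] {Y : Ω → Bool} {I : Ω → ℝ}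
    (hY : Measurable Y) (hI : Measurable I) : Measurable fun ω => rankCode (Y ω) (I ω) :=
  (Real.continuous_arctan.measurable.comp hI).add
    (Measurable.ite (hY (measurableSet_singleton true)) measurable_const measurable_const)

/-- A quantile function of `F` on the finite grid `D`; the cap `M` keeps the infimum away from
the junk value `sInf ∅ = 0`. -/
def gridQuantile (F : ℝ → ℝ) (D : Set ℝ) (M w : ℝ) : ℝ := sInf (insert M {d ∈ D | w ≤ F d})

section GridQuantile

variable {F : ℝ → ℝ} {D : Set ℝ} {M : ℝ}

lemma gridQuantile_le (hD : D.Finite) {c w : ℝ} (hc : c ∈ D) (hw : w ≤ F c) :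
    gridQuantile F D M w ≤ c :=
  csInf_le ((hD.sep _).insert M).bddBelow (mem_insert_of_mem _ ⟨hc, hw⟩)

lemma lt_gridQuantile (hF : Monotone F) (hD : D.Finite) {c w : ℝ} (hcM : c < M) (hw : F c < w) :
    c < gridQuantile F D M w := by
  rcases (insert_nonempty M _).csInf_mem ((hD.sep _).insert M) with hM | ⟨-, hwd⟩
  · rwa [gridQuantile, hM]
  · by_contra! hle
    exact (hw.trans_le hwd).not_ge (hF hle)

lemma monotone_gridQuantile (hD : D.Finite) : Monotone (gridQuantile F D M) :=
  fun _ _ hww' => csInf_le_csInf ((hD.sep _).insert M).bddBelow (insert_nonempty _ _)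
    (insert_subset_insert fun _ ⟨hd, hwd⟩ => ⟨hd, hww'.trans hwd⟩)

end GridQuantile

section SinglePeriod

variable {Ω : Type*} [MeasurableSpace Ω] (P : Measure Ω) [IsProbabilityMeasure P]
  {Y : Ω → Bool} {I : Ω → ℝ}

theorem gridQuantile_distribTransform_le_iff (hY : Measurable Y) (hI : Measurable I)
    {F : ℝ → ℝ} (hF : Monotone F) (hLF : ∀ c, P.real {ω | Y ω = true ∧ I ω ≤ c} ≤ F c)
    (hFU : ∀ c, F c ≤ 1 - P.real {ω | Y ω = false ∧ c ≤ I ω})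
    {D : Set ℝ} {M : ℝ} (hD : D.Finite) (hID : ∀ ω, I ω ∈ D) (hDM : ∀ d ∈ D, d < M)
    {p : Ω × ℝ} (hp : p.2 ∈ Ioc 0 1)
    (hatom : P ((fun ω => rankCode (Y ω) (I ω)) ⁻¹' {rankCode (Y p.1) (I p.1)}) ≠ 0) :
    gridQuantile F D M (distribTransform P (fun ω => rankCode (Y ω) (I ω)) p) ≤ I p.1 ↔
      Y p.1 = true := by
  set Z := fun ω => rankCode (Y ω) (I ω)
  cases hω : Y p.1
  · have hbelow : P.real (Z ⁻¹' Iio (Z p.1)) = 1 - P.real {ω | Y ω = false ∧ I p.1 ≤ I ω} := by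
      have hcompl : Z ⁻¹' Iio (Z p.1) = {ω | Y ω = false ∧ I p.1 ≤ I ω}ᶜ := by
        ext ω
        simp [Z, hω, rankCode_lt_rankCode_false_iff]
      have hmeas : MeasurableSet {ω | Y ω = false ∧ I p.1 ≤ I ω} :=
        (hY (measurableSet_singleton false)).inter (measurableSet_le measurable_const hI)
      rw [hcompl, probReal_compl_eq_one_sub hmeas]
    simp only [Bool.false_eq_true, iff_false, not_le]
    refine lt_gridQuantile hF hD (hDM _ (hID _)) ((hFU _).trans_lt ?_)
    exact hbelow ▸ lt_distribTransform P hp.1 hatom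
  · have hupto : P.real (Z ⁻¹' Iic (Z p.1)) = P.real {ω | Y ω = true ∧ I ω ≤ I p.1} := by
      congr 1
      ext ω
      simp [Z, hω, rankCode_le_rankCode_true_iff]
    simp only [iff_true]
    exact gridQuantile_le hD (hID _)
      (((distribTransform_le P (measurable_rankCode hY hI) hp.2).trans hupto.le).trans (hLF _))

end SinglePeriod

section Construction

variable {Ω ι : Type*} [MeasurableSpace Ω] (P : Measure Ω) {Y : ι → Ω → Bool}

theorem exists_stationary_errors [IsProbabilityMeasure P] [Finite ι] {I : ι → Ω → ℝ}
    (hY : ∀ t, Measurable (Y t)) (hI : ∀ t, Measurable (I t)) (hfin : ∀ t, (range (I t)).Finite)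
    (hineq : ∀ c t s, P.real {ω | Y t ω = true ∧ I t ω ≤ c} ≤
      1 - P.real {ω | Y s ω = false ∧ c ≤ I s ω}) :
    ∃ v : ι → Ω × ℝ → ℝ, (∀ t, Measurable (v t)) ∧
      (∀ t s, (P.prod unif).map (v t) = (P.prod unif).map (v s)) ∧
      ∀ᵐ p ∂P.prod unif, ∀ t, v t p ≤ I t p.1 ↔ Y t p.1 = true := by
  set F : ℝ → ℝ := fun c => ⨆ t, P.real {ω | Y t ω = true ∧ I t ω ≤ c}
  have hbdd : ∀ c, BddAbove (range fun t => P.real {ω | Y t ω = true ∧ I t ω ≤ c}) :=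
    fun c => (finite_range _).bddAbove
  have hF : Monotone F := fun c c' h =>
    ciSup_mono (hbdd c') fun t => measureReal_mono fun ω hω => ⟨hω.1, hω.2.trans h⟩
  have hFU : ∀ t c, F c ≤ 1 - P.real {ω | Y t ω = false ∧ c ≤ I t ω} := fun t c =>
    haveI : Nonempty ι := ⟨t⟩
    ciSup_le fun s => hineq c s t
  set D := ⋃ t, range (I t)
  have hD : D.Finite := finite_iUnion hfin
  obtain ⟨M, hM⟩ := hD.bddAbove
  set Z := fun t ω => rankCode (Y t ω) (I t ω)
  have hZ : ∀ t, Measurable (Z t) := fun t => measurable_rankCode (hY t) (hI t)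
  have hZfin : ∀ t, (range (Z t)).Finite := fun t =>
    ((toFinite (range (Y t))).image2 rankCode (hfin t)).subset <| by
      rintro _ ⟨ω, rfl⟩
      exact mem_image2_of_mem (mem_range_self ω) (mem_range_self ω)
  have hG : Measurable (gridQuantile F D (M + 1)) := (monotone_gridQuantile hD).measurable
  refine ⟨fun t => gridQuantile F D (M + 1) ∘ distribTransform P (Z t),
    fun t => hG.comp (measurable_distribTransform P (hZ t)), fun t s => ?_, ?_⟩
  · rw [← Measure.map_map hG (measurable_distribTransform P (hZ t)),
      ← Measure.map_map hG (measurable_distribTransform P (hZ s)),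
      map_distribTransform P (hZ t) (hZfin t), map_distribTransform P (hZ s) (hZfin s)]
  · have hatoms : ∀ᵐ ω ∂P, ∀ t, P (Z t ⁻¹' {Z t ω}) ≠ 0 :=
      ae_all_iff.2 fun t => ae_measure_preimage_singleton_ne_zero P (hZfin t).countable
    filter_upwards [Measure.quasiMeasurePreserving_fst.ae hatoms,
      Measure.quasiMeasurePreserving_snd.ae ae_unif_mem_Ioc] with p hatom hu t
    exact gridQuantile_distribTransform_le_iff P (hY t) (hI t) hF (fun c => le_ciSup (hbdd c) t)
      (hFU t) hD (fun ω => mem_iUnion_of_mem t (mem_range_self ω))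
      (fun d hd => (hM hd).trans_lt (lt_add_one M)) hu (hatom t)

lemma prod_unif_preimage_fst (s : Set Ω) : (P.prod unif) (Prod.fst ⁻¹' s) = P s := by
  rw [← prod_univ, Measure.prod_prod, measure_univ, mul_one]

lemma measure_prod_unif_choice_eq {α : Type*} {v : ι → Ω × ℝ → ℝ} {X : ι → Ω → α}
    (f : ι → α → ℝ) (hv : ∀ᵐ p ∂P.prod unif, ∀ t, v t p ≤ f t (X t p.1) ↔ Y t p.1 = true)
    (x : ι → α) (y : ι → Bool) :
    (P.prod unif) {p | (∀ t, (v t p ≤ f t (x t) ↔ y t = true)) ∧ (fun t => X t p.1) = x} =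
      P {ω | (∀ t, Y t ω = y t) ∧ (fun t => X t ω) = x} := by
  rw [← prod_unif_preimage_fst P]
  refine measure_congr (Filter.eventuallyEq_set.2 (hv.mono fun p hp => ?_))
  by_cases hx : (fun t => X t p.1) = x
  · subst hx
    simp only [mem_preimage, mem_ofPred_eq, hp, and_true]
    exact forall_congr' fun t => Bool.eq_iff_iff.symm
  · simp [hx]

end Construction

end DiscreteSharpness

end

open Set DiscreteSharpness

/-- Sharpness of the identified set in the discrete case. If each `X_t`
takes only finitely many values and `θ = (β, γ)` satisfies all the conditional moment
inequalities, then there exist a probability space `(Ω', P')` and random variables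
`X'`, `v'` such that: (i) `X' = (X'_1, …, X'_T)` has the same joint distribution as
`X`; (ii) every `v'_t` has the same marginal distribution (partial stationarity, with
fixed effect `α* ≡ 0`); (iii) for every `x` in the support of `X` and every
`y ∈ {0,1}^T`, `P'(1{v'_t ≤ z_t·β + x_t·γ} = y_t ∀t │ X' = x) = P(Y = y │ X = x)`. -/
theorem stmt_2
    {Ω : Type*} [MeasurableSpace Ω] (P : Measure Ω) [IsProbabilityMeasure P]
    {T dz dx : ℕ}
    (z : Fin T → (Fin dz → ℝ))
    (Y : Fin T → Ω → Bool) (X : Fin T → Ω → (Fin dx → ℝ))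
    (hYm : ∀ t, Measurable (Y t)) (hXm : ∀ t, Measurable (X t))
    (hfin : ∀ t, (Set.range (X t)).Finite)
    (β : Fin dz → ℝ) (γ : Fin dx → ℝ)
    (hineq : ∀ (c : ℝ) (t s : Fin T),
      (P {ω | Y t ω = true ∧ z t ⬝ᵥ β + X t ω ⬝ᵥ γ ≤ c}).toReal
        ≤ 1 - (P {ω | Y s ω = false ∧ c ≤ z s ⬝ᵥ β + X s ω ⬝ᵥ γ}).toReal) :
    ∃ (Ω' : Type) (_ : MeasurableSpace Ω') (P' : Measure Ω')
      (X' : Fin T → Ω' → (Fin dx → ℝ)) (v' : Fin T → Ω' → ℝ),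
      IsProbabilityMeasure P' ∧
      (∀ t, Measurable (X' t)) ∧ (∀ t, Measurable (v' t)) ∧
      -- (i) X' has the same joint distribution as X
      P'.map (fun ω t => X' t ω) = P.map (fun ω t => X t ω) ∧
      -- (ii) partial stationarity: the marginal law of v'_t is the same for all t
      (∀ t s : Fin T, P'.map (v' t) = P'.map (v' s)) ∧
      -- (iii) observational equivalence of the conditional choice probabilities
      (∀ x : Fin T → (Fin dx → ℝ), 0 < P {ω | (fun t => X t ω) = x} →
        ∀ y : Fin T → Bool,
          (P' {ω | (∀ t, (v' t ω ≤ z t ⬝ᵥ β + x t ⬝ᵥ γ ↔ y t = true)) ∧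
              (fun t => X' t ω) = x}).toReal
            / (P' {ω | (fun t => X' t ω) = x}).toReal
          = (P {ω | (∀ t, Y t ω = y t) ∧ (fun t => X t ω) = x}).toReal
            / (P {ω | (fun t => X t ω) = x}).toReal) := by
  set f : Fin T → (Fin dx → ℝ) → ℝ := fun t a => z t ⬝ᵥ β + a ⬝ᵥ γ
  have hf : ∀ t, Measurable (f t) := fun t =>
    (continuous_const.add (continuous_id.dotProduct continuous_const)).measurable
  obtain ⟨v, hvm, hvlaw, hvY⟩ := exists_stationary_errors P (I := fun t ω => f t (X t ω)) hYm
    (fun t => (hf t).comp (hXm t)) (fun t => range_comp (f t) (X t) ▸ (hfin t).image (f t)) hineq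
  let φ : Ω × ℝ → (Fin T → Fin dx → ℝ) × (Fin T → ℝ) := fun p => (fun t => X t p.1, fun t => v t p)
  have hφ : Measurable φ := (measurable_pi_lambda _ fun t => (hXm t).comp measurable_fst).prodMk
    (measurable_pi_lambda _ hvm)
  refine ⟨_, inferInstance, (P.prod unif).map φ, fun t q => q.1 t, fun t q => q.2 t,
    Measure.isProbabilityMeasure_map hφ.aemeasurable, fun t => by fun_prop, fun t => by fun_prop,
    ?_, fun t s => ?_, fun x _ y => ?_⟩
  · rw [Measure.map_map (by fun_prop) hφ]
    change (P.prod unif).map ((fun ω t => X t ω) ∘ Prod.fst) = _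
    rw [← Measure.map_map (measurable_pi_lambda _ hXm) measurable_fst, Measure.map_fst_prod,
      measure_univ, one_smul]
  · rw [Measure.map_map (by fun_prop) hφ, Measure.map_map (by fun_prop) hφ]
    exact hvlaw t s
  · rw [Measure.map_apply hφ (by measurability), Measure.map_apply hφ (by measurability)]
    exact congrArg₂ (fun a b => a.toReal / b.toReal) (measure_prod_unif_choice_eq P f hvY x y)
      (prod_unif_preimage_fst P {ω | (fun t => X t ω) = x})
end

section
/- Sharpness of the identified set in the continuous case: let θ = (β, γ) satisfy (i) max_{t≤T} L_t(c; θ) ≤ min_{s≤T} U_s(c; θ) for every c ∈ ℝ; (ii) for each t, the index I_t(θ) = z_t·β + X_t·γ has a distribution that is absolutely continuous with an everywhere strictly positive density on a bounded interval support; (iii) the conditional probabilities q_t(x) := Σ_{y : y_t = 1} q(y│x) satisfy 0 < q_t(x) < 1 for P_X-almost every x and each t; and (iv) the set {c ∈ ℝ : max_{t≤T} L_t(c; θ) = min_{s≤T} U_s(c; θ)} has Lebesgue measure zero. Then there exist a probability space (Ω*, 𝓕*, P*) and random variables X* = (X*_1, …, X*_T) and v* = (v*_1, …, v*_T) such that: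 X* has the same joint distribution as X; the marginal distribution of v*_t is the same for every t; and for P_X-almost every x and every y ∈ {0,1}^T, a regular conditional distribution of v* given X* = x assigns probability q(y│x) to the event { 1{v*_t ≤ z_t·β + x_t·γ} = y_t for all t }. Hence the identified set Θ_I^cts is sharp. -/
open MeasureTheory ProbabilityTheory Filter Set Topology Real Matrix

/-!
Encode the period-`t` outcome as the real number `J_t = lexCode Y_t I_t`, which puts every
outcome with `Y_t = 1` before every outcome with `Y_t = 0` and orders each group by the index.
The index is atomless, so `J_t` is too, and `W_t = F_{J_t}(J_t)` is uniform on `[0, 1]`; it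
equals `L_t(I_t)` when `Y_t = 1` and `U_t(I_t)` when `Y_t = 0`. Take a continuous distribution
function `F` with `max_t L_t ≤ F` that stays strictly below `min_s U_s` off the contact set
(inside the support), and let `v_t = F⁻¹(W_t)`. Every `v_t` then has distribution `F`, and
`v_t ≤ I_t ↔ W_t ≤ F(I_t) ↔ Y_t = 1` almost surely, because `I_t` almost surely avoids the
Lebesgue-null contact set. Pushing `(X, v)` forward to a product space gives the model.
-/

theorem continuous_cdf_of_nullSingleton (ν : Measure ℝ) [IsProbabilityMeasure ν]
    [NullSingletonClass ν] : Continuous (cdf ν) := by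
  refine continuous_iff_continuousAt.2 fun x => ?_
  rw [(monotone_cdf ν).continuousAt_iff_leftLim_eq_rightLim, StieltjesFunction.rightLim_eq]
  have h := (cdf ν).measure_singleton x
  rw [measure_cdf, measure_singleton, eq_comm, ENNReal.ofReal_eq_zero, sub_nonpos] at h
  exact le_antisymm ((monotone_cdf ν).leftLim_le le_rfl) h

theorem measure_cdf_le (ν : Measure ℝ) [IsProbabilityMeasure ν] [NullSingletonClass ν] {u : ℝ}
    (hu0 : 0 ≤ u) (hu1 : u ≤ 1) : ν {x | cdf ν x ≤ u} = ENNReal.ofReal u := by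
  rcases hu1.eq_or_lt with rfl | hu1
  · simp [cdf_le_one]
  set S := {x | cdf ν x ≤ u}
  rcases S.eq_empty_or_nonempty with hS | hS
  · rw [hS, measure_empty, eq_comm, ENNReal.ofReal_eq_zero]
    by_contra! hu
    obtain ⟨x, hx⟩ := ((tendsto_cdf_atBot ν).eventually (eventually_le_nhds hu)).exists
    exact hS.subset hx
  have hbdd : BddAbove S := by
    obtain ⟨x, hx⟩ :=
      ((tendsto_cdf_atTop ν).eventually (eventually_gt_nhds hu1)).exists_forall_of_atTop
    exact ⟨x, fun y hy => le_of_not_gt fun hxy => (hx y hxy.le).not_ge hy⟩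
  have hcont := continuous_cdf_of_nullSingleton ν
  have hmem : sSup S ∈ S := (isClosed_le hcont continuous_const).csSup_mem hS hbdd
  have hIic : S = Iic (sSup S) :=
    Set.ext fun x => ⟨fun hx => le_csSup hbdd hx, fun hx => (monotone_cdf ν hx).trans hmem⟩
  have hval : cdf ν (sSup S) = u := by
    refine le_antisymm hmem (le_of_not_gt fun hlt => ?_)
    have hev : ∀ᶠ x in 𝓝[>] sSup S, cdf ν x < u :=
      nhdsWithin_le_nhds ((hcont.tendsto _).eventually (eventually_lt_nhds hlt))
    obtain ⟨x, hx, hsx⟩ := (hev.and self_mem_nhdsWithin).exists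
    exact (le_csSup hbdd hx.le).not_gt hsx
  rw [hIic, ← ofReal_cdf, hval]

theorem measure_cdf_map_le {Ω : Type*} [MeasurableSpace Ω] {P : Measure Ω}
    [IsProbabilityMeasure P] {J : Ω → ℝ} (hJ : Measurable J) [NullSingletonClass (P.map J)]
    {u : ℝ} (hu0 : 0 ≤ u) (hu1 : u ≤ 1) :
    P {ω | cdf (P.map J) (J ω) ≤ u} = ENNReal.ofReal u := by
  have := Measure.isProbabilityMeasure_map (μ := P) hJ.aemeasurable
  rw [← measure_cdf_le (P.map J) hu0 hu1,
    Measure.map_apply hJ (measurableSet_le (monotone_cdf _).measurable measurable_const)]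
  rfl

/-- The lower quantile function of `F`, for `a` with `F a = 0`: intersecting with `Ici a` keeps
the infimum bounded below also for `u ≤ 0`, where `sInf` would otherwise return junk. -/
noncomputable def quantile (F : ℝ → ℝ) (a u : ℝ) : ℝ := sInf ({x | u ≤ F x} ∩ Ici a)

section Quantile

variable {F : ℝ → ℝ} {a b : ℝ}

theorem le_of_monotone_of_eq_zero_of_eq_one (hF : Monotone F) (ha : F a = 0) (hb : F b = 1) :
    a ≤ b :=
  (hF.reflect_lt (by rw [ha, hb]; exact one_pos)).le

theorem quantile_mono (hF : Monotone F) (ha : F a = 0) (hb : F b = 1) {u u' : ℝ} (hu : u ≤ u')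
    (hu' : u' ≤ 1) : quantile F a u ≤ quantile F a u' :=
  csInf_le_csInf ⟨a, fun _ hx => hx.2⟩
    ⟨b, by simp [hb, hu', le_of_monotone_of_eq_zero_of_eq_one hF ha hb]⟩
    fun _ hx => ⟨hu.trans hx.1, hx.2⟩

theorem quantile_le_iff (hF : Monotone F) (hFc : Continuous F) (ha : F a = 0) (hb : F b = 1)
    {u : ℝ} (hu0 : 0 < u) (hu1 : u ≤ 1) (c : ℝ) : quantile F a u ≤ c ↔ u ≤ F c := by
  set S := {x | u ≤ F x} ∩ Ici a
  have hbdd : BddBelow S := ⟨a, fun _ hx => hx.2⟩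
  have hS : S.Nonempty :=
    ⟨b, by simp [S, hb, hu1, le_of_monotone_of_eq_zero_of_eq_one hF ha hb]⟩
  have hmem : sInf S ∈ S :=
    ((isClosed_le continuous_const hFc).inter isClosed_Ici).csInf_mem hS hbdd
  refine ⟨fun h => hmem.1.trans (hF h), fun h => csInf_le hbdd ⟨h, ?_⟩⟩
  exact le_of_not_gt fun hc => ((hF hc.le).trans_lt (ha ▸ hu0)).not_ge h

variable {Ω : Type*} [MeasurableSpace Ω] {P : Measure Ω} {W : Ω → ℝ}

theorem measurable_quantile_comp (hF : Monotone F) (ha : F a = 0) (hb : F b = 1)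
    (hW : Measurable W) (hW1 : ∀ ω, W ω ≤ 1) : Measurable fun ω => quantile F a (W ω) := by
  have hmono : Monotone fun u => quantile F a (min u 1) := fun u u' h =>
    quantile_mono hF ha hb (min_le_min_right 1 h) (min_le_right _ _)
  have h : (fun ω => quantile F a (W ω)) = (fun u => quantile F a (min u 1)) ∘ W :=
    funext fun ω => by simp [min_eq_left (hW1 ω)]
  exact h ▸ hmono.measurable.comp hW

theorem ae_quantile_le_iff (hF : Monotone F) (hFc : Continuous F) (ha : F a = 0) (hb : F b = 1)
    (hW0 : P {ω | W ω ≤ 0} = 0) (hW1 : ∀ ω, W ω ≤ 1) :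
    ∀ᵐ ω ∂P, ∀ c, quantile F a (W ω) ≤ c ↔ W ω ≤ F c := by
  have hpos : ∀ᵐ ω ∂P, 0 < W ω := ae_iff.2 (by simpa only [not_lt] using hW0)
  filter_upwards [hpos] with ω hω c using quantile_le_iff hF hFc ha hb hω (hW1 ω) c

theorem measure_quantile_comp_le (hF : Monotone F) (hFc : Continuous F) (ha : F a = 0)
    (hb : F b = 1) (hF0 : ∀ x, 0 ≤ F x) (hF1 : ∀ x, F x ≤ 1)
    (hW : ∀ u, 0 ≤ u → u ≤ 1 → P {ω | W ω ≤ u} = ENNReal.ofReal u) (hW1 : ∀ ω, W ω ≤ 1)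
    (c : ℝ) : P {ω | quantile F a (W ω) ≤ c} = ENNReal.ofReal (F c) := by
  have hW0 : P {ω | W ω ≤ 0} = 0 := by simpa using hW 0 le_rfl zero_le_one
  rw [← hW (F c) (hF0 c) (hF1 c)]
  refine measure_congr (eventuallyEq_set.2 ?_)
  filter_upwards [ae_quantile_le_iff hF hFc ha hb hW0 hW1] with ω hω using hω c

end Quantile

/-- Orders the outcomes `(Y, I)` with every `Y = true` before every `Y = false`, and by `I`
within each group; `arctan` squeezes each group into an interval of length `π`. -/
noncomputable def lexCode (y : Bool) (x : ℝ) : ℝ := arctan x + if y then 0 else π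

theorem continuous_lexCode (y : Bool) : Continuous (lexCode y) :=
  continuous_arctan.add continuous_const

theorem lexCode_injective (y : Bool) : Function.Injective (lexCode y) :=
  fun _ _ h => arctan_injective (add_right_cancel h)

theorem lexCode_le_lexCode_true_iff {y : Bool} {x c : ℝ} :
    lexCode y x ≤ lexCode true c ↔ y = true ∧ x ≤ c := by
  cases y
  · simp only [lexCode, Bool.false_eq_true, if_false, if_true, false_and, iff_false, not_le]
    linarith [arctan_lt_pi_div_two c, neg_pi_div_two_lt_arctan x]
  · simp [lexCode, arctan_le_arctan_iff]

theorem lexCode_lt_lexCode_false_iff {y : Bool} {x c : ℝ} :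
    lexCode y x < lexCode false c ↔ ¬ (y = false ∧ c ≤ x) := by
  cases y
  · simp [lexCode, arctan_lt_arctan_iff]
  · simp only [lexCode, Bool.true_eq_false, Bool.false_eq_true, if_true, if_false, false_and,
      not_false_eq_true, iff_true]
    linarith [arctan_lt_pi_div_two x, neg_pi_div_two_lt_arctan c]

section LexCode

variable {Ω : Type*} [MeasurableSpace Ω] {P : Measure Ω} {Y : Ω → Bool} {I : Ω → ℝ}

theorem measurable_lexCode_comp (hY : Measurable Y) (hI : Measurable I) :
    Measurable fun ω => lexCode (Y ω) (I ω) :=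
  (measurable_arctan.comp hI).add
    (Measurable.ite (hY (measurableSet_singleton true)) measurable_const measurable_const)

theorem nullSingletonClass_map_lexCode (hY : Measurable Y) (hI : Measurable I)
    [NullSingletonClass (P.map I)] : NullSingletonClass (P.map fun ω => lexCode (Y ω) (I ω)) := by
  refine ⟨fun c => ?_⟩
  have hsub : (fun ω => lexCode (Y ω) (I ω)) ⁻¹' {c} ⊆
      I ⁻¹' (lexCode true ⁻¹' {c} ∪ lexCode false ⁻¹' {c}) := by
    intro ω hω
    cases h : Y ω <;> simp_all
  have hnull : P.map I (lexCode true ⁻¹' {c} ∪ lexCode false ⁻¹' {c}) = 0 :=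
    measure_union_null ((Set.subsingleton_singleton.preimage (lexCode_injective _)).measure_zero _)
      ((Set.subsingleton_singleton.preimage (lexCode_injective _)).measure_zero _)
  rw [Measure.map_apply (measurable_lexCode_comp hY hI) (measurableSet_singleton c)]
  exact measure_mono_null hsub
    (nonpos_iff_eq_zero.1 (hnull ▸ Measure.le_map_apply hI.aemeasurable _))

theorem cdf_map_lexCode_true [IsProbabilityMeasure P] (hY : Measurable Y) (hI : Measurable I)
    (c : ℝ) : cdf (P.map fun ω => lexCode (Y ω) (I ω)) (lexCode true c)
      = (P {ω | Y ω = true ∧ I ω ≤ c}).toReal := by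
  have := Measure.isProbabilityMeasure_map (μ := P) (measurable_lexCode_comp hY hI).aemeasurable
  rw [cdf_eq_real, measureReal_def, Measure.map_apply (measurable_lexCode_comp hY hI)
    measurableSet_Iic]
  simp only [preimage, mem_Iic, lexCode_le_lexCode_true_iff]

theorem cdf_map_lexCode_false [IsProbabilityMeasure P] (hY : Measurable Y) (hI : Measurable I)
    [NullSingletonClass (P.map fun ω => lexCode (Y ω) (I ω))] (c : ℝ) :
    cdf (P.map fun ω => lexCode (Y ω) (I ω)) (lexCode false c)
      = 1 - (P {ω | Y ω = false ∧ c ≤ I ω}).toReal := by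
  have := Measure.isProbabilityMeasure_map (μ := P) (measurable_lexCode_comp hY hI).aemeasurable
  have hm : MeasurableSet {ω | Y ω = false ∧ c ≤ I ω} :=
    (hY (measurableSet_singleton false)).inter (measurableSet_le measurable_const hI)
  rw [cdf_eq_real, ← measureReal_congr Iio_ae_eq_Iic, ← measureReal_def,
    ← probReal_compl_eq_one_sub hm, measureReal_def, measureReal_def,
    Measure.map_apply (measurable_lexCode_comp hY hI) measurableSet_Iio]
  simp only [preimage, mem_Iio, lexCode_lt_lexCode_false_iff]
  rfl

end LexCode

noncomputable def ramp (a b c : ℝ) : ℝ := min 1 (max 0 ((c - a) / (b - a)))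

section Ramp

variable {a b : ℝ}

theorem ramp_nonneg (c : ℝ) : 0 ≤ ramp a b c := le_min zero_le_one (le_max_left _ _)

theorem ramp_le_one (c : ℝ) : ramp a b c ≤ 1 := min_le_left _ _

theorem ramp_left : ramp a b a = 0 := by simp [ramp]

theorem ramp_right (hab : a < b) : ramp a b b = 1 := by
  simp [ramp, div_self (sub_pos.2 hab).ne']

theorem ramp_lt_one (hab : a < b) {c : ℝ} (hc : c < b) : ramp a b c < 1 :=
  (min_le_right _ _).trans_lt
    (max_lt one_pos ((div_lt_one (sub_pos.2 hab)).2 (sub_lt_sub_right hc a)))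

theorem monotone_ramp (hab : a < b) : Monotone (ramp a b) := fun _ _ h =>
  min_le_min_left 1 (max_le_max_left 0
    (div_le_div_of_nonneg_right (sub_le_sub_right h a) (sub_pos.2 hab).le))

theorem continuous_ramp : Continuous (ramp a b) := by
  unfold ramp; fun_prop

end Ramp

section Envelopes

variable {Ω ι : Type*} [MeasurableSpace Ω] [Fintype ι] [Nonempty ι] (P : Measure Ω)
  (Y : ι → Ω → Bool) (I : ι → Ω → ℝ)

-- `max_t L_t(c)` and `min_s U_s(c)` in the paper's notation
noncomputable def lowerEnvelope (c : ℝ) : ℝ :=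
  Finset.univ.sup' Finset.univ_nonempty fun t => (P {ω | Y t ω = true ∧ I t ω ≤ c}).toReal

noncomputable def upperEnvelope (c : ℝ) : ℝ :=
  Finset.univ.inf' Finset.univ_nonempty fun s => 1 - (P {ω | Y s ω = false ∧ c ≤ I s ω}).toReal

-- The ramp keeps `latentCDF` strictly below `upperEnvelope` left of `b` wherever the
-- envelopes differ.
noncomputable def latentCDF (a b c : ℝ) : ℝ :=
  max (lowerEnvelope P Y I c) (upperEnvelope P Y I c * ramp a b c)

variable {P Y I}

theorem le_lowerEnvelope (t : ι) (c : ℝ) :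
    (P {ω | Y t ω = true ∧ I t ω ≤ c}).toReal ≤ lowerEnvelope P Y I c :=
  Finset.le_sup' (fun t => (P {ω | Y t ω = true ∧ I t ω ≤ c}).toReal) (Finset.mem_univ t)

theorem upperEnvelope_le (s : ι) (c : ℝ) :
    upperEnvelope P Y I c ≤ 1 - (P {ω | Y s ω = false ∧ c ≤ I s ω}).toReal :=
  Finset.inf'_le (fun s => 1 - (P {ω | Y s ω = false ∧ c ≤ I s ω}).toReal) (Finset.mem_univ s)

theorem lowerEnvelope_nonneg (c : ℝ) : 0 ≤ lowerEnvelope P Y I c :=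
  ENNReal.toReal_nonneg.trans (le_lowerEnvelope (Classical.arbitrary ι) c)

theorem lowerEnvelope_le_one [IsProbabilityMeasure P] (c : ℝ) : lowerEnvelope P Y I c ≤ 1 :=
  Finset.sup'_le _ _ fun _ _ => measureReal_le_one

theorem upperEnvelope_nonneg [IsProbabilityMeasure P] (c : ℝ) : 0 ≤ upperEnvelope P Y I c :=
  Finset.le_inf' _ _ fun _ _ => sub_nonneg.2 measureReal_le_one

theorem upperEnvelope_le_one (c : ℝ) : upperEnvelope P Y I c ≤ 1 :=
  (upperEnvelope_le (Classical.arbitrary ι) c).trans (sub_le_self _ ENNReal.toReal_nonneg)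

theorem latentCDF_nonneg {a b : ℝ} (c : ℝ) : 0 ≤ latentCDF P Y I a b c :=
  le_max_of_le_left (lowerEnvelope_nonneg c)

theorem latentCDF_lt_upperEnvelope {a b c : ℝ} (hab : a < b)
    (hGH : lowerEnvelope P Y I c ≤ upperEnvelope P Y I c)
    (hne : lowerEnvelope P Y I c ≠ upperEnvelope P Y I c) (hc : c < b) :
    latentCDF P Y I a b c < upperEnvelope P Y I c := by
  have hlt := lt_of_le_of_ne hGH hne
  exact max_lt hlt (mul_lt_of_lt_one_right ((lowerEnvelope_nonneg c).trans_lt hlt)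
    (ramp_lt_one hab hc))

theorem latentCDF_left {a b : ℝ} (hlo : ∀ t, ∀ᵐ ω ∂P, a < I t ω) : latentCDF P Y I a b a = 0 := by
  have hG : lowerEnvelope P Y I a = 0 := by
    refine le_antisymm (Finset.sup'_le _ _ fun t _ => ?_) (lowerEnvelope_nonneg a)
    have hnull : P {ω | I t ω ≤ a} = 0 := by simpa only [not_lt] using ae_iff.1 (hlo t)
    have : P {ω | Y t ω = true ∧ I t ω ≤ a} = 0 := measure_mono_null (fun _ h => h.2) hnull
    rw [this, ENNReal.toReal_zero]
  rw [latentCDF, ramp_left, mul_zero, hG, max_self]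

theorem monotone_lowerEnvelope [IsFiniteMeasure P] : Monotone (lowerEnvelope P Y I) :=
  fun _ _ h => Finset.sup'_mono_fun fun _ _ =>
    ENNReal.toReal_mono (measure_ne_top _ _) (measure_mono fun _ hω => ⟨hω.1, hω.2.trans h⟩)

theorem monotone_upperEnvelope [IsFiniteMeasure P] : Monotone (upperEnvelope P Y I) :=
  fun _ _ h => Finset.inf'_mono_fun fun s _ => by
    gcongr 1 - ?_
    exact ENNReal.toReal_mono (measure_ne_top _ _) (measure_mono fun _ hω => ⟨hω.1, h.trans hω.2⟩)

theorem continuous_lowerEnvelope [IsProbabilityMeasure P] (hY : ∀ t, Measurable (Y t))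
    (hI : ∀ t, Measurable (I t)) (hatom : ∀ t, NullSingletonClass (P.map (I t))) :
    Continuous (lowerEnvelope P Y I) := by
  refine Continuous.finset_sup'_apply _ fun t _ => ?_
  have := Measure.isProbabilityMeasure_map (μ := P)
    (measurable_lexCode_comp (hY t) (hI t)).aemeasurable
  have := nullSingletonClass_map_lexCode (P := P) (hY t) (hI t)
  simp_rw [← cdf_map_lexCode_true (hY t) (hI t)]
  exact (continuous_cdf_of_nullSingleton _).comp (continuous_lexCode true)

theorem continuous_upperEnvelope [IsProbabilityMeasure P] (hY : ∀ t, Measurable (Y t))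
    (hI : ∀ t, Measurable (I t)) (hatom : ∀ t, NullSingletonClass (P.map (I t))) :
    Continuous (upperEnvelope P Y I) := by
  refine Continuous.finset_inf'_apply _ fun t _ => ?_
  have := Measure.isProbabilityMeasure_map (μ := P)
    (measurable_lexCode_comp (hY t) (hI t)).aemeasurable
  have := nullSingletonClass_map_lexCode (P := P) (hY t) (hI t)
  simp_rw [← cdf_map_lexCode_false (hY t) (hI t)]
  exact (continuous_cdf_of_nullSingleton _).comp (continuous_lexCode false)

end Envelopes

section LatentUtility

variable {Ω ι : Type*} [MeasurableSpace Ω] [Fintype ι] [Nonempty ι] {P : Measure Ω}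
  [IsProbabilityMeasure P] {Y : ι → Ω → Bool} {I : ι → Ω → ℝ} {a b : ℝ}

theorem monotone_latentCDF (hab : a < b) : Monotone (latentCDF P Y I a b) :=
  monotone_lowerEnvelope.max
    (monotone_upperEnvelope.mul (monotone_ramp hab) upperEnvelope_nonneg ramp_nonneg)

theorem continuous_latentCDF (hY : ∀ t, Measurable (Y t)) (hI : ∀ t, Measurable (I t))
    (hatom : ∀ t, NullSingletonClass (P.map (I t))) : Continuous (latentCDF P Y I a b) :=
  (continuous_lowerEnvelope hY hI hatom).max
    ((continuous_upperEnvelope hY hI hatom).mul continuous_ramp)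

theorem latentCDF_le_one (c : ℝ) : latentCDF P Y I a b c ≤ 1 :=
  max_le (lowerEnvelope_le_one c)
    (mul_le_one₀ (upperEnvelope_le_one c) (ramp_nonneg c) (ramp_le_one c))

theorem latentCDF_right (hab : a < b) (hhi : ∀ t, ∀ᵐ ω ∂P, I t ω < b) :
    latentCDF P Y I a b b = 1 := by
  have hH : upperEnvelope P Y I b = 1 := by
    refine le_antisymm (upperEnvelope_le_one b) (Finset.le_inf' _ _ fun t _ => ?_)
    have hnull : P {ω | b ≤ I t ω} = 0 := by simpa only [not_lt] using ae_iff.1 (hhi t)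
    have : P {ω | Y t ω = false ∧ b ≤ I t ω} = 0 := measure_mono_null (fun _ h => h.2) hnull
    rw [this, ENNReal.toReal_zero, sub_zero]
  rw [latentCDF, ramp_right hab, mul_one, hH, max_eq_right (lowerEnvelope_le_one b)]

theorem ae_cdf_map_lexCode_le_latentCDF_iff (hY : ∀ t, Measurable (Y t))
    (hI : ∀ t, Measurable (I t)) (hatom : ∀ t, NullSingletonClass (P.map (I t))) (hab : a < b)
    (hhi : ∀ t, ∀ᵐ ω ∂P, I t ω < b) (hGH : ∀ c, lowerEnvelope P Y I c ≤ upperEnvelope P Y I c)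
    (hcontact : ∀ t, ∀ᵐ ω ∂P, lowerEnvelope P Y I (I t ω) ≠ upperEnvelope P Y I (I t ω))
    (t : ι) :
    ∀ᵐ ω ∂P, cdf (P.map fun ω => lexCode (Y t ω) (I t ω)) (lexCode (Y t ω) (I t ω))
      ≤ latentCDF P Y I a b (I t ω) ↔ Y t ω = true := by
  have := nullSingletonClass_map_lexCode (P := P) (hY t) (hI t)
  filter_upwards [hhi t, hcontact t] with ω hb hne
  cases hYω : Y t ω
  · simp only [Bool.false_eq_true, iff_false, not_le]
    rw [cdf_map_lexCode_false (hY t) (hI t)]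
    exact (latentCDF_lt_upperEnvelope hab (hGH _) hne hb).trans_le (upperEnvelope_le t _)
  · simp only [iff_true]
    rw [cdf_map_lexCode_true (hY t) (hI t)]
    exact (le_lowerEnvelope t _).trans (le_max_left _ _)

theorem exists_latentUtility (hY : ∀ t, Measurable (Y t)) (hI : ∀ t, Measurable (I t))
    (hac : ∀ t, P.map (I t) ≪ volume) (hsupp : ∀ t, ∀ᵐ ω ∂P, I t ω ∈ Ioo a b)
    (hGH : ∀ c, lowerEnvelope P Y I c ≤ upperEnvelope P Y I c)
    (hcontact : volume {c | lowerEnvelope P Y I c = upperEnvelope P Y I c} = 0) :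
    ∃ v : ι → Ω → ℝ, (∀ t, Measurable (v t)) ∧ (∀ t s, P.map (v t) = P.map (v s)) ∧
      ∀ t, ∀ᵐ ω ∂P, (v t ω ≤ I t ω ↔ Y t ω = true) := by
  have hatom : ∀ t, NullSingletonClass (P.map (I t)) :=
    fun t => ⟨fun _ => hac t Real.volume_singleton⟩
  obtain ⟨ω₀, hω₀⟩ := (hsupp (Classical.arbitrary ι)).exists
  have hab : a < b := hω₀.1.trans hω₀.2
  set F := latentCDF P Y I a b
  have hFm : Monotone F := monotone_latentCDF hab
  have hFc : Continuous F := continuous_latentCDF hY hI hatom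
  have ha : F a = 0 := latentCDF_left fun t => (hsupp t).mono fun _ h => h.1
  have hb : F b = 1 := latentCDF_right hab fun t => (hsupp t).mono fun _ h => h.2
  let J t ω := lexCode (Y t ω) (I t ω)
  have hJ : ∀ t, Measurable (J t) := fun t => measurable_lexCode_comp (hY t) (hI t)
  have hJatom : ∀ t, NullSingletonClass (P.map (J t)) :=
    fun t => nullSingletonClass_map_lexCode (hY t) (hI t)
  let W t ω := cdf (P.map (J t)) (J t ω)
  have hW1 : ∀ t ω, W t ω ≤ 1 := fun t ω => cdf_le_one _ _
  have hlaw : ∀ t c, P {ω | quantile F a (W t ω) ≤ c} = ENNReal.ofReal (F c) := fun t =>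
    have := hJatom t
    measure_quantile_comp_le hFm hFc ha hb latentCDF_nonneg latentCDF_le_one
      (fun _ => measure_cdf_map_le (hJ t)) (hW1 t)
  have hv : ∀ t, Measurable fun ω => quantile F a (W t ω) := fun t =>
    measurable_quantile_comp hFm ha hb ((monotone_cdf _).measurable.comp (hJ t)) (hW1 t)
  refine ⟨fun t ω => quantile F a (W t ω), hv, fun t s => ?_, fun t => ?_⟩
  · have := Measure.isProbabilityMeasure_map (μ := P) (hv t).aemeasurable
    refine Measure.ext_of_Iic _ _ fun c => ?_
    rw [Measure.map_apply (hv t) measurableSet_Iic, Measure.map_apply (hv s) measurableSet_Iic]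
    exact (hlaw t c).trans (hlaw s c).symm
  · have hW0 : P {ω | W t ω ≤ 0} = 0 := by
      have := hJatom t
      simpa using measure_cdf_map_le (hJ t) le_rfl zero_le_one
    have hcontact' : ∀ t, ∀ᵐ ω ∂P, lowerEnvelope P Y I (I t ω) ≠ upperEnvelope P Y I (I t ω) :=
      fun t => ae_of_ae_map (hI t).aemeasurable (measure_eq_zero_iff_ae_notMem.1 (hac t hcontact))
    filter_upwards [ae_quantile_le_iff hFm hFc ha hb hW0 (hW1 t),
      ae_cdf_map_lexCode_le_latentCDF_iff hY hI hatom hab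
        (fun t => (hsupp t).mono fun _ h => h.2) hGH hcontact' t] with ω h1 h2
    exact (h1 _).trans h2

end LatentUtility

theorem ae_mem_Icc_of_map_eq_withDensity {Ω : Type*} [MeasurableSpace Ω] {P : Measure Ω}
    {I : Ω → ℝ} (hI : Measurable I) {a b : ℝ} {f : ℝ → ℝ} (hf : ∀ c ∉ Icc a b, f c = 0)
    (hmap : P.map I = volume.withDensity fun c => ENNReal.ofReal (f c)) :
    ∀ᵐ ω ∂P, I ω ∈ Icc a b := by
  refine ae_of_ae_map hI.aemeasurable ?_
  rw [hmap, ae_iff, ← compl_def, withDensity_apply _ measurableSet_Icc.compl,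
    setLIntegral_congr_fun (g := fun _ => 0) measurableSet_Icc.compl
      fun c hc => by simp [hf c hc], lintegral_zero]

theorem measure_choicePattern_congr {Ω ι : Type*} [MeasurableSpace Ω] [Countable ι]
    {P : Measure Ω} {Y : ι → Ω → Bool} {p : ι → Ω → Prop} (hp : ∀ t, ∀ᵐ ω ∂P, p t ω ↔ Y t ω = true)
    (y : ι → Bool) (q : Ω → Prop) :
    P {ω | (∀ t, p t ω ↔ y t = true) ∧ q ω} = P {ω | (∀ t, Y t ω = y t) ∧ q ω} := by
  refine measure_congr (eventuallyEq_set.2 ?_)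
  filter_upwards [ae_all_iff.2 hp] with ω hω
  simp only [hω, ← Bool.eq_iff_iff]

theorem stmt_3_general
    {Ω : Type*} [MeasurableSpace Ω] (P : Measure Ω) [IsProbabilityMeasure P]
    {T dz dx : ℕ} (hT : 0 < T)
    (z : Fin T → (Fin dz → ℝ))
    (Y : Fin T → Ω → Bool) (X : Fin T → Ω → (Fin dx → ℝ))
    (hYm : ∀ t, Measurable (Y t)) (hXm : ∀ t, Measurable (X t))
    (β : Fin dz → ℝ) (γ : Fin dx → ℝ)
    -- q is a regular conditional probability of Y = (Y_1, …, Y_T) given X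
    (q : (Fin T → Bool) → (Fin T → (Fin dx → ℝ)) → ℝ)
    (hq_rcd : ∀ (y : Fin T → Bool) (B : Set (Fin T → (Fin dx → ℝ))), MeasurableSet B →
      (P {ω | (∀ t, Y t ω = y t) ∧ (fun t => X t ω) ∈ B}).toReal
        = ∫ x in B, q y x ∂(P.map fun ω t => X t ω))
    -- (i) the conditional moment inequalities
    (hineq : ∀ (c : ℝ) (t s : Fin T),
      (P {ω | Y t ω = true ∧ z t ⬝ᵥ β + X t ω ⬝ᵥ γ ≤ c}).toReal
        ≤ 1 - (P {ω | Y s ω = false ∧ c ≤ z s ⬝ᵥ β + X s ω ⬝ᵥ γ}).toReal)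
    -- (ii) each index has a strictly positive density on a bounded interval support
    (hdens : ∀ t : Fin T, ∃ (a b : ℝ), a < b ∧ ∃ f : ℝ → ℝ,
      (∀ c ∈ Set.Icc a b, 0 < f c) ∧ (∀ c ∉ Set.Icc a b, f c = 0) ∧
      P.map (fun ω => z t ⬝ᵥ β + X t ω ⬝ᵥ γ)
        = volume.withDensity (fun c => ENNReal.ofReal (f c)))
    -- (iv) the contact set has Lebesgue measure zero
    (hcontact : volume {c : ℝ |
        (Finset.univ.sup' ⟨⟨0, hT⟩, Finset.mem_univ _⟩ fun t : Fin T =>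
          (P {ω | Y t ω = true ∧ z t ⬝ᵥ β + X t ω ⬝ᵥ γ ≤ c}).toReal)
          = (Finset.univ.inf' ⟨⟨0, hT⟩, Finset.mem_univ _⟩ fun s : Fin T =>
            1 - (P {ω | Y s ω = false ∧ c ≤ z s ⬝ᵥ β + X s ω ⬝ᵥ γ}).toReal)} = 0) :
    ∃ (Ω' : Type) (_ : MeasurableSpace Ω') (P' : Measure Ω')
      (X' : Fin T → Ω' → (Fin dx → ℝ)) (v' : Fin T → Ω' → ℝ),
      IsProbabilityMeasure P' ∧
      (∀ t, Measurable (X' t)) ∧ (∀ t, Measurable (v' t)) ∧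
      -- X' has the same joint distribution as X
      P'.map (fun ω t => X' t ω) = P.map (fun ω t => X t ω) ∧
      -- partial stationarity of the marginals of v'
      (∀ t s : Fin T, P'.map (v' t) = P'.map (v' s)) ∧
      -- the conditional law of the choice pattern given X' = x is q(·│x), P_X-a.e. x
      (∀ (y : Fin T → Bool) (B : Set (Fin T → (Fin dx → ℝ))), MeasurableSet B →
        (P' {ω | (∀ t, (v' t ω ≤ z t ⬝ᵥ β + X' t ω ⬝ᵥ γ ↔ y t = true)) ∧
            (fun t => X' t ω) ∈ B}).toReal
          = ∫ x in B, q y x ∂(P.map fun ω t => X t ω)) := by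
  have : Nonempty (Fin T) := ⟨⟨0, hT⟩⟩
  let I t ω := z t ⬝ᵥ β + X t ω ⬝ᵥ γ
  have hI : ∀ t, Measurable (I t) := fun t => by fun_prop
  choose a b _ f _ hf hmap using hdens
  obtain ⟨A, hA⟩ := Finite.bddBelow_range a
  obtain ⟨B, hB⟩ := Finite.bddAbove_range b
  have hsupp : ∀ t, ∀ᵐ ω ∂P, I t ω ∈ Ioo (A - 1) (B + 1) := fun t =>
    (ae_mem_Icc_of_map_eq_withDensity (hI t) (hf t) (hmap t)).mono fun _ h =>
      ⟨by linarith [hA ⟨t, rfl⟩, h.1], by linarith [hB ⟨t, rfl⟩, h.2]⟩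
  obtain ⟨v, hvm, hvlaw, hv⟩ := exists_latentUtility hYm hI
    (fun t => hmap t ▸ withDensity_absolutelyContinuous _ _) hsupp
    (fun c => Finset.sup'_le _ _ fun t _ => Finset.le_inf' _ _ fun s _ => hineq c t s) hcontact
  let g ω : (Fin T → Fin dx → ℝ) × (Fin T → ℝ) := (fun t => X t ω, fun t => v t ω)
  have hg : Measurable g := by fun_prop
  refine ⟨_, inferInstance, P.map g, fun t ω' => ω'.1 t, fun t ω' => ω'.2 t,
    Measure.isProbabilityMeasure_map hg.aemeasurable, fun t => by fun_prop, fun t => by fun_prop,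
    Measure.map_map (by fun_prop) hg, fun t s => ?_, fun y B hB => ?_⟩
  · rw [Measure.map_map (by fun_prop) hg, Measure.map_map (by fun_prop) hg]
    exact hvlaw t s
  · rw [Measure.map_apply hg (by measurability), ← hq_rcd y B hB]
    exact congrArg ENNReal.toReal (measure_choicePattern_congr hv y _)

/-- Sharpness of the identified set in the continuous case. Let
`θ = (β, γ)` satisfy (i) the conditional moment inequalities at every `c ∈ ℝ`;
(ii) each index `I_t(θ) = z_t·β + X_t·γ` is continuously distributed with a strictly
positive density on a bounded interval support; (iii) the conditional choice
probabilities `q_t(x) = Σ_{y : y_t = 1} q(y│x)` lie strictly in `(0,1)` for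
`P_X`-a.e. `x`; (iv) the contact set `{c : max_t L_t(c;θ) = min_s U_s(c;θ)}` has
Lebesgue measure zero. Then there exist `(Ω', P')`, `X'` with the same joint law as
`X`, and `v'` with identical marginals across `t`, such that the conditional law of
the choice pattern `(1{v'_t ≤ z_t·β + X'_t·γ})_t` given `X'` is `q` (stated through
its defining disintegration property against `P_X`). Here `q` is a regular
conditional probability of `Y` given `X`. -/
theorem stmt_3
    {Ω : Type*} [MeasurableSpace Ω] (P : Measure Ω) [IsProbabilityMeasure P]
    {T dz dx : ℕ} (hT : 0 < T)
    (z : Fin T → (Fin dz → ℝ))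
    (Y : Fin T → Ω → Bool) (X : Fin T → Ω → (Fin dx → ℝ))
    (hYm : ∀ t, Measurable (Y t)) (hXm : ∀ t, Measurable (X t))
    (β : Fin dz → ℝ) (γ : Fin dx → ℝ)
    -- q is a regular conditional probability of Y = (Y_1, …, Y_T) given X
    (q : (Fin T → Bool) → (Fin T → (Fin dx → ℝ)) → ℝ)
    (hq_meas : ∀ y, Measurable (q y))
    (hq_sum : ∀ᵐ x ∂(P.map fun ω t => X t ω), ∑ y : Fin T → Bool, q y x = 1)
    (hq_rcd : ∀ (y : Fin T → Bool) (B : Set (Fin T → (Fin dx → ℝ))), MeasurableSet B →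
      (P {ω | (∀ t, Y t ω = y t) ∧ (fun t => X t ω) ∈ B}).toReal
        = ∫ x in B, q y x ∂(P.map fun ω t => X t ω))
    -- (i) the conditional moment inequalities
    (hineq : ∀ (c : ℝ) (t s : Fin T),
      (P {ω | Y t ω = true ∧ z t ⬝ᵥ β + X t ω ⬝ᵥ γ ≤ c}).toReal
        ≤ 1 - (P {ω | Y s ω = false ∧ c ≤ z s ⬝ᵥ β + X s ω ⬝ᵥ γ}).toReal)
    -- (ii) each index has a strictly positive density on a bounded interval support
    (hdens : ∀ t : Fin T, ∃ (a b : ℝ), a < b ∧ ∃ f : ℝ → ℝ,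
      (∀ c ∈ Set.Icc a b, 0 < f c) ∧ (∀ c ∉ Set.Icc a b, f c = 0) ∧
      P.map (fun ω => z t ⬝ᵥ β + X t ω ⬝ᵥ γ)
        = volume.withDensity (fun c => ENNReal.ofReal (f c)))
    -- (iii) nondegenerate per-period conditional choice probabilities
    (hccp : ∀ t : Fin T, ∀ᵐ x ∂(P.map fun ω t => X t ω),
      0 < ∑ y ∈ Finset.univ.filter (fun y : Fin T → Bool => y t = true), q y x ∧
        ∑ y ∈ Finset.univ.filter (fun y : Fin T → Bool => y t = true), q y x < 1)
    -- (iv) the contact set has Lebesgue measure zero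
    (hcontact : volume {c : ℝ |
        (Finset.univ.sup' ⟨⟨0, hT⟩, Finset.mem_univ _⟩ fun t : Fin T =>
          (P {ω | Y t ω = true ∧ z t ⬝ᵥ β + X t ω ⬝ᵥ γ ≤ c}).toReal)
          = (Finset.univ.inf' ⟨⟨0, hT⟩, Finset.mem_univ _⟩ fun s : Fin T =>
            1 - (P {ω | Y s ω = false ∧ c ≤ z s ⬝ᵥ β + X s ω ⬝ᵥ γ}).toReal)} = 0) :
    ∃ (Ω' : Type) (_ : MeasurableSpace Ω') (P' : Measure Ω')
      (X' : Fin T → Ω' → (Fin dx → ℝ)) (v' : Fin T → Ω' → ℝ),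
      IsProbabilityMeasure P' ∧
      (∀ t, Measurable (X' t)) ∧ (∀ t, Measurable (v' t)) ∧
      -- X' has the same joint distribution as X
      P'.map (fun ω t => X' t ω) = P.map (fun ω t => X t ω) ∧
      -- partial stationarity of the marginals of v'
      (∀ t s : Fin T, P'.map (v' t) = P'.map (v' s)) ∧
      -- the conditional law of the choice pattern given X' = x is q(·│x), P_X-a.e. x
      (∀ (y : Fin T → Bool) (B : Set (Fin T → (Fin dx → ℝ))), MeasurableSet B →
        (P' {ω | (∀ t, (v' t ω ≤ z t ⬝ᵥ β + X' t ω ⬝ᵥ γ ↔ y t = true)) ∧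
            (fun t => X' t ω) ∈ B}).toReal
          = ∫ x in B, q y x ∂(P.map fun ω t => X t ω)) :=
  stmt_3_general P hT z Y X hYm hXm β γ q hq_rcd hineq hdens hcontact
end

section
/- Construction of per-period marginals (relaxed discrete problem): suppose each X_t takes only finitely many values and θ = (β, γ) satisfies max_{t≤T} L_t(c; θ) ≤ min_{s≤T} U_s(c; θ) for every c ∈ ℝ. Then for each t = 1, …, T there exists a family of cumulative distribution functions c ↦ F*_t(c│x), one for each x = (x_1, …, x_T) in the support of X, such that: (i) stationarity given z: the aggregated function Σ_x P(X = x)·F*_t(c│x) is the same for every t and every c ∈ ℝ; and (ii) per-period conditional choice probability matching: F*_t(z_t·β + x_t·γ │ x) = p_t(x) for every t and every x in the support of X, where p_t(x) := P(Y_t = 1 │ X = x). -/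
/-!
Write `L_t(c)` and `U_t(c)` for the bounds in the hypothesis. The upper envelope of the `L_t`,
raised to `1` beyond the largest index value, is a step CDF `G` with `L_t ≤ G ≤ U_t` for every
`t`. Fix a period `t` and tile `[0, 1]`: each support point `x` gets a piece of length
`P(Y_t = 1, X = x)` stacked from the bottom in increasing order of its index `d_t(x)` and a piece
of length `P(Y_t = 0, X = x)` stacked from the top in decreasing order. Let `F_t(c | x)` be the
length of the part of `x`'s pieces below `G(c)`, divided by `P(X = x)`. Since the pieces tile
`[0, 1]`, `∑ₓ P(X = x) F_t(c | x) = G(c)` for every `t`. At `c = d_t(x)`, `G(c) ≥ L_t(c)` lies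
above `x`'s bottom piece and `G(c) ≤ U_t(c)` below its top piece, so
`F_t(d_t(x) | x) = P(Y_t = 1, X = x) / P(X = x)`.
-/

open MeasureTheory Matrix Filter Finset Topology

def IsCDF (F : ℝ → ℝ) : Prop :=
  Monotone F ∧ (∀ c, ContinuousWithinAt F (Set.Ici c) c) ∧ Tendsto F atBot (𝓝 0) ∧
    Tendsto F atTop (𝓝 1) ∧ ∀ c, F c ∈ Set.Icc (0 : ℝ) 1

theorem IsCDF.comp {G φ : ℝ → ℝ} (hG : IsCDF G) (hφ : Monotone φ) (hφc : Continuous φ)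
    (hφ0 : φ 0 = 0) (hφ1 : φ 1 = 1) : IsCDF (φ ∘ G) := by
  obtain ⟨hmono, hright, hbot, htop, hrange⟩ := hG
  refine ⟨hφ.comp hmono, fun c => hφc.continuousAt.comp_continuousWithinAt (hright c), ?_, ?_,
    fun c => ?_⟩
  · simpa [hφ0] using (hφc.tendsto 0).comp hbot
  · simpa [hφ1] using (hφc.tendsto 1).comp htop
  · rw [← hφ0, ← hφ1]
    exact ⟨hφ (hrange c).1, hφ (hrange c).2⟩

/-- For `p ≤ q`, the length of `(-∞, v] ∩ [p, q]`. -/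
def overlapLength (p q v : ℝ) : ℝ := min v q - min v p

section overlapLength

variable {p q v : ℝ}

theorem monotone_overlapLength (hpq : p ≤ q) : Monotone (overlapLength p q) := by
  intro v v' hv
  simp only [overlapLength, min_def]
  split_ifs <;> linarith

theorem continuous_overlapLength : Continuous (overlapLength p q) := by
  unfold overlapLength; fun_prop

theorem overlapLength_self : overlapLength p p v = 0 := sub_self _

theorem overlapLength_of_le_left (hpq : p ≤ q) (hv : v ≤ p) : overlapLength p q v = 0 := by
  simp [overlapLength, min_eq_left hv, min_eq_left (hv.trans hpq)]

theorem overlapLength_of_right_le (hpq : p ≤ q) (hv : q ≤ v) : overlapLength p q v = q - p := by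
  simp [overlapLength, min_eq_right hv, min_eq_right (hpq.trans hv)]

end overlapLength

section Stack

variable {α K : Type*} [LinearOrder K] (s : Finset α) (k : α → K) (g : α → ℝ)

def stackBelow (x : α) : ℝ := ∑ y ∈ s with k y < k x, g y

def stackUpTo (x : α) : ℝ := ∑ y ∈ s with k y ≤ k x, g y

variable {s k g}

theorem stackUpTo_eq_stackBelow_add (hk : Set.InjOn k s) {x : α} (hx : x ∈ s) :
    stackUpTo s k g x = stackBelow s k g x + g x := by
  classical
  have : {y ∈ s | k y ≤ k x} = insert x {y ∈ s | k y < k x} := by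
    ext y
    simp only [mem_filter, mem_insert, le_iff_lt_or_eq]
    constructor
    · rintro ⟨hy, hlt | heq⟩
      exacts [Or.inr ⟨hy, hlt⟩, Or.inl (hk hy hx heq)]
    · rintro (rfl | ⟨hy, hlt⟩)
      exacts [⟨hx, Or.inr rfl⟩, ⟨hy, Or.inl hlt⟩]
  rw [stackUpTo, this, sum_insert (by simp), add_comm, stackBelow]

theorem stackBelow_nonneg (hg : ∀ x ∈ s, 0 ≤ g x) (x : α) : 0 ≤ stackBelow s k g x :=
  sum_nonneg fun y hy => hg y (mem_filter.1 hy).1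

theorem stackUpTo_le_sum (hg : ∀ x ∈ s, 0 ≤ g x) (x : α) : stackUpTo s k g x ≤ ∑ y ∈ s, g y :=
  sum_le_sum_of_subset_of_nonneg (filter_subset _ _) fun y hy _ => hg y hy

theorem stackBelow_le_stackUpTo (hk : Set.InjOn k s) (hg : ∀ x ∈ s, 0 ≤ g x) {x : α}
    (hx : x ∈ s) : stackBelow s k g x ≤ stackUpTo s k g x := by
  rw [stackUpTo_eq_stackBelow_add hk hx]
  linarith [hg x hx]

theorem stackUpTo_le_sum_filter {L : Type*} [LinearOrder L] {d : α → L}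
    (hkd : ∀ x y, k x ≤ k y → d x ≤ d y) (hg : ∀ x ∈ s, 0 ≤ g x) (x : α) : stackUpTo s k g x ≤ ∑ y ∈ s with d y ≤ d x, g y :=
  sum_le_sum_of_subset_of_nonneg (monotone_filter_right s fun y _ => hkd y x)
    fun y hy _ => hg y (mem_filter.1 hy).1

theorem sum_sub_stack (hk : Set.InjOn k s) (f : ℝ → ℝ) :
    ∑ x ∈ s, (f (stackUpTo s k g x) - f (stackBelow s k g x)) = f (∑ x ∈ s, g x) - f 0 := by
  classical
  induction s using Finset.induction_on_max_value k with
  | empty => simp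
  | insert a s has hmax ih =>
    have hlt : ∀ x ∈ s, k x < k a := fun x hx =>
      (hmax x hx).lt_of_ne fun h => has (hk (mem_insert_of_mem hx) (mem_insert_self a s) h ▸ hx)
    have hstack : ∀ x ∈ s, stackUpTo (insert a s) k g x = stackUpTo s k g x ∧
        stackBelow (insert a s) k g x = stackBelow s k g x := fun x hx => by
      simp only [stackUpTo, stackBelow, filter_insert, (hlt x hx).not_ge, (hlt x hx).not_gt,
        if_false, and_self]
    have hUp : stackUpTo (insert a s) k g a = g a + ∑ x ∈ s, g x := by
      rw [stackUpTo, filter_true_of_mem fun x hx => ?_, sum_insert has]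
      rcases mem_insert.1 hx with rfl | hx
      exacts [le_rfl, (hlt x hx).le]
    have hBelow : stackBelow (insert a s) k g a = ∑ x ∈ s, g x := by
      rw [stackBelow, filter_insert, if_neg (lt_irrefl _), filter_true_of_mem hlt]
    rw [sum_insert has, sum_congr rfl fun x hx => by rw [(hstack x hx).1, (hstack x hx).2],
      ih (hk.mono (by simp)), hUp, hBelow, sum_insert has]
    ring

end Stack

section Slice

variable {α K : Type*} [LinearOrder K] (s : Finset α) (k : α → K) (a b : α → ℝ)

/-- The `a`-stacks tile `[0, ∑ a]` upwards in increasing order of `k`, the `b`-stacks tile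
`[1 - ∑ b, 1]` downwards in decreasing order of `k`; `sliceMass s k a b x v` is the length of the
part of the two pieces owned by `x` that lies below `v`. -/
def sliceMass (x : α) (v : ℝ) : ℝ :=
  overlapLength (stackBelow s k a x) (stackUpTo s k a x) v +
    overlapLength (1 - stackUpTo s (OrderDual.toDual ∘ k) b x)
      (1 - stackBelow s (OrderDual.toDual ∘ k) b x) v

variable {s k a b}

theorem continuous_sliceMass (x : α) : Continuous (sliceMass s k a b x) :=
  continuous_overlapLength.add continuous_overlapLength

theorem sliceMass_of_eq_zero (hk : Set.InjOn k s) {x : α} (hx : x ∈ s) (hax : a x = 0)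
    (hbx : b x = 0) (v : ℝ) : sliceMass s k a b x v = 0 := by
  have hk' : Set.InjOn (OrderDual.toDual ∘ k) s := OrderDual.toDual.injective.comp_injOn hk
  rw [sliceMass, stackUpTo_eq_stackBelow_add hk hx, stackUpTo_eq_stackBelow_add hk' hx, hax, hbx,
    add_zero, add_zero, overlapLength_self, overlapLength_self, add_zero]

theorem monotone_sliceMass (hk : Set.InjOn k s) (ha : ∀ x ∈ s, 0 ≤ a x)
    (hb : ∀ x ∈ s, 0 ≤ b x) {x : α} (hx : x ∈ s) : Monotone (sliceMass s k a b x) :=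
  (monotone_overlapLength (stackBelow_le_stackUpTo hk ha hx)).add
    (monotone_overlapLength (sub_le_sub_left
      (stackBelow_le_stackUpTo (OrderDual.toDual.injective.comp_injOn hk) hb hx) 1))

theorem sliceMass_zero (hk : Set.InjOn k s) (ha : ∀ x ∈ s, 0 ≤ a x) (hb : ∀ x ∈ s, 0 ≤ b x)
    (hab : ∑ x ∈ s, a x + ∑ x ∈ s, b x = 1) {x : α} (hx : x ∈ s) :
    sliceMass s k a b x 0 = 0 := by
  have hb1 := stackUpTo_le_sum hb (k := OrderDual.toDual ∘ k) x
  have := sum_nonneg ha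
  rw [sliceMass, overlapLength_of_le_left (stackBelow_le_stackUpTo hk ha hx)
    (stackBelow_nonneg ha x), overlapLength_of_le_left (sub_le_sub_left
      (stackBelow_le_stackUpTo (OrderDual.toDual.injective.comp_injOn hk) hb hx) 1) (by linarith),
    add_zero]

theorem sliceMass_one (hk : Set.InjOn k s) (ha : ∀ x ∈ s, 0 ≤ a x) (hb : ∀ x ∈ s, 0 ≤ b x)
    (hab : ∑ x ∈ s, a x + ∑ x ∈ s, b x = 1) {x : α} (hx : x ∈ s) :
    sliceMass s k a b x 1 = a x + b x := by
  have hk' : Set.InjOn (OrderDual.toDual ∘ k) s := OrderDual.toDual.injective.comp_injOn hk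
  have ha1 := stackUpTo_le_sum ha (k := k) x
  have := sum_nonneg hb
  rw [sliceMass, overlapLength_of_right_le (stackBelow_le_stackUpTo hk ha hx) (by linarith),
    overlapLength_of_right_le (sub_le_sub_left (stackBelow_le_stackUpTo hk' hb hx) 1)
      (by linarith [stackBelow_nonneg hb (k := OrderDual.toDual ∘ k) x]),
    stackUpTo_eq_stackBelow_add hk hx, stackUpTo_eq_stackBelow_add hk' hx]
  ring

theorem sliceMass_of_mem_Icc (hk : Set.InjOn k s) (ha : ∀ x ∈ s, 0 ≤ a x)
    (hb : ∀ x ∈ s, 0 ≤ b x) {x : α} (hx : x ∈ s) {v : ℝ}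
    (hv : v ∈ Set.Icc (stackUpTo s k a x) (1 - stackUpTo s (OrderDual.toDual ∘ k) b x)) :
    sliceMass s k a b x v = a x := by
  have hk' : Set.InjOn (OrderDual.toDual ∘ k) s := OrderDual.toDual.injective.comp_injOn hk
  rw [sliceMass, overlapLength_of_right_le (stackBelow_le_stackUpTo hk ha hx) hv.1,
    overlapLength_of_le_left (sub_le_sub_left (stackBelow_le_stackUpTo hk' hb hx) 1) hv.2,
    stackUpTo_eq_stackBelow_add hk hx]
  ring

theorem sum_sliceMass (hk : Set.InjOn k s) (hab : ∑ x ∈ s, a x + ∑ x ∈ s, b x = 1) {v : ℝ}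
    (hv : v ∈ Set.Icc (0 : ℝ) 1) : ∑ x ∈ s, sliceMass s k a b x v = v := by
  have hk' : Set.InjOn (OrderDual.toDual ∘ k) s := OrderDual.toDual.injective.comp_injOn hk
  have hleft := sum_sub_stack (g := a) hk (fun u => min v u)
  have hright := sum_sub_stack (g := b) hk' (fun u => min v (1 - u))
  simp only [sliceMass, overlapLength, sum_add_distrib, sum_sub_distrib] at hleft hright ⊢
  rw [sub_zero, show 1 - ∑ x ∈ s, b x = ∑ x ∈ s, a x by linarith, min_eq_left hv.2] at hright
  rw [min_eq_right hv.1] at hleft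
  linarith

end Slice

theorem exists_isCDF_family {α : Type*} (s : Finset α) (d a b w : α → ℝ)
    (ha : ∀ x ∈ s, 0 ≤ a x) (hb : ∀ x ∈ s, 0 ≤ b x) (habw : ∀ x ∈ s, a x + b x = w x)
    (hw : ∑ x ∈ s, w x = 1) {G : ℝ → ℝ} (hG : IsCDF G)
    (hL : ∀ c, ∑ x ∈ s with d x ≤ c, a x ≤ G c) (hU : ∀ c, G c ≤ 1 - ∑ x ∈ s with c ≤ d x, b x) :
    ∃ F : α → ℝ → ℝ, (∀ x ∈ s, 0 < w x → IsCDF (F x)) ∧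
      (∀ c, ∑ x ∈ s, w x * F x c = G c) ∧ (∀ x ∈ s, 0 < w x → F x (d x) = a x / w x) := by
  obtain ⟨e, he⟩ := Set.countable_iff_exists_injOn.1 s.countable_toSet
  -- breaking ties in `d` makes the stacks of different support points disjoint
  set k : α → ℝ ×ₗ ℕ := fun x => toLex (d x, e x)
  have hk : Set.InjOn k s := fun x hx y hy h => he hx hy (congrArg Prod.snd (toLex.injective h))
  have hkd : ∀ x y, k x ≤ k y → d x ≤ d y := fun x y => Prod.Lex.monotone_fst _ _
  have hab : ∑ x ∈ s, a x + ∑ x ∈ s, b x = 1 := by rw [← sum_add_distrib, sum_congr rfl habw, hw]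
  refine ⟨fun x c => sliceMass s k a b x (G c) / w x, fun x hx hwx => ?_, fun c => ?_,
    fun x hx hwx => ?_⟩
  · refine hG.comp (φ := fun v => sliceMass s k a b x v / w x)
      (fun v v' h => div_le_div_of_nonneg_right (monotone_sliceMass hk ha hb hx h) hwx.le)
      ((continuous_sliceMass x).div_const _) ?_ ?_
    · simp only [sliceMass_zero hk ha hb hab hx, zero_div]
    · simp only [sliceMass_one hk ha hb hab hx, habw x hx, div_self hwx.ne']
  · rw [← sum_sliceMass hk hab (hG.2.2.2.2 c)]
    refine sum_congr rfl fun x hx => ?_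
    rcases (habw x hx ▸ add_nonneg (ha x hx) (hb x hx)).eq_or_lt with hw0 | hwx
    · have hax : a x = 0 := by linarith [ha x hx, hb x hx, habw x hx]
      rw [← hw0, zero_mul, sliceMass_of_eq_zero hk hx hax (by linarith [hb x hx, habw x hx])]
    · exact mul_div_cancel₀ _ hwx.ne'
  · dsimp only
    rw [sliceMass_of_mem_Icc hk ha hb hx ⟨(stackUpTo_le_sum_filter hkd ha x).trans (hL _),
      (hU _).trans (sub_le_sub_left ?_ 1)⟩]
    simpa only [Function.comp_apply, OrderDual.toDual_le_toDual] using
      stackUpTo_le_sum_filter (k := OrderDual.toDual ∘ k) (d := OrderDual.toDual ∘ d)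
        (fun x y h => hkd y x h) hb x

section StepFunction

theorem continuousWithinAt_Ici_ite_le (d m c : ℝ) :
    ContinuousWithinAt (fun c' => if d ≤ c' then m else 0) (Set.Ici c) c := by
  by_cases h : d ≤ c
  · exact continuousWithinAt_const.congr (fun y hy => if_pos (h.trans hy)) (if_pos h)
  · refine (continuousAt_const (y := (0 : ℝ)).congr ?_).continuousWithinAt
    filter_upwards [eventually_lt_nhds (not_le.1 h)] with y hy
    exact (if_neg (not_le.2 hy)).symm

variable {α : Type*} (s : Finset α) (d a : α → ℝ)

theorem continuousWithinAt_Ici_sum_filter_le (c : ℝ) :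
    ContinuousWithinAt (fun c' => ∑ x ∈ s with d x ≤ c', a x) (Set.Ici c) c := by
  simp only [sum_filter]
  exact tendsto_finsetSum s fun x _ => continuousWithinAt_Ici_ite_le (d x) (a x) c

variable {s a}

theorem monotone_sum_filter_le (ha : ∀ x ∈ s, 0 ≤ a x) :
    Monotone fun c => ∑ x ∈ s with d x ≤ c, a x := fun _ _ h =>
  sum_le_sum_of_subset_of_nonneg (monotone_filter_right s fun _ _ hx => hx.trans h)
    fun x hx _ => ha x (mem_filter.1 hx).1

end StepFunction

theorem exists_isCDF_between {ι α : Type*} [Fintype ι] [Nonempty ι] (s : Finset α)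
    (d a b : ι → α → ℝ) (ha : ∀ t, ∀ x ∈ s, 0 ≤ a t x) (hb : ∀ t, ∀ x ∈ s, 0 ≤ b t x)
    (hLU : ∀ c t u, ∑ x ∈ s with d t x ≤ c, a t x ≤ 1 - ∑ x ∈ s with c ≤ d u x, b u x) :
    ∃ G : ℝ → ℝ, IsCDF G ∧ ∀ t c,
      ∑ x ∈ s with d t x ≤ c, a t x ≤ G c ∧ G c ≤ 1 - ∑ x ∈ s with c ≤ d t x, b t x := by
  obtain ⟨C, hC⟩ : ∃ C, ∀ t, ∀ x ∈ s, d t x < C :=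
    (eventually_all.2 fun t => (eventually_all_finset s).2 fun x _ =>
      eventually_gt_atTop (d t x)).exists
  set L : ι → ℝ → ℝ := fun t c => ∑ x ∈ s with d t x ≤ c, a t x
  set G : ℝ → ℝ := fun c => max (univ.sup' univ_nonempty fun t => L t c) (if C ≤ c then 1 else 0)
  have hLG : ∀ t c, L t c ≤ G c := fun t c => le_max_of_le_left (le_sup' (L · c) (mem_univ t))
  have hGU : ∀ t c, G c ≤ 1 - ∑ x ∈ s with c ≤ d t x, b t x := by
    intro t c
    refine max_le (sup'_le _ _ fun u _ => hLU c u t) ?_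
    split_ifs with hc
    · rw [filter_false_of_mem fun x hx => not_le.2 ((hC t x hx).trans_le hc), sum_empty, sub_zero]
    · have : 0 ≤ L t c := sum_nonneg fun x hx => ha t x (mem_filter.1 hx).1
      linarith [hLU c t t]
  have hG1 : ∀ c, G c ≤ 1 := fun c => by
    obtain ⟨t⟩ := ‹Nonempty ι›
    have : 0 ≤ ∑ x ∈ s with c ≤ d t x, b t x := sum_nonneg fun x hx => hb t x (mem_filter.1 hx).1
    linarith [hGU t c]
  have hstep : Monotone fun c : ℝ => if C ≤ c then (1 : ℝ) else 0 := fun c c' h => by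
    dsimp only
    split_ifs with h1 h2 h2 <;> first | exact absurd (h1.trans h) h2 | norm_num
  refine ⟨G, ⟨?_, fun c => ?_, ?_, ?_, fun c => ⟨?_, hG1 c⟩⟩, fun t c => ⟨hLG t c, hGU t c⟩⟩
  · exact fun c c' h =>
      max_le_max (sup'_mono_fun fun t _ => monotone_sum_filter_le _ (ha t) h) (hstep h)
  · exact (ContinuousWithinAt.finset_sup'_apply univ_nonempty fun t _ =>
      continuousWithinAt_Ici_sum_filter_le s (d t) (a t) c).max
        (continuousWithinAt_Ici_ite_le C 1 c)
  · refine tendsto_const_nhds.congr' ?_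
    filter_upwards [eventually_lt_atBot C, eventually_all.2 fun t => (eventually_all_finset s).2
      fun x _ => eventually_lt_atBot (d t x)] with c hcC hcd
    have hL0 : ∀ t, L t c = 0 := fun t => by
      simp only [L]
      rw [filter_false_of_mem fun x hx => not_le.2 (hcd t x hx), sum_empty]
    simp only [G, hL0, sup'_const, if_neg (not_le.2 hcC), max_self]
  · refine tendsto_const_nhds.congr' ?_
    filter_upwards [eventually_ge_atTop C] with c hc
    simp only [G, if_pos hc]
    exact (max_eq_right (sup'_le _ _ fun t _ => (hLG t c).trans (hG1 c))).symm
  · exact le_max_of_le_right (by split_ifs <;> norm_num)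

section Measure

variable {Ω β : Type*} [MeasurableSpace Ω] (P : Measure Ω) [IsFiniteMeasure P]

theorem toReal_measure_and_eq_sum_filter [MeasurableSpace β] [MeasurableSingletonClass β]
    {g : Ω → β} (hg : Measurable g) {S : Finset β} (hgS : ∀ ω, g ω ∈ S) (p : Ω → Prop)
    (q : β → Prop) [DecidablePred q] :
    (P {ω | p ω ∧ q (g ω)}).toReal = ∑ x ∈ S with q x, (P {ω | p ω ∧ g ω = x}).toReal := by
  have hfib := sum_measure_preimage_singleton (μ := P.restrict {ω | p ω}) (S.filter q)
    fun x _ => hg (measurableSet_singleton x)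
  rw [Measure.restrict_apply (hg (S.filter q).measurableSet)] at hfib
  simp only [Measure.restrict_apply (hg (measurableSet_singleton _))] at hfib
  rw [← ENNReal.toReal_sum fun _ _ => measure_ne_top _ _]
  convert congrArg ENNReal.toReal hfib.symm using 3
  · ext ω; simp [hgS, and_comm]
  · congr 1; ext ω; simp [and_comm]

theorem toReal_measure_true_add_false {Y : Ω → Bool} (hY : Measurable Y) (p : Ω → Prop) :
    (P {ω | Y ω = true ∧ p ω}).toReal + (P {ω | Y ω = false ∧ p ω}).toReal =
      (P {ω | p ω}).toReal := by
  rw [← ENNReal.toReal_add (measure_ne_top _ _) (measure_ne_top _ _),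
    ← measure_inter_add_sdiff {ω | p ω} (hY (measurableSet_singleton true))]
  congr 3 <;> ext ω <;> simp [and_comm]

end Measure

/-- Relaxed discrete problem (construction of per-period marginals).
If each `X_t` takes only finitely many values and `θ = (β, γ)` satisfies all the
conditional moment inequalities, then for each `t` there is a family of CDFs
`c ↦ F t x c`, one for each `x` in the support of `X = (X_1, …, X_T)`, such that
(i) the aggregated function `Σ_x P(X = x)·F t x c` is the same for every `t`
(stationarity given `z`), and (ii) `F t x (z_t·β + x_t·γ) = p_t(x) := P(Y_t = 1│X = x)`
for every `t` and every `x` in the support of `X`. -/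
theorem stmt_4
    {Ω : Type*} [MeasurableSpace Ω] (P : Measure Ω) [IsProbabilityMeasure P]
    {T dz dx : ℕ}
    (z : Fin T → (Fin dz → ℝ))
    (Y : Fin T → Ω → Bool) (X : Fin T → Ω → (Fin dx → ℝ))
    (hYm : ∀ t, Measurable (Y t)) (hXm : ∀ t, Measurable (X t))
    (hfin : (Set.range fun ω (t : Fin T) => X t ω).Finite)
    (β : Fin dz → ℝ) (γ : Fin dx → ℝ)
    (hineq : ∀ (c : ℝ) (t s : Fin T),
      (P {ω | Y t ω = true ∧ z t ⬝ᵥ β + X t ω ⬝ᵥ γ ≤ c}).toReal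
        ≤ 1 - (P {ω | Y s ω = false ∧ c ≤ z s ⬝ᵥ β + X s ω ⬝ᵥ γ}).toReal) :
    ∃ F : Fin T → (Fin T → (Fin dx → ℝ)) → ℝ → ℝ,
      -- each F t x is a cumulative distribution function (for x in the support of X)
      (∀ (t : Fin T) (x : Fin T → (Fin dx → ℝ)), 0 < P {ω | (fun t => X t ω) = x} →
        Monotone (F t x) ∧
        (∀ c : ℝ, ContinuousWithinAt (F t x) (Set.Ici c) c) ∧
        Tendsto (F t x) atBot (nhds 0) ∧
        Tendsto (F t x) atTop (nhds 1) ∧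
        (∀ c : ℝ, F t x c ∈ Set.Icc (0 : ℝ) 1)) ∧
      -- (i) stationarity given z of the aggregated CDFs
      (∀ (t s : Fin T) (c : ℝ),
        ∑ x ∈ hfin.toFinset, (P {ω | (fun t => X t ω) = x}).toReal * F t x c
          = ∑ x ∈ hfin.toFinset, (P {ω | (fun t => X t ω) = x}).toReal * F s x c) ∧
      -- (ii) per-period conditional choice probability matching
      (∀ (t : Fin T) (x : Fin T → (Fin dx → ℝ)), 0 < P {ω | (fun t => X t ω) = x} →
        F t x (z t ⬝ᵥ β + x t ⬝ᵥ γ)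
          = (P {ω | Y t ω = true ∧ (fun t => X t ω) = x}).toReal
            / (P {ω | (fun t => X t ω) = x}).toReal) := by
  rcases isEmpty_or_nonempty (Fin T) with hT | hT
  · exact ⟨0, fun t => isEmptyElim t, fun t => isEmptyElim t, fun t => isEmptyElim t⟩
  set S := hfin.toFinset
  have hg : Measurable fun ω (t : Fin T) => X t ω := measurable_pi_lambda _ hXm
  have hgS : ∀ ω, (fun t => X t ω) ∈ S := fun ω => hfin.mem_toFinset.2 ⟨ω, rfl⟩
  obtain ⟨G, hG, hGbounds⟩ := exists_isCDF_between S (fun t x => z t ⬝ᵥ β + x t ⬝ᵥ γ)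
    (fun t x => (P {ω | Y t ω = true ∧ (fun t => X t ω) = x}).toReal)
    (fun t x => (P {ω | Y t ω = false ∧ (fun t => X t ω) = x}).toReal)
    (fun _ _ _ => ENNReal.toReal_nonneg) (fun _ _ _ => ENNReal.toReal_nonneg) fun c t u => by
      rw [← toReal_measure_and_eq_sum_filter P hg hgS fun ω => Y t ω = true,
        ← toReal_measure_and_eq_sum_filter P hg hgS fun ω => Y u ω = false]
      exact hineq c t u
  have hw : ∑ x ∈ S, (P {ω | (fun t => X t ω) = x}).toReal = 1 := by
    simpa using (toReal_measure_and_eq_sum_filter P hg hgS (fun _ => True) fun _ => True).symm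
  choose F hFcdf hFsum hFmatch using fun t => exists_isCDF_family S _ _ _ _
    (fun _ _ => ENNReal.toReal_nonneg) (fun _ _ => ENNReal.toReal_nonneg)
    (fun x _ => toReal_measure_true_add_false P (hYm t) fun ω => (fun t => X t ω) = x) hw hG
    (fun c => (hGbounds t c).1) (fun c => (hGbounds t c).2)
  have hsupp (x) (hx : 0 < P {ω | (fun t => X t ω) = x}) :
      x ∈ S ∧ 0 < (P {ω | (fun t => X t ω) = x}).toReal := by
    obtain ⟨ω, rfl⟩ := nonempty_of_measure_ne_zero hx.ne'
    exact ⟨hgS ω, ENNReal.toReal_pos hx.ne' (measure_ne_top _ _)⟩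
  exact ⟨F, fun t x hx => hFcdf t x (hsupp x hx).1 (hsupp x hx).2,
    fun t u c => by rw [hFsum, hFsum], fun t x hx => hFmatch t x (hsupp x hx).1 (hsupp x hx).2⟩
end

section
/- Marginal-to-joint construction: let C ⊂ ℝ be a nonempty finite set, T ≥ 1, and for each t ∈ {1, …, T} let f_t : C → [0,1] be a probability mass function (Σ_{c∈C} f_t(c) = 1) and c*_t ∈ ℝ a cutoff. Let p : {0,1}^T → [0,1] be a probability mass function (Σ_{y} p(y) = 1) whose period-t marginals are consistent with the cutoffs, i.e. Σ_{y : y_t = 1} p(y) = Σ_{c ∈ C, c ≤ c*_t} f_t(c) for every t. Then there exists a joint probability mass function f* : C^T → [0,1] (Σ_{c⃗ ∈ C^T} f*(c⃗) = 1) such that: (i) for every t and every c ∈ C, Σ_{c⃗ ∈ C^T : c⃗_t = c} f*(c⃗) = f_t(c) (the t-th marginal of f* is f_t); and (ii) for every y ∈ {0,1}^T, Σ over {c⃗ ∈ C^T : for all t, (c⃗_t ≤ c*_t ⟺ y_t = 1)} of f*(c⃗) equals p(y) (the joint cutoff-crossing probabilities match the joint choice probabilities). -/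
/-! Sort the points of `C` into the cells `c ≤ c*_t` and `c > c*_t` of each period. Draw the cell
pattern `y` from `p`, then, independently in each period `t`, a point from `f t` conditioned on the
cell `y t`. The cell pattern of the resulting joint law is `p` by construction, and its `t`-th
marginal is `f t` because the consistency condition says that `y t` has the law of the cell of an
`f t`-distributed point. -/

open Finset

section CellMass

variable {α β : Type*} [DecidableEq β] (C : Finset α) (g : α → β) (μ : α → ℝ)

noncomputable def cellMass (s : β) : ℝ := ∑ a ∈ C with g a = s, μ a

/-- Vanishes on cells of mass zero, since `x / 0 = 0`. -/
noncomputable def cellCondDensity (a : α) : ℝ := μ a / cellMass C g μ (g a)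

variable {C g μ}

theorem sum_cellMass [Fintype β] : ∑ s, cellMass C g μ s = ∑ a ∈ C, μ a :=
  sum_fiberwise C g μ

theorem cellCondDensity_nonneg (hμ : ∀ a ∈ C, 0 ≤ μ a) {a : α} (ha : a ∈ C) :
    0 ≤ cellCondDensity C g μ a :=
  div_nonneg (hμ a ha) (sum_nonneg fun b hb => hμ b (mem_filter.mp hb).1)

theorem sum_cellCondDensity_of_cellMass_ne_zero {s : β} (hs : cellMass C g μ s ≠ 0) :
    ∑ a ∈ C with g a = s, cellCondDensity C g μ a = 1 := by
  calc ∑ a ∈ C with g a = s, cellCondDensity C g μ a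
      = ∑ a ∈ C with g a = s, μ a / cellMass C g μ s :=
        sum_congr rfl fun a ha => by rw [cellCondDensity, (mem_filter.mp ha).2]
    _ = 1 := by rw [← sum_div, ← cellMass, div_self hs]

theorem cellMass_mul_cellCondDensity (hμ : ∀ a ∈ C, 0 ≤ μ a) {a : α} (ha : a ∈ C) :
    cellMass C g μ (g a) * cellCondDensity C g μ a = μ a := by
  by_cases hzero : cellMass C g μ (g a) = 0
  · have hle : μ a ≤ cellMass C g μ (g a) :=
      single_le_sum (fun b hb => hμ b (mem_filter.mp hb).1) (mem_filter.mpr ⟨ha, rfl⟩)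
    rw [hzero, zero_mul]
    exact le_antisymm (hμ a ha) (hzero ▸ hle)
  · exact mul_div_cancel₀ _ hzero

end CellMass

section CellCoupling

variable {ι α β : Type*} [Fintype ι] [DecidableEq ι] [DecidableEq β]
  (C : ι → Finset α) (g : ι → α → β) (μ : ι → α → ℝ) (p : (ι → β) → ℝ)

noncomputable def cellCoupling (x : ι → α) : ℝ :=
  p (fun i => g i (x i)) * ∏ i, cellCondDensity (C i) (g i) (μ i) (x i)

variable {C g μ p}

theorem cellCoupling_nonneg (hμ : ∀ i, ∀ a ∈ C i, 0 ≤ μ i a) (hp : ∀ y, 0 ≤ p y)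
    {x : ι → α} (hx : x ∈ Fintype.piFinset C) : 0 ≤ cellCoupling C g μ p x :=
  mul_nonneg (hp _) <| prod_nonneg fun i _ =>
    cellCondDensity_nonneg (hμ i) (Fintype.mem_piFinset.mp hx i)

theorem sum_cellCoupling_fiber (D : ι → Finset α) (y : ι → β) :
    ∑ x ∈ Fintype.piFinset D with (fun i => g i (x i)) = y, cellCoupling C g μ p x
      = p y * ∏ i, ∑ a ∈ D i with g i a = y i, cellCondDensity (C i) (g i) (μ i) a := by
  have hfiber : {x ∈ Fintype.piFinset D | (fun i => g i (x i)) = y}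
      = Fintype.piFinset fun i => {a ∈ D i | g i a = y i} := by
    ext x
    simp [funext_iff, forall_and]
  rw [hfiber, prod_univ_sum, mul_sum]
  refine sum_congr rfl fun x hx => ?_
  have hxy : (fun i => g i (x i)) = y :=
    funext fun i => (mem_filter.mp (Fintype.mem_piFinset.mp hx i)).2
  rw [cellCoupling, hxy]

variable [Fintype β] (hp : ∀ y, 0 ≤ p y)
  (hmarg : ∀ i s, ∑ y with y i = s, p y = cellMass (C i) (g i) (μ i) s)
include hp hmarg

theorem eq_zero_of_cellMass_eq_zero {y : ι → β} {i : ι}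
    (hzero : cellMass (C i) (g i) (μ i) (y i) = 0) : p y = 0 := by
  have hle : p y ≤ ∑ y' with y' i = y i, p y' :=
    single_le_sum (fun y' _ => hp y') (mem_filter.mpr ⟨mem_univ y, rfl⟩)
  rw [hmarg, hzero] at hle
  exact le_antisymm hle (hp y)

theorem mul_prod_sum_cellCondDensity (y : ι → β) (s : Finset ι) :
    p y * ∏ i ∈ s, ∑ a ∈ C i with g i a = y i, cellCondDensity (C i) (g i) (μ i) a
      = p y := by
  by_cases hpy : p y = 0
  · rw [hpy, zero_mul]
  · rw [prod_eq_one fun i _ => sum_cellCondDensity_of_cellMass_ne_zero fun hzero =>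
      hpy (eq_zero_of_cellMass_eq_zero hp hmarg hzero), mul_one]

theorem sum_cellCoupling_cell (y : ι → β) :
    ∑ x ∈ Fintype.piFinset C with (fun i => g i (x i)) = y, cellCoupling C g μ p x = p y := by
  rw [sum_cellCoupling_fiber, mul_prod_sum_cellCondDensity hp hmarg]

theorem sum_cellCoupling : ∑ x ∈ Fintype.piFinset C, cellCoupling C g μ p x = ∑ y, p y := by
  rw [← sum_fiberwise (Fintype.piFinset C) (fun x i => g i (x i))]
  exact sum_congr rfl fun y _ => sum_cellCoupling_cell hp hmarg y

theorem sum_cellCoupling_marginal [DecidableEq α] (hμ : ∀ i, ∀ a ∈ C i, 0 ≤ μ i a)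
    {i : ι} {a : α} (ha : a ∈ C i) :
    ∑ x ∈ Fintype.piFinset C with x i = a, cellCoupling C g μ p x = μ i a := by
  have hterm : ∀ y : ι → β,
      p y * ∏ j, ∑ b ∈ Function.update C i {a} j with g j b = y j,
          cellCondDensity (C j) (g j) (μ j) b
        = (if y i = g i a then p y else 0) * cellCondDensity (C i) (g i) (μ i) a := by
    intro y
    rw [← mul_prod_erase univ _ (mem_univ i), mul_left_comm]
    have hrest : ∏ j ∈ univ.erase i, ∑ b ∈ Function.update C i {a} j with g j b = y j,
          cellCondDensity (C j) (g j) (μ j) b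
        = ∏ j ∈ univ.erase i, ∑ b ∈ C j with g j b = y j,
            cellCondDensity (C j) (g j) (μ j) b :=
      prod_congr rfl fun j hj => by rw [Function.update_of_ne (ne_of_mem_erase hj)]
    rw [hrest, mul_prod_sum_cellCondDensity hp hmarg, Function.update_self, sum_filter,
      sum_singleton]
    simp only [eq_comm (a := g i a)]
    split_ifs <;> ring
  rw [← Fintype.piFinset_update_singleton_eq_filter_piFinset_eq C i ha,
    ← sum_fiberwise _ (fun x j => g j (x j))]
  simp_rw [sum_cellCoupling_fiber, hterm]
  rw [← sum_mul, ← sum_filter, hmarg, cellMass_mul_cellCondDensity (hμ i) ha]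

end CellCoupling

theorem stmt_5_general
    {T : ℕ}
    (C : Finset ℝ)
    (f : Fin T → ℝ → ℝ)
    (hf_nonneg : ∀ (t : Fin T), ∀ c ∈ C, 0 ≤ f t c ∧ f t c ≤ 1)
    (hf_sum : ∀ t : Fin T, ∑ c ∈ C, f t c = 1)
    (cstar : Fin T → ℝ)
    (p : (Fin T → Bool) → ℝ)
    (hp_nonneg : ∀ y, 0 ≤ p y ∧ p y ≤ 1)
    (hp_sum : ∑ y : Fin T → Bool, p y = 1)
    (hconsist : ∀ t : Fin T,
      ∑ y ∈ Finset.univ.filter (fun y : Fin T → Bool => y t = true), p y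
        = ∑ c ∈ C.filter (fun c => c ≤ cstar t), f t c) :
    ∃ fstar : (Fin T → ℝ) → ℝ,
      (∀ cv ∈ Fintype.piFinset (fun _ : Fin T => C), 0 ≤ fstar cv ∧ fstar cv ≤ 1) ∧
      (∑ cv ∈ Fintype.piFinset (fun _ : Fin T => C), fstar cv = 1) ∧
      -- (i) the t-th marginal of f* is f t
      (∀ (t : Fin T), ∀ c ∈ C,
        ∑ cv ∈ (Fintype.piFinset (fun _ : Fin T => C)).filter (fun cv => cv t = c),
          fstar cv = f t c) ∧
      -- (ii) joint cutoff-crossing probabilities match the joint choice probabilities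
      (∀ y : Fin T → Bool,
        ∑ cv ∈ (Fintype.piFinset (fun _ : Fin T => C)).filter
            (fun cv => ∀ t, (cv t ≤ cstar t ↔ y t = true)),
          fstar cv = p y) := by
  set g : Fin T → ℝ → Bool := fun t c => decide (c ≤ cstar t)
  have hmarg_true : ∀ t, ∑ y with y t = true, p y = cellMass C (g t) (f t) true := fun t => by
    simp only [hconsist t, cellMass, g, decide_eq_true_eq]
  have hmarg : ∀ t s, ∑ y with y t = s, p y = cellMass C (g t) (f t) s := by
    intro t s
    have htotal : ∑ s, ∑ y with y t = s, p y = ∑ s, cellMass C (g t) (f t) s := by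
      rw [sum_fiberwise, sum_cellMass, hp_sum, hf_sum]
    rw [Fintype.sum_bool, Fintype.sum_bool, hmarg_true] at htotal
    cases s
    · linarith
    · exact hmarg_true t
  have hp : ∀ y, 0 ≤ p y := fun y => (hp_nonneg y).1
  have hf : ∀ t, ∀ c ∈ C, 0 ≤ f t c := fun t c hc => (hf_nonneg t c hc).1
  have hmass :
      ∑ cv ∈ Fintype.piFinset (fun _ => C), cellCoupling (fun _ => C) g f p cv = 1 := by
    rw [sum_cellCoupling hp hmarg, hp_sum]
  refine ⟨cellCoupling (fun _ => C) g f p, fun cv hcv => ⟨cellCoupling_nonneg hf hp hcv, ?_⟩,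
    hmass, fun t c hc => sum_cellCoupling_marginal hp hmarg hf hc, fun y => ?_⟩
  · exact hmass ▸ single_le_sum (fun _ => cellCoupling_nonneg hf hp) hcv
  · rw [← sum_cellCoupling_cell hp hmarg y]
    congr 1
    refine filter_congr fun cv _ => ?_
    simp only [g, funext_iff]
    exact forall_congr' fun t => by cases y t <;> simp

/-- Marginal-to-joint construction. Let `C ⊂ ℝ` be a nonempty finite set,
`T ≥ 1`, and for each `t` let `f t : C → [0,1]` be a pmf and `c*_t` a cutoff. Let
`p : {0,1}^T → [0,1]` be a pmf whose period-`t` marginals are consistent with the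
cutoffs: `Σ_{y : y_t = 1} p(y) = Σ_{c ∈ C, c ≤ c*_t} f t c`. Then there is a joint pmf
`f*` on `C^T` whose `t`-th marginal is `f t` and whose joint cutoff-crossing
probabilities match `p`. -/
theorem stmt_5
    {T : ℕ} (hT : 1 ≤ T)
    (C : Finset ℝ) (hC : C.Nonempty)
    (f : Fin T → ℝ → ℝ)
    (hf_nonneg : ∀ (t : Fin T), ∀ c ∈ C, 0 ≤ f t c ∧ f t c ≤ 1)
    (hf_sum : ∀ t : Fin T, ∑ c ∈ C, f t c = 1)
    (cstar : Fin T → ℝ)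
    (p : (Fin T → Bool) → ℝ)
    (hp_nonneg : ∀ y, 0 ≤ p y ∧ p y ≤ 1)
    (hp_sum : ∑ y : Fin T → Bool, p y = 1)
    (hconsist : ∀ t : Fin T,
      ∑ y ∈ Finset.univ.filter (fun y : Fin T → Bool => y t = true), p y
        = ∑ c ∈ C.filter (fun c => c ≤ cstar t), f t c) :
    ∃ fstar : (Fin T → ℝ) → ℝ,
      (∀ cv ∈ Fintype.piFinset (fun _ : Fin T => C), 0 ≤ fstar cv ∧ fstar cv ≤ 1) ∧
      (∑ cv ∈ Fintype.piFinset (fun _ : Fin T => C), fstar cv = 1) ∧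
      -- (i) the t-th marginal of f* is f t
      (∀ (t : Fin T), ∀ c ∈ C,
        ∑ cv ∈ (Fintype.piFinset (fun _ : Fin T => C)).filter (fun cv => cv t = c),
          fstar cv = f t c) ∧
      -- (ii) joint cutoff-crossing probabilities match the joint choice probabilities
      (∀ y : Fin T → Bool,
        ∑ cv ∈ (Fintype.piFinset (fun _ : Fin T => C)).filter
            (fun cv => ∀ t, (cv t ≤ cstar t ↔ y t = true)),
          fstar cv = p y) :=
  stmt_5_general C f hf_nonneg hf_sum cstar p hp_nonneg hp_sum hconsist
end

section
/- In the general nonseparable model Y_t = G(W_t·θ₀, α, ε_t) with G weakly increasing in its first argument, if the joint law of (α, ε_t) is the same for all t (partial stationarity conditional on z and α), then for every c ∈ ℝ, every y ∈ ℝ, and all t, s ∈ {1, …, T}: P(Y_t ≤ y and W_t·θ₀ ≥ c) ≤ 1 − P(Y_s > y and W_s·θ₀ ≤ c). Hence θ₀ belongs to the identified set Θ_{I,gen} defined by these inequalities. -/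
open MeasureTheory Matrix

/-!
Fix `c` and `y` and let `B = {(a, e) | G c a e ≤ y}`. By monotonicity of `G` in the index,
`Y_t ≤ y ∧ c ≤ W_t·θ₀` forces `(α, ε_t) ∈ B`, while `y < Y_s ∧ W_s·θ₀ ≤ c` forces
`(α, ε_s) ∉ B`. Stationarity gives `P((α, ε_t) ∈ B) = P((α, ε_s) ∈ B)`, so the two
probabilities add up to at most one.
-/

namespace MeasureTheory

theorem measureReal_le_one_sub_of_map_eq {Ω β : Type*} [MeasurableSpace Ω] [MeasurableSpace β]
    {P : Measure Ω} [IsProbabilityMeasure P] {f g : Ω → β} (hf : Measurable f)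
    (hg : Measurable g) (hfg : P.map f = P.map g) {B : Set β} (hB : MeasurableSet B)
    {S S' : Set Ω} (hS : S ⊆ f ⁻¹' B) (hS' : S' ⊆ g ⁻¹' Bᶜ) :
    P.real S ≤ 1 - P.real S' :=
  calc P.real S ≤ P.real (f ⁻¹' B) := measureReal_mono hS
    _ = 1 - P.real (g ⁻¹' Bᶜ) := by
      rw [← map_measureReal_apply hf hB, hfg, map_measureReal_apply hg hB, Set.preimage_compl,
        probReal_compl_eq_one_sub (hg hB), sub_sub_cancel]
    _ ≤ 1 - P.real S' := sub_le_sub_left (measureReal_mono hS') 1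

end MeasureTheory

theorem stmt_6_general
    {Ω : Type*} [MeasurableSpace Ω] (P : Measure Ω) [IsProbabilityMeasure P]
    {T dw : ℕ} {A E : Type*} [MeasurableSpace A] [MeasurableSpace E]
    (α : Ω → A) (ε : Fin T → Ω → E) (W : Fin T → Ω → (Fin dw → ℝ))
    (hα : Measurable α) (hε : ∀ t, Measurable (ε t))
    (G : ℝ → A → E → ℝ)
    (hGmeas : Measurable fun p : ℝ × A × E => G p.1 p.2.1 p.2.2)
    (hGmono : ∀ (a : A) (e : E), Monotone fun δ : ℝ => G δ a e)
    (θ₀ : Fin dw → ℝ)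
    (Y : Fin T → Ω → ℝ)
    (hY : ∀ t ω, Y t ω = G (W t ω ⬝ᵥ θ₀) (α ω) (ε t ω))
    (hstat : ∀ t s : Fin T,
      P.map (fun ω => (α ω, ε t ω)) = P.map (fun ω => (α ω, ε s ω))) :
    ∀ (c y : ℝ) (t s : Fin T),
      (P {ω | Y t ω ≤ y ∧ c ≤ W t ω ⬝ᵥ θ₀}).toReal
        ≤ 1 - (P {ω | y < Y s ω ∧ W s ω ⬝ᵥ θ₀ ≤ c}).toReal := by
  intro c y t s
  have hB : MeasurableSet {p : A × E | G c p.1 p.2 ≤ y} :=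
    measurableSet_le (hGmeas.comp (measurable_const.prodMk measurable_id)) measurable_const
  refine measureReal_le_one_sub_of_map_eq (hα.prodMk (hε t)) (hα.prodMk (hε s)) (hstat t s) hB
    ?_ ?_
  · rintro ω ⟨hYt, hcW⟩
    exact (hGmono (α ω) (ε t ω) hcW).trans ((hY t ω).symm.trans_le hYt)
  · rintro ω ⟨hYs, hWc⟩
    exact not_le.mpr ((hYs.trans_eq (hY s ω)).trans_le (hGmono (α ω) (ε s ω) hWc))

/-- In the general nonseparable model `Y_t = G(W_t·θ₀, α, ε_t)` with `G`
weakly increasing in its first argument, if the joint law of `(α, ε_t)` is the same for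
all `t` (partial stationarity conditional on `z` and `α`), then for every `c ∈ ℝ`,
every `y ∈ ℝ`, and all `t, s`:
`P(Y_t ≤ y ∧ W_t·θ₀ ≥ c) ≤ 1 − P(Y_s > y ∧ W_s·θ₀ ≤ c)`. -/
theorem stmt_6
    {Ω : Type*} [MeasurableSpace Ω] (P : Measure Ω) [IsProbabilityMeasure P]
    {T dw : ℕ} {A E : Type*} [MeasurableSpace A] [MeasurableSpace E]
    (α : Ω → A) (ε : Fin T → Ω → E) (W : Fin T → Ω → (Fin dw → ℝ))
    (hα : Measurable α) (hε : ∀ t, Measurable (ε t)) (hW : ∀ t, Measurable (W t))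
    (G : ℝ → A → E → ℝ)
    (hGmeas : Measurable fun p : ℝ × A × E => G p.1 p.2.1 p.2.2)
    (hGmono : ∀ (a : A) (e : E), Monotone fun δ : ℝ => G δ a e)
    (θ₀ : Fin dw → ℝ)
    (Y : Fin T → Ω → ℝ)
    (hY : ∀ t ω, Y t ω = G (W t ω ⬝ᵥ θ₀) (α ω) (ε t ω))
    (hstat : ∀ t s : Fin T,
      P.map (fun ω => (α ω, ε t ω)) = P.map (fun ω => (α ω, ε s ω))) :
    ∀ (c y : ℝ) (t s : Fin T),
      (P {ω | Y t ω ≤ y ∧ c ≤ W t ω ⬝ᵥ θ₀}).toReal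
        ≤ 1 - (P {ω | y < Y s ω ∧ W s ω ⬝ᵥ θ₀ ≤ c}).toReal :=
  stmt_6_general P α ε W hα hε G hGmeas hGmono θ₀ Y hY hstat
end

section
/- Reduction to finitely many restrictions in the general model: define, for real-valued outcomes Y_t and indices I_t(θ) = z_t·β + X_t·γ, the condition Ineq(c, y; θ): max_{t≤T} P(Y_t ≤ y and I_t(θ) ≥ c) ≤ 1 − max_{s≤T} P(Y_s > y and I_s(θ) ≤ c). Then: (i) if each X_t takes values only in the finite set {x̄_1, …, x̄_K} ⊂ ℝ^{d_x}, and Ineq(c, y; θ) holds for every y ∈ ℝ and every c in the finite set {z_t·β + x̄_k·γ : t ≤ T, k ≤ K}, then Ineq(c, y; θ) holds for every c ∈ ℝ and every y ∈ ℝ; (ii) if each Y_t takes values only in the finite ordered set {ȳ_1 ≤ ȳ_2 ≤ … ≤ ȳ_K} ⊂ ℝ, and Ineq(c, y; θ) holds for every c ∈ ℝ and every y ∈ {ȳ_1, …, ȳ_{K−1}}, then Ineq(c, y; θ) holds for every c ∈ ℝ and every y ∈ ℝ. -/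
/-!
Both reductions rest on the fact that the two events in `Ineq(c, y; θ)` only see `c` and `y`
through which of the finitely many attainable values lie on either side of them.  For (i),
replacing `c` by the least attainable index value `c' ≥ c` leaves `{I_t ≥ c}` unchanged and
enlarges `{I_s ≤ c}`; for (ii), replacing `y` by the largest support point `ȳ_k ≤ y` leaves
`{Y_t ≤ y}` and `{Y_s > y}` unchanged.  In the boundary cases (no attainable value on one
side) one of the two probabilities vanishes and the inequality is trivial.
-/

open MeasureTheory Matrix

/-- The conditional moment inequality `Ineq(c, y; θ)` of the general model:
`max_t P(Y_t ≤ y ∧ I_t ≥ c) ≤ 1 − max_s P(Y_s > y ∧ I_s ≤ c)`, stated pairwise. -/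
def GenIneq {Ω : Type*} [MeasurableSpace Ω] (P : MeasureTheory.Measure Ω)
    {T : ℕ} (Y : Fin T → Ω → ℝ) (I : Fin T → Ω → ℝ) (c y : ℝ) : Prop :=
  ∀ t s : Fin T,
    (P {ω | Y t ω ≤ y ∧ c ≤ I t ω}).toReal
      ≤ 1 - (P {ω | y < Y s ω ∧ I s ω ≤ c}).toReal

theorem exists_min_image_ge {ι α : Type*} [Fintype ι] [LinearOrder α] (f : ι → α) {c : α}
    (h : ∃ i, c ≤ f i) : ∃ i, c ≤ f i ∧ ∀ j, c ≤ f j → f i ≤ f j := by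
  classical
  obtain ⟨i, hi, hmin⟩ := Finset.exists_min_image (Finset.univ.filter fun i => c ≤ f i) f
    (by simpa [Finset.Nonempty] using h)
  exact ⟨i, by simpa using hi, fun j hj => hmin j (by simpa using hj)⟩

theorem exists_max_image_le {ι α : Type*} [Fintype ι] [LinearOrder α] (f : ι → α) {y : α}
    (h : ∃ i, f i ≤ y) : ∃ i, f i ≤ y ∧ ∀ j, f j ≤ y → f j ≤ f i :=
  exists_min_image_ge (α := αᵒᵈ) f h

section GenIneq

variable {Ω : Type*} [MeasurableSpace Ω] {P : Measure Ω} {T : ℕ}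
  {Y : Fin T → Ω → ℝ} {I : Fin T → Ω → ℝ}

theorem GenIneq.of_forall_imp [IsFiniteMeasure P] {c y c' y' : ℝ}
    (h : GenIneq P Y I c' y')
    (hlower : ∀ t ω, Y t ω ≤ y → c ≤ I t ω → Y t ω ≤ y' ∧ c' ≤ I t ω)
    (hupper : ∀ s ω, y < Y s ω → I s ω ≤ c → y' < Y s ω ∧ I s ω ≤ c') :
    GenIneq P Y I c y := by
  intro t s
  calc P.real {ω | Y t ω ≤ y ∧ c ≤ I t ω}
      ≤ P.real {ω | Y t ω ≤ y' ∧ c' ≤ I t ω} :=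
        measureReal_mono fun ω hω => hlower t ω hω.1 hω.2
    _ ≤ 1 - P.real {ω | y' < Y s ω ∧ I s ω ≤ c'} := h t s
    _ ≤ 1 - P.real {ω | y < Y s ω ∧ I s ω ≤ c} :=
        sub_le_sub_left (measureReal_mono fun ω hω => hupper s ω hω.1 hω.2) 1

theorem genIneq_of_forall_not_lower [IsProbabilityMeasure P] {c y : ℝ}
    (h : ∀ t ω, ¬(Y t ω ≤ y ∧ c ≤ I t ω)) : GenIneq P Y I c y := by
  intro t s
  have hempty : {ω | Y t ω ≤ y ∧ c ≤ I t ω} = ∅ := Set.eq_empty_of_forall_notMem (h t)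
  rw [hempty, measure_empty, ENNReal.toReal_zero, sub_nonneg]
  exact measureReal_le_one

theorem genIneq_of_forall_not_upper [IsProbabilityMeasure P] {c y : ℝ}
    (h : ∀ s ω, ¬(y < Y s ω ∧ I s ω ≤ c)) : GenIneq P Y I c y := by
  intro t s
  have hempty : {ω | y < Y s ω ∧ I s ω ≤ c} = ∅ := Set.eq_empty_of_forall_notMem (h s)
  rw [hempty, measure_empty, ENNReal.toReal_zero, sub_zero]
  exact measureReal_le_one

theorem genIneq_of_forall_mem_range_index [IsProbabilityMeasure P] {ι : Type*} [Fintype ι]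
    (v : ι → ℝ) (hI : ∀ t ω, I t ω ∈ Set.range v)
    (h : ∀ i y, GenIneq P Y I (v i) y) (c y : ℝ) : GenIneq P Y I c y := by
  by_cases hc : ∃ i, c ≤ v i
  · obtain ⟨i, hci, hmin⟩ := exists_min_image_ge v hc
    refine (h i y).of_forall_imp (fun t ω hY hc' => ⟨hY, ?_⟩)
      (fun s ω hY hc' => ⟨hY, hc'.trans hci⟩)
    obtain ⟨j, hj⟩ := hI t ω
    exact hj ▸ hmin j (hj ▸ hc')
  · push Not at hc
    refine genIneq_of_forall_not_lower fun t ω ⟨_, hc'⟩ => ?_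
    obtain ⟨j, hj⟩ := hI t ω
    exact (hc j).not_ge (hj ▸ hc')

theorem genIneq_of_forall_mem_range_outcome [IsProbabilityMeasure P] {K : ℕ}
    (ybar : Fin K → ℝ) (hmono : Monotone ybar) (hY : ∀ t ω, Y t ω ∈ Set.range ybar)
    (h : ∀ c (k : Fin K), (k : ℕ) + 1 < K → GenIneq P Y I c (ybar k)) (c y : ℝ) :
    GenIneq P Y I c y := by
  by_cases hy : ∃ k, ybar k ≤ y
  · obtain ⟨k, hky, hmax⟩ := exists_max_image_le ybar hy
    by_cases hk : (k : ℕ) + 1 < K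
    · refine (h c k hk).of_forall_imp (fun t ω hY' hc => ⟨?_, hc⟩)
        (fun s ω hY' hc => ⟨hky.trans_lt hY', hc⟩)
      obtain ⟨j, hj⟩ := hY t ω
      exact hj ▸ hmax j (hj ▸ hY')
    · -- `k` is the last index, so by monotonicity every support point is `≤ y`.
      refine genIneq_of_forall_not_upper fun s ω ⟨hY', _⟩ => ?_
      obtain ⟨j, hj⟩ := hY s ω
      have hjk : j ≤ k := Fin.le_def.mpr (by omega)
      exact ((hmono hjk).trans hky).not_gt (hj ▸ hY')
  · push Not at hy
    refine genIneq_of_forall_not_lower fun t ω ⟨hY', _⟩ => ?_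
    obtain ⟨j, hj⟩ := hY t ω
    exact (hy j).not_ge (hj ▸ hY')

end GenIneq

theorem stmt_7_general
    {Ω : Type*} [MeasurableSpace Ω] (P : Measure Ω) [IsProbabilityMeasure P]
    {T dz dx : ℕ}
    (z : Fin T → (Fin dz → ℝ))
    (Y : Fin T → Ω → ℝ) (X : Fin T → Ω → (Fin dx → ℝ))
    (β : Fin dz → ℝ) (γ : Fin dx → ℝ) :
    -- (i) discrete endogenous covariates
    ((∀ (K : ℕ) (xbar : Fin K → (Fin dx → ℝ)),
        (∀ (t : Fin T) (ω : Ω), ∃ k, X t ω = xbar k) →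
        (∀ (c y : ℝ), (∃ (t : Fin T) (k : Fin K), c = z t ⬝ᵥ β + xbar k ⬝ᵥ γ) →
          GenIneq P Y (fun t ω => z t ⬝ᵥ β + X t ω ⬝ᵥ γ) c y) →
        ∀ c y : ℝ, GenIneq P Y (fun t ω => z t ⬝ᵥ β + X t ω ⬝ᵥ γ) c y)
      ∧
    -- (ii) discrete ordered outcomes
      (∀ (K : ℕ) (ybar : Fin K → ℝ), Monotone ybar →
        (∀ (t : Fin T) (ω : Ω), ∃ k, Y t ω = ybar k) →
        (∀ (c : ℝ) (k : Fin K), (k : ℕ) + 1 < K →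
          GenIneq P Y (fun t ω => z t ⬝ᵥ β + X t ω ⬝ᵥ γ) c (ybar k)) →
        ∀ c y : ℝ, GenIneq P Y (fun t ω => z t ⬝ᵥ β + X t ω ⬝ᵥ γ) c y)) := by
  refine ⟨fun K xbar hX h => ?_, fun K ybar hmono hY h =>
    genIneq_of_forall_mem_range_outcome ybar hmono (fun t ω => (hY t ω).imp fun _ => Eq.symm) h⟩
  refine genIneq_of_forall_mem_range_index (fun p : Fin T × Fin K => z p.1 ⬝ᵥ β + xbar p.2 ⬝ᵥ γ)
    (fun t ω => ?_) (fun p y => h _ y ⟨p.1, p.2, rfl⟩)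
  obtain ⟨k, hk⟩ := hX t ω
  exact ⟨(t, k), by simp only [hk]⟩

/-- Reduction to finitely many restrictions in the general model.
(i) If each `X_t` takes values only in `{x̄_1, …, x̄_K}` and `Ineq(c, y; θ)` holds for
every `y ∈ ℝ` and every `c ∈ {z_t·β + x̄_k·γ}`, then it holds for every `c, y ∈ ℝ`.
(ii) If each `Y_t` takes values only in the finite ordered set `{ȳ_1 ≤ … ≤ ȳ_K}` and
`Ineq(c, y; θ)` holds for every `c ∈ ℝ` and every `y ∈ {ȳ_1, …, ȳ_{K−1}}`, then it
holds for every `c, y ∈ ℝ`. -/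
theorem stmt_7
    {Ω : Type*} [MeasurableSpace Ω] (P : Measure Ω) [IsProbabilityMeasure P]
    {T dz dx : ℕ}
    (z : Fin T → (Fin dz → ℝ))
    (Y : Fin T → Ω → ℝ) (X : Fin T → Ω → (Fin dx → ℝ))
    (hYm : ∀ t, Measurable (Y t)) (hXm : ∀ t, Measurable (X t))
    (β : Fin dz → ℝ) (γ : Fin dx → ℝ) :
    -- (i) discrete endogenous covariates
    ((∀ (K : ℕ) (xbar : Fin K → (Fin dx → ℝ)),
        (∀ (t : Fin T) (ω : Ω), ∃ k, X t ω = xbar k) →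
        (∀ (c y : ℝ), (∃ (t : Fin T) (k : Fin K), c = z t ⬝ᵥ β + xbar k ⬝ᵥ γ) →
          GenIneq P Y (fun t ω => z t ⬝ᵥ β + X t ω ⬝ᵥ γ) c y) →
        ∀ c y : ℝ, GenIneq P Y (fun t ω => z t ⬝ᵥ β + X t ω ⬝ᵥ γ) c y)
      ∧
    -- (ii) discrete ordered outcomes
      (∀ (K : ℕ) (ybar : Fin K → ℝ), Monotone ybar →
        (∀ (t : Fin T) (ω : Ω), ∃ k, Y t ω = ybar k) →
        (∀ (c : ℝ) (k : Fin K), (k : ℕ) + 1 < K →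
          GenIneq P Y (fun t ω => z t ⬝ᵥ β + X t ω ⬝ᵥ γ) c (ybar k)) →
        ∀ c y : ℝ, GenIneq P Y (fun t ω => z t ⬝ᵥ β + X t ω ⬝ᵥ γ) c y)) :=
  stmt_7_general P z Y X β γ
end

section
/- In the panel ordered response model, under partial stationarity of the composite errors, the true parameter θ₀ satisfies, for every c ∈ ℝ and all t, s ∈ {1, …, T}: Σ_{j=1}^{J} P( Y_t = y_j and b_{j+1} ≤ W_t·θ₀ + c ) ≤ 1 − Σ_{j=1}^{J} P( Y_s = y_j and b_j ≥ W_s·θ₀ + c ), where the inequalities b_{j+1} ≤ W_t·θ₀ + c and b_j ≥ W_s·θ₀ + c are interpreted in the extended reals (so the j = J term on the left and the j = 1 term on the right vanish). Hence θ₀ belongs to the identified set Θ_{I,order} defined by these inequalities. -/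
/-!
If the latent outcome `W_t·θ₀ + v_t` lies in the cell `(b_j, b_{j+1}]` of the observed outcome `y_j`
and `b_{j+1} ≤ W_t·θ₀ + c`, then `v_t ≤ c`; symmetrically `b_j ≥ W_s·θ₀ + c` forces `v_s > c`.
Since distinct outcomes have distinct values, each latent value lies in exactly one cell (so the
events are disjoint across `j`): the left sum is at most `P(v_t ≤ c)` and the right sum at most
`P(v_s > c) = 1 - P(v_s ≤ c)`, and stationarity identifies `P(v_t ≤ c)` with `P(v_s ≤ c)`.
-/

open MeasureTheory Matrix Set Function

theorem Fin.exists_not_castSucc_and_succ {n : ℕ} {p : Fin (n + 1) → Prop} (h0 : ¬p 0)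
    (hlast : p (Fin.last n)) : ∃ i : Fin n, ¬p i.castSucc ∧ p i.succ := by
  by_contra! h
  exact Fin.induction h0 h (Fin.last n) hlast

theorem Finset.sum_measureReal_le_of_pairwise_disjoint {Ω ι : Type*} [MeasurableSpace Ω]
    [Fintype ι] (μ : Measure Ω) [IsFiniteMeasure μ] {A B : ι → Set Ω} {C : Set Ω}
    (hB : ∀ i, MeasurableSet (B i)) (hdisj : Pairwise (Disjoint on B))
    (hAB : ∀ i, A i ⊆ B i) (hBC : ∀ i, B i ⊆ C) :
    ∑ i, μ.real (A i) ≤ μ.real C :=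
  calc ∑ i, μ.real (A i) ≤ ∑ i, μ.real (B i) :=
        Finset.sum_le_sum fun i _ => measureReal_mono (hAB i)
    _ = μ.real (⋃ i, B i) := (measureReal_iUnion_fintype hdisj hB).symm
    _ ≤ μ.real C := measureReal_mono (iUnion_subset hBC)

namespace OrderedResponse

/-- The latent values for which the `j`-th outcome is observed. -/
def cell {J : ℕ} (b : Fin (J + 1) → EReal) (j : Fin J) : Set EReal :=
  Ioc (b j.castSucc) (b j.succ)

variable {J : ℕ} {b : Fin (J + 1) → EReal} {yv : Fin J → ℝ}

theorem exists_mem_cell (hb_bot : b 0 = ⊥) (hb_top : b (Fin.last J) = ⊤) (x : ℝ) :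
    ∃ j, (x : EReal) ∈ cell b j := by
  simpa only [cell, mem_Ioc, not_le] using
    Fin.exists_not_castSucc_and_succ (p := fun i => (x : EReal) ≤ b i)
      (by simp [hb_bot]) (by simp [hb_top])

theorem mem_cell_of_eq (hb_bot : b 0 = ⊥) (hb_top : b (Fin.last J) = ⊤) (hyv : Injective yv)
    {x y : ℝ} (hY : ∀ j, (x : EReal) ∈ cell b j → y = yv j) {j : Fin J} (hy : y = yv j) :
    (x : EReal) ∈ cell b j := by
  obtain ⟨i, hi⟩ := exists_mem_cell hb_bot hb_top x
  rwa [hyv (hy.symm.trans (hY i hi))]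

theorem pairwise_disjoint_preimage_cell {Ω : Type*} (hyv : Injective yv) {x Y : Ω → ℝ}
    (hY : ∀ ω j, (x ω : EReal) ∈ cell b j → Y ω = yv j) :
    Pairwise (Disjoint on fun j => (fun ω => (x ω : EReal)) ⁻¹' cell b j) :=
  fun i j hij => disjoint_left.mpr fun ω hi hj =>
    hij (hyv ((hY ω i hi).symm.trans (hY ω j hj)))

theorem sum_measureReal_le_of_subset_cell {Ω : Type*} [MeasurableSpace Ω] (μ : Measure Ω)
    [IsFiniteMeasure μ] (hyv : Injective yv) {x Y : Ω → ℝ} (hx : Measurable x)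
    (hY : ∀ ω j, (x ω : EReal) ∈ cell b j → Y ω = yv j) {A : Fin J → Set Ω} {C : Set Ω}
    (hC : MeasurableSet C) (hA : ∀ j, A j ⊆ (fun ω => (x ω : EReal)) ⁻¹' cell b j ∩ C) :
    ∑ j, μ.real (A j) ≤ μ.real C :=
  Finset.sum_measureReal_le_of_pairwise_disjoint μ
    (fun _ => ((measurable_coe_real_ereal.comp hx) measurableSet_Ioc).inter hC)
    (fun _ _ hij => (pairwise_disjoint_preimage_cell hyv hY hij).mono
      inter_subset_left inter_subset_left)
    hA fun _ => inter_subset_right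

end OrderedResponse

theorem stmt_8_general
    {Ω : Type*} [MeasurableSpace Ω] (P : Measure Ω) [IsProbabilityMeasure P]
    {T dw J : ℕ}
    (yv : Fin J → ℝ) (hyv : StrictMono yv)
    (b : Fin (J + 1) → EReal)
    (hb_bot : b 0 = ⊥) (hb_top : b (Fin.last J) = ⊤)
    (W : Fin T → Ω → (Fin dw → ℝ)) (v : Fin T → Ω → ℝ)
    (hW : ∀ t, Measurable (W t)) (hv : ∀ t, Measurable (v t))
    (θ₀ : Fin dw → ℝ)
    (Y : Fin T → Ω → ℝ)
    (hY : ∀ (t : Fin T) (ω : Ω) (j : Fin J),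
      (b j.castSucc < ((W t ω ⬝ᵥ θ₀ + v t ω : ℝ) : EReal) ∧
        ((W t ω ⬝ᵥ θ₀ + v t ω : ℝ) : EReal) ≤ b j.succ) → Y t ω = yv j)
    (hstat : ∀ t s : Fin T, P.map (v t) = P.map (v s)) :
    ∀ (c : ℝ) (t s : Fin T),
      (∑ j : Fin J,
          (P {ω | Y t ω = yv j ∧ b j.succ ≤ ((W t ω ⬝ᵥ θ₀ + c : ℝ) : EReal)}).toReal)
        ≤ 1 - ∑ j : Fin J,
            (P {ω | Y s ω = yv j ∧ ((W s ω ⬝ᵥ θ₀ + c : ℝ) : EReal) ≤ b j.castSucc}).toReal := by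
  intro c t s
  have hlatent : ∀ r, Measurable fun ω => W r ω ⬝ᵥ θ₀ + v r ω := fun r =>
    ((continuous_id.dotProduct continuous_const).measurable.comp (hW r)).add (hv r)
  have hcell : ∀ r ω j, Y r ω = yv j →
      ((W r ω ⬝ᵥ θ₀ + v r ω : ℝ) : EReal) ∈ OrderedResponse.cell b j :=
    fun r ω _ => OrderedResponse.mem_cell_of_eq hb_bot hb_top hyv.injective (hY r ω)
  have hleft : ∑ j : Fin J,
      P.real {ω | Y t ω = yv j ∧ b j.succ ≤ ((W t ω ⬝ᵥ θ₀ + c : ℝ) : EReal)}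
      ≤ P.real {ω | v t ω ≤ c} := by
    refine OrderedResponse.sum_measureReal_le_of_subset_cell P hyv.injective (hlatent t) (hY t)
      (measurableSet_le (hv t) measurable_const) fun j ω ⟨hYj, hle⟩ => ⟨hcell t ω j hYj, ?_⟩
    have := EReal.coe_le_coe_iff.mp ((hcell t ω j hYj).2.trans hle)
    exact (add_le_add_iff_left _).mp this
  have hright : ∑ j : Fin J,
      P.real {ω | Y s ω = yv j ∧ ((W s ω ⬝ᵥ θ₀ + c : ℝ) : EReal) ≤ b j.castSucc}
      ≤ P.real {ω | v s ω ≤ c}ᶜ := by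
    refine OrderedResponse.sum_measureReal_le_of_subset_cell P hyv.injective (hlatent s) (hY s)
      (measurableSet_le (hv s) measurable_const).compl
      fun j ω ⟨hYj, hle⟩ => ⟨hcell s ω j hYj, ?_⟩
    have := EReal.coe_lt_coe_iff.mp (hle.trans_lt (hcell s ω j hYj).1)
    exact not_le.mpr ((add_lt_add_iff_left _).mp this)
  have hsame : P.real {ω | v t ω ≤ c} = P.real {ω | v s ω ≤ c} :=
    congrArg ENNReal.toReal <| ProbabilityTheory.IdentDistrib.measure_mem_eq
      ⟨(hv t).aemeasurable, (hv s).aemeasurable, hstat t s⟩ measurableSet_Iic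
  rw [probReal_compl_eq_one_sub (measurableSet_le (hv s) measurable_const)] at hright
  simp only [← measureReal_def] at hleft hright ⊢
  linarith

/-- In the panel ordered response model with latent outcome
`Y*_t = W_t·θ₀ + v_t`, ordered values `y_1 < … < y_J`, and extended-real thresholds
`b_1 = −∞ ≤ b_2 ≤ … ≤ b_J ≤ b_{J+1} = +∞` (with `b_j` real for `2 ≤ j ≤ J`), under
partial stationarity of the composite errors `v_t`, the true parameter `θ₀` satisfies
for every `c ∈ ℝ` and all `t, s`:
`Σ_j P(Y_t = y_j ∧ b_{j+1} ≤ W_t·θ₀ + c) ≤ 1 − Σ_j P(Y_s = y_j ∧ b_j ≥ W_s·θ₀ + c)`,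
where the threshold inequalities are taken in the extended reals.
(Here `b : Fin (J+1) → EReal` lists `b_1, …, b_{J+1}`, so that outcome `j : Fin J`
corresponds to the interval `(b j.castSucc, b j.succ]`.) -/
theorem stmt_8
    {Ω : Type*} [MeasurableSpace Ω] (P : Measure Ω) [IsProbabilityMeasure P]
    {T dw J : ℕ} (hJ : 2 ≤ J)
    (yv : Fin J → ℝ) (hyv : StrictMono yv)
    (b : Fin (J + 1) → EReal) (hb : Monotone b)
    (hb_bot : b 0 = ⊥) (hb_top : b (Fin.last J) = ⊤)
    (hb_mid : ∀ j : Fin (J + 1), j ≠ 0 → j ≠ Fin.last J → ∃ r : ℝ, b j = (r : EReal))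
    (W : Fin T → Ω → (Fin dw → ℝ)) (v : Fin T → Ω → ℝ)
    (hW : ∀ t, Measurable (W t)) (hv : ∀ t, Measurable (v t))
    (θ₀ : Fin dw → ℝ)
    (Y : Fin T → Ω → ℝ)
    (hY : ∀ (t : Fin T) (ω : Ω) (j : Fin J),
      (b j.castSucc < ((W t ω ⬝ᵥ θ₀ + v t ω : ℝ) : EReal) ∧
        ((W t ω ⬝ᵥ θ₀ + v t ω : ℝ) : EReal) ≤ b j.succ) → Y t ω = yv j)
    (hstat : ∀ t s : Fin T, P.map (v t) = P.map (v s)) :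
    ∀ (c : ℝ) (t s : Fin T),
      (∑ j : Fin J,
          (P {ω | Y t ω = yv j ∧ b j.succ ≤ ((W t ω ⬝ᵥ θ₀ + c : ℝ) : EReal)}).toReal)
        ≤ 1 - ∑ j : Fin J,
            (P {ω | Y s ω = yv j ∧ ((W s ω ⬝ᵥ θ₀ + c : ℝ) : EReal) ≤ b j.castSucc}).toReal :=
  stmt_8_general P yv hyv b hb_bot hb_top W v hW hv θ₀ Y hY hstat
end

section
/- In the panel multinomial choice model under partial stationarity of the composite error vectors, the true parameter θ₀ satisfies: for every nonempty proper subset K ⊂ 𝒥, every family of reals (c_{jk})_{j∈K, k∈𝒥∖K}, and all t, s ∈ {1, …, T}: P( Y^K_t = 1 and (W_{jt} − W_{kt})·θ₀ ≤ c_{jk} for all j ∈ K and k ∈ 𝒥∖K ) ≤ 1 − P( Y^K_s = 0 and (W_{js} − W_{ks})·θ₀ ≥ c_{jk} for all j ∈ K and k ∈ 𝒥∖K ). Hence θ₀ belongs to the identified set Θ_{I,mul} defined by these inequalities. -/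
/-!
On the event `Y^K_t = 1` with `(W_j - W_k)·θ₀ ≤ c_{jk}`, some `j ∈ K` beats every `k ∉ K`, which
forces the shocks into the set `{v | ∃ j ∈ K, ∀ k ∉ K, v_k ≤ v_j + c_{jk}}`; on the event
`Y^K_s = 0` with the reversed index bounds, the shocks must avoid that same set. The set only
involves the error vector, so by partial stationarity it has the same probability at `t` and `s`.
-/

open MeasureTheory ProbabilityTheory Matrix

section ShockSet

variable {ι : Type*} (K : Finset ι) (c : ι → ι → ℝ)

def shockSet : Set (ι → ℝ) :=
  {x | ∃ j ∈ K, ∀ k ∉ K, x k ≤ x j + c j k}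

theorem measurableSet_shockSet [Countable ι] : MeasurableSet (shockSet K c) := by
  have hunion :
      shockSet K c = ⋃ j ∈ K, ⋂ (k) (_ : k ∉ K), {x : ι → ℝ | x k ≤ x j + c j k} := by
    ext x; simp [shockSet]
  rw [hunion]
  refine .biUnion K.countable_toSet fun j _ => ?_
  refine .iInter fun k => .iInter fun _ => ?_
  exact measurableSet_le (measurable_pi_apply k) ((measurable_pi_apply j).add_const _)

variable {K c} {a x : ι → ℝ}

theorem mem_shockSet_of_chosen (hY : ∃ j ∈ K, ∀ k ∉ K, a k + x k ≤ a j + x j)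
    (hc : ∀ j ∈ K, ∀ k ∉ K, a j - a k ≤ c j k) : x ∈ shockSet K c := by
  obtain ⟨j, hj, hjk⟩ := hY
  exact ⟨j, hj, fun k hk => by linarith [hjk k hk, hc j hj k hk]⟩

theorem chosen_of_mem_shockSet (hx : x ∈ shockSet K c)
    (hc : ∀ j ∈ K, ∀ k ∉ K, c j k ≤ a j - a k) : ∃ j ∈ K, ∀ k ∉ K, a k + x k ≤ a j + x j := by
  obtain ⟨j, hj, hjk⟩ := hx
  exact ⟨j, hj, fun k hk => by linarith [hjk k hk, hc j hj k hk]⟩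

end ShockSet

theorem measureReal_le_one_sub_of_subset_preimage {Ω β : Type*} [MeasurableSpace Ω]
    [MeasurableSpace β] {P : Measure Ω} [IsProbabilityMeasure P] {X Y : Ω → β} {S : Set β}
    {A B : Set Ω} (hXY : IdentDistrib X Y P P) (hS : MeasurableSet S) (hA : A ⊆ X ⁻¹' S)
    (hB : B ⊆ (Y ⁻¹' S)ᶜ) : P.real A ≤ 1 - P.real B :=
  calc P.real A ≤ P.real (X ⁻¹' S) := measureReal_mono hA
    _ = P.real (Y ⁻¹' S) := by simp only [measureReal_def, hXY.measure_mem_eq hS]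
    _ = 1 - P.real (Y ⁻¹' S)ᶜ := by
      rw [probReal_compl_eq_one_sub₀ (hXY.aemeasurable_snd.nullMeasurableSet_preimage hS),
        sub_sub_cancel]
    _ ≤ 1 - P.real B := sub_le_sub_left (measureReal_mono hB) 1

theorem stmt_10_general
    {Ω : Type*} [MeasurableSpace Ω] (P : Measure Ω) [IsProbabilityMeasure P]
    {T dw J : ℕ}
    (W : Fin (J + 1) → Fin T → Ω → (Fin dw → ℝ)) (v : Fin (J + 1) → Fin T → Ω → ℝ)
    (hv : ∀ j t, Measurable (v j t))
    (θ₀ : Fin dw → ℝ)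
    (hstat : ∀ t s : Fin T,
      P.map (fun ω (j : Fin (J + 1)) => v j t ω)
        = P.map (fun ω (j : Fin (J + 1)) => v j s ω)) :
    ∀ K : Finset (Fin (J + 1)), K.Nonempty → K ≠ Finset.univ →
    ∀ (c : Fin (J + 1) → Fin (J + 1) → ℝ) (t s : Fin T),
      (P {ω | (∃ j ∈ K, ∀ k ∉ K,
            W k t ω ⬝ᵥ θ₀ + v k t ω ≤ W j t ω ⬝ᵥ θ₀ + v j t ω) ∧
          ∀ j ∈ K, ∀ k ∉ K, (W j t ω - W k t ω) ⬝ᵥ θ₀ ≤ c j k}).toReal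
        ≤ 1 - (P {ω | ¬(∃ j ∈ K, ∀ k ∉ K,
              W k s ω ⬝ᵥ θ₀ + v k s ω ≤ W j s ω ⬝ᵥ θ₀ + v j s ω) ∧
            ∀ j ∈ K, ∀ k ∉ K, c j k ≤ (W j s ω - W k s ω) ⬝ᵥ θ₀}).toReal := by
  intro K _ _ c t s
  have hmeas (r : Fin T) : Measurable fun ω (j : Fin (J + 1)) => v j r ω :=
    measurable_pi_lambda _ fun j => hv j r
  have hident : IdentDistrib (fun ω j => v j t ω) (fun ω j => v j s ω) P P :=
    ⟨(hmeas t).aemeasurable, (hmeas s).aemeasurable, hstat t s⟩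
  simp only [← measureReal_def]
  refine measureReal_le_one_sub_of_subset_preimage hident (measurableSet_shockSet K c) ?_ ?_
  · rintro ω ⟨hY, hc⟩
    refine mem_shockSet_of_chosen hY fun j hj k hk => ?_
    simpa only [sub_dotProduct] using hc j hj k hk
  · rintro ω ⟨hY, hc⟩ hx
    refine hY (chosen_of_mem_shockSet hx fun j hj k hk => ?_)
    simpa only [sub_dotProduct] using hc j hj k hk

/-- In the panel multinomial choice model with latent utilities
`u_{jt} = W_{jt}·θ₀ + v_{jt}` over alternatives `𝒥 = {0, …, J}`, under partial
stationarity of the composite error vectors `(v_{jt})_{j∈𝒥}`, the true parameter `θ₀`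
satisfies: for every nonempty proper subset `K ⊂ 𝒥`, every family of reals
`(c_{jk})`, and all periods `t, s`:
`P(Y^K_t = 1 ∧ (W_{jt}−W_{kt})·θ₀ ≤ c_{jk} ∀ j∈K, k∉K)
  ≤ 1 − P(Y^K_s = 0 ∧ (W_{js}−W_{ks})·θ₀ ≥ c_{jk} ∀ j∈K, k∉K)`,
where `Y^K_t = 1{∃ j ∈ K, ∀ k ∉ K, u_{jt} ≥ u_{kt}}`. -/
theorem stmt_10
    {Ω : Type*} [MeasurableSpace Ω] (P : Measure Ω) [IsProbabilityMeasure P]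
    {T dw J : ℕ}
    (W : Fin (J + 1) → Fin T → Ω → (Fin dw → ℝ)) (v : Fin (J + 1) → Fin T → Ω → ℝ)
    (hW : ∀ j t, Measurable (W j t)) (hv : ∀ j t, Measurable (v j t))
    (θ₀ : Fin dw → ℝ)
    (hstat : ∀ t s : Fin T,
      P.map (fun ω (j : Fin (J + 1)) => v j t ω)
        = P.map (fun ω (j : Fin (J + 1)) => v j s ω)) :
    ∀ K : Finset (Fin (J + 1)), K.Nonempty → K ≠ Finset.univ →
    ∀ (c : Fin (J + 1) → Fin (J + 1) → ℝ) (t s : Fin T),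
      (P {ω | (∃ j ∈ K, ∀ k ∉ K,
            W k t ω ⬝ᵥ θ₀ + v k t ω ≤ W j t ω ⬝ᵥ θ₀ + v j t ω) ∧
          ∀ j ∈ K, ∀ k ∉ K, (W j t ω - W k t ω) ⬝ᵥ θ₀ ≤ c j k}).toReal
        ≤ 1 - (P {ω | ¬(∃ j ∈ K, ∀ k ∉ K,
              W k s ω ⬝ᵥ θ₀ + v k s ω ≤ W j s ω ⬝ᵥ θ₀ + v j s ω) ∧
            ∀ j ∈ K, ∀ k ∉ K, c j k ≤ (W j s ω - W k s ω) ⬝ᵥ θ₀}).toReal :=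
  stmt_10_general P W v hv θ₀ hstat
end

section
/- Specialization to the static multinomial restriction of Pakes and Porter: in the multinomial choice model with deterministic covariate values w_{jt} ∈ ℝ^{d_w} (i.e. conditioning on all covariates, full stationarity of the composite error vectors), for every nonempty proper subset K ⊂ 𝒥 and any two periods s, t: if (w_{js} − w_{ks})·θ₀ ≤ (w_{jt} − w_{kt})·θ₀ for all j ∈ K and k ∈ 𝒥∖K, then P(Y^K_s = 1) ≤ P(Y^K_t = 1). -/
open MeasureTheory Matrix

/-! Subtracting the deterministic index `w_{jt}·θ₀` turns `Y^K_t = 1` into the event that the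
error vector `(v_{jt})_j` lies in a set determined by `K` and that period's indices. When the
index differences between `K` and its complement increase from `s` to `t`, that set only grows,
and stationarity makes the error vectors of both periods land in it with the same probability. -/

def choiceSet {ι : Type*} (K : Finset ι) (a : ι → ℝ) : Set (ι → ℝ) :=
  {x | ∃ j ∈ K, ∀ k ∉ K, a k + x k ≤ a j + x j}

lemma measurableSet_choiceSet {ι : Type*} [Countable ι] (K : Finset ι) (a : ι → ℝ) :
    MeasurableSet (choiceSet K a) := by
  have h : choiceSet K a = ⋃ j ∈ K, ⋂ k ∈ (Kᶜ : Set ι), {x | a k + x k ≤ a j + x j} := by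
    ext x
    simp [choiceSet]
  rw [h]
  exact MeasurableSet.biUnion K.countable_toSet fun j _ =>
    MeasurableSet.iInter fun k => MeasurableSet.iInter fun _ =>
      measurableSet_le (by fun_prop) (by fun_prop)

lemma choiceSet_mono {ι : Type*} {K : Finset ι} {a b : ι → ℝ}
    (hab : ∀ j ∈ K, ∀ k ∉ K, a j - a k ≤ b j - b k) :
    choiceSet K a ⊆ choiceSet K b := by
  rintro x ⟨j, hj, hjmax⟩
  exact ⟨j, hj, fun k hk => by linarith [hjmax k hk, hab j hj k hk]⟩

lemma measure_preimage_eq_of_map_eq {Ω α : Type*} [MeasurableSpace Ω] [MeasurableSpace α]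
    {P : Measure Ω} {X Y : Ω → α} (hX : Measurable X) (hY : Measurable Y)
    (hXY : P.map X = P.map Y) {A : Set α} (hA : MeasurableSet A) :
    P (X ⁻¹' A) = P (Y ⁻¹' A) := by
  rw [← Measure.map_apply hX hA, ← Measure.map_apply hY hA, hXY]

theorem stmt_11_general
    {Ω : Type*} [MeasurableSpace Ω] (P : Measure Ω)
    {T dw J : ℕ}
    (w : Fin (J + 1) → Fin T → (Fin dw → ℝ)) (v : Fin (J + 1) → Fin T → Ω → ℝ)
    (hv : ∀ j t, Measurable (v j t))
    (θ₀ : Fin dw → ℝ)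
    (hstat : ∀ t s : Fin T,
      P.map (fun ω (j : Fin (J + 1)) => v j t ω)
        = P.map (fun ω (j : Fin (J + 1)) => v j s ω)) :
    ∀ K : Finset (Fin (J + 1)), K.Nonempty → K ≠ Finset.univ →
    ∀ s t : Fin T,
      (∀ j ∈ K, ∀ k ∉ K, (w j s - w k s) ⬝ᵥ θ₀ ≤ (w j t - w k t) ⬝ᵥ θ₀) →
      P {ω | ∃ j ∈ K, ∀ k ∉ K, w k s ⬝ᵥ θ₀ + v k s ω ≤ w j s ⬝ᵥ θ₀ + v j s ω}
        ≤ P {ω | ∃ j ∈ K, ∀ k ∉ K, w k t ⬝ᵥ θ₀ + v k t ω ≤ w j t ⬝ᵥ θ₀ + v j t ω} := by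
  intro K _ _ s t hindex
  let index (r : Fin T) (j : Fin (J + 1)) : ℝ := w j r ⬝ᵥ θ₀
  let errors (r : Fin T) (ω : Ω) (j : Fin (J + 1)) : ℝ := v j r ω
  have herrors (r : Fin T) : Measurable (errors r) := measurable_pi_lambda _ fun j => hv j r
  have hgrow : choiceSet K (index s) ⊆ choiceSet K (index t) :=
    choiceSet_mono fun j hj k hk => by simpa only [index, sub_dotProduct] using hindex j hj k hk
  calc P (errors s ⁻¹' choiceSet K (index s))
      ≤ P (errors s ⁻¹' choiceSet K (index t)) := measure_mono (Set.preimage_mono hgrow)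
    _ = P (errors t ⁻¹' choiceSet K (index t)) :=
        measure_preimage_eq_of_map_eq (herrors s) (herrors t) (hstat s t)
          (measurableSet_choiceSet K (index t))

/-- Specialization to the static multinomial restriction of Pakes and
Porter. With deterministic covariate values `w_{jt}` (conditioning on all covariates)
and full stationarity of the composite error vectors `(v_{jt})_{j∈𝒥}`, for every
nonempty proper subset `K ⊂ 𝒥` and any two periods `s, t`: if
`(w_{js} − w_{ks})·θ₀ ≤ (w_{jt} − w_{kt})·θ₀` for all `j ∈ K` and `k ∉ K`, then
`P(Y^K_s = 1) ≤ P(Y^K_t = 1)`. -/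
theorem stmt_11
    {Ω : Type*} [MeasurableSpace Ω] (P : Measure Ω) [IsProbabilityMeasure P]
    {T dw J : ℕ}
    (w : Fin (J + 1) → Fin T → (Fin dw → ℝ)) (v : Fin (J + 1) → Fin T → Ω → ℝ)
    (hv : ∀ j t, Measurable (v j t))
    (θ₀ : Fin dw → ℝ)
    (hstat : ∀ t s : Fin T,
      P.map (fun ω (j : Fin (J + 1)) => v j t ω)
        = P.map (fun ω (j : Fin (J + 1)) => v j s ω)) :
    ∀ K : Finset (Fin (J + 1)), K.Nonempty → K ≠ Finset.univ →
    ∀ s t : Fin T,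
      (∀ j ∈ K, ∀ k ∉ K, (w j s - w k s) ⬝ᵥ θ₀ ≤ (w j t - w k t) ⬝ᵥ θ₀) →
      P {ω | ∃ j ∈ K, ∀ k ∉ K, w k s ⬝ᵥ θ₀ + v k s ω ≤ w j s ⬝ᵥ θ₀ + v j s ω}
        ≤ P {ω | ∃ j ∈ K, ∀ k ∉ K, w k t ⬝ᵥ θ₀ + v k t ω ≤ w j t ⬝ᵥ θ₀ + v j t ω} :=
  stmt_11_general P w v hv θ₀ hstat
end

section
/- In the panel censored outcome model Y_t = max(W_t·θ₀ + u_t, 0), if the composite errors u_1, …, u_T all have the same distribution (partial stationarity conditional on z), then for every c ∈ ℝ and all t, s ∈ {1, …, T}: P( Y_t ≤ W_t·θ₀ − c ) ≤ P( 0 < Y_s ≤ W_s·θ₀ − c ) + P( Y_s = 0 ). Consequently max_{t≤T} P(Y_t ≤ W_t·θ₀ − c) ≤ min_{s≤T} { P(0 < Y_s ≤ W_s·θ₀ − c) + P(Y_s = 0) } for every c, and θ₀ belongs to the identified set for the censored model. -/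
open MeasureTheory Matrix

/-! Censoring at `0` only pushes `Y_t` up, so `Y_t ≤ W_t·θ₀ − c` forces `u_t ≤ −c`; conversely
`u_s ≤ −c` means that either `Y_s` is censored or `0 < Y_s = W_s·θ₀ + u_s ≤ W_s·θ₀ − c`.
Stationarity transfers the probability of `u ≤ −c` from period `t` to period `s`. -/

section CensoredOutcome

variable {α : Type*} [AddCommGroup α] [LinearOrder α] [IsOrderedAddMonoid α] {a e c : α}

lemma le_neg_of_max_add_le_sub (h : max (a + e) 0 ≤ a - c) : e ≤ -c := by
  have := (le_max_left _ _).trans h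
  rwa [sub_eq_add_neg, add_le_add_iff_left] at this

lemma max_add_le_sub_or_eq_zero_of_le_neg (h : e ≤ -c) :
    (0 < max (a + e) 0 ∧ max (a + e) 0 ≤ a - c) ∨ max (a + e) 0 = 0 := by
  rcases le_or_gt (a + e) 0 with hle | hpos
  · exact Or.inr (max_eq_right hle)
  · rw [max_eq_left hpos.le, sub_eq_add_neg, add_le_add_iff_left]
    exact Or.inl ⟨hpos, h⟩

end CensoredOutcome

theorem stmt_12_general
    {Ω : Type*} [MeasurableSpace Ω] (P : Measure Ω) [IsProbabilityMeasure P]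
    {T dw : ℕ}
    (W : Fin T → Ω → (Fin dw → ℝ)) (u : Fin T → Ω → ℝ)
    (hu : ∀ t, Measurable (u t))
    (θ₀ : Fin dw → ℝ)
    (Y : Fin T → Ω → ℝ)
    (hY : ∀ t ω, Y t ω = max (W t ω ⬝ᵥ θ₀ + u t ω) 0)
    (hstat : ∀ t s : Fin T, P.map (u t) = P.map (u s)) :
    ∀ (c : ℝ) (t s : Fin T),
      (P {ω | Y t ω ≤ W t ω ⬝ᵥ θ₀ - c}).toReal
        ≤ (P {ω | 0 < Y s ω ∧ Y s ω ≤ W s ω ⬝ᵥ θ₀ - c}).toReal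
          + (P {ω | Y s ω = 0}).toReal := by
  intro c t s
  have hident : ProbabilityTheory.IdentDistrib (u t) (u s) P P :=
    ⟨(hu t).aemeasurable, (hu s).aemeasurable, hstat t s⟩
  show P.real _ ≤ P.real _ + P.real _
  calc P.real {ω | Y t ω ≤ W t ω ⬝ᵥ θ₀ - c}
      ≤ P.real (u t ⁻¹' Set.Iic (-c)) :=
        measureReal_mono fun ω hω ↦ le_neg_of_max_add_le_sub ((hY t ω).symm.trans_le hω)
    _ = P.real (u s ⁻¹' Set.Iic (-c)) := by
        simp only [measureReal_def, hident.measure_mem_eq measurableSet_Iic]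
    _ ≤ P.real ({ω | 0 < Y s ω ∧ Y s ω ≤ W s ω ⬝ᵥ θ₀ - c} ∪ {ω | Y s ω = 0}) :=
        measureReal_mono fun ω hω ↦ by
          simpa only [Set.mem_union, Set.mem_ofPred_eq, hY s ω] using
            max_add_le_sub_or_eq_zero_of_le_neg (a := W s ω ⬝ᵥ θ₀) hω
    _ ≤ _ := measureReal_union_le _ _

/-- In the panel censored outcome model `Y_t = max(W_t·θ₀ + u_t, 0)`,
if the composite errors `u_1, …, u_T` all have the same distribution (partial
stationarity conditional on `z`), then for every `c ∈ ℝ` and all `t, s`: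
`P(Y_t ≤ W_t·θ₀ − c) ≤ P(0 < Y_s ≤ W_s·θ₀ − c) + P(Y_s = 0)`. -/
theorem stmt_12
    {Ω : Type*} [MeasurableSpace Ω] (P : Measure Ω) [IsProbabilityMeasure P]
    {T dw : ℕ}
    (W : Fin T → Ω → (Fin dw → ℝ)) (u : Fin T → Ω → ℝ)
    (hW : ∀ t, Measurable (W t)) (hu : ∀ t, Measurable (u t))
    (θ₀ : Fin dw → ℝ)
    (Y : Fin T → Ω → ℝ)
    (hY : ∀ t ω, Y t ω = max (W t ω ⬝ᵥ θ₀ + u t ω) 0)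
    (hstat : ∀ t s : Fin T, P.map (u t) = P.map (u s)) :
    ∀ (c : ℝ) (t s : Fin T),
      (P {ω | Y t ω ≤ W t ω ⬝ᵥ θ₀ - c}).toReal
        ≤ (P {ω | 0 < Y s ω ∧ Y s ω ≤ W s ω ⬝ᵥ θ₀ - c}).toReal
          + (P {ω | Y s ω = 0}).toReal :=
  stmt_12_general P W u hu θ₀ Y hY hstat
end

section
/- Bounds on counterfactual conditional choice probabilities: in the panel binary choice model, fix a covariate realization w = (w_1, …, w_T) with P(W = w) > 0 and a counterfactual covariate value w̃. Define the counterfactual period-t conditional choice probability p̃_t(w̃) := P( v_t ≤ w̃_t·θ₀ │ W = w ), obtained by changing the utility index from w_t·θ₀ to w̃_t·θ₀ while holding the conditional error distribution given W = w fixed. Then for every c ∈ ℝ: P( Y_t = 1 and w_t·θ₀ ≤ c │ W = w ) ≤ P( v_t ≤ c │ W = w ) ≤ 1 − P( Y_t = 0 and w_t·θ₀ ≥ c │ W = w ); in particular, taking c = w̃_t·θ₀ yields P( Y_t = 1 and w_t·θ₀ ≤ w̃_t·θ₀ │ W = w ) ≤ p̃_t(w̃) ≤ 1 − P( Y_t =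 0 and w_t·θ₀ ≥ w̃_t·θ₀ │ W = w ). -/
/-!
Given `W = w`, the period-`t` utility index is the constant `w_t·θ₀`. An observed choice
`Y_t = 1` means `v_t ≤ w_t·θ₀`, so when `w_t·θ₀ ≤ c` it forces `v_t ≤ c`; this gives the lower
bound by monotonicity. An observed choice `Y_t = 0` means `v_t > w_t·θ₀`, so when `c ≤ w_t·θ₀`
it rules out `v_t ≤ c`; the two events are disjoint inside `{W = w}`, which gives the upper bound.
-/

open MeasureTheory Matrix

theorem measureReal_div_le_one_sub_of_disjoint {α : Type*} [MeasurableSpace α]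
    {μ : Measure α} [IsFiniteMeasure μ] {s b e : Set α} (hs : MeasurableSet s)
    (hsb : Disjoint s b) (hse : s ⊆ e) (hbe : b ⊆ e) :
    μ.real s / μ.real e ≤ 1 - μ.real b / μ.real e := by
  have hadd : μ.real s + μ.real b ≤ μ.real e := by
    rw [← measureReal_union' hsb hs]
    exact measureReal_mono (Set.union_subset hse hbe)
  rw [le_sub_iff_add_le, ← add_div]
  exact div_le_one_of_le₀ hadd measureReal_nonneg

theorem threshold_choice_bounds {Ω : Type*} [MeasurableSpace Ω] (μ : Measure Ω)
    [IsFiniteMeasure μ] {x v y : Ω → ℝ} (hv : Measurable v)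
    (hy : ∀ ω, y ω = if v ω ≤ x ω then 1 else 0) {E : Set Ω} (hE : MeasurableSet E) {a : ℝ}
    (hxE : ∀ ω ∈ E, x ω = a) (c : ℝ) :
    μ.real {ω | (y ω = 1 ∧ a ≤ c) ∧ ω ∈ E} / μ.real E
        ≤ μ.real {ω | v ω ≤ c ∧ ω ∈ E} / μ.real E ∧
      μ.real {ω | v ω ≤ c ∧ ω ∈ E} / μ.real E
        ≤ 1 - μ.real {ω | (y ω = 0 ∧ c ≤ a) ∧ ω ∈ E} / μ.real E := by
  have hy_one {ω} (h : y ω = 1) : v ω ≤ x ω := by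
    by_contra hlt
    simp [hy, hlt] at h
  have hy_zero {ω} (h : y ω = 0) : x ω < v ω := by
    by_contra hle
    simp [hy, not_lt.mp hle] at h
  constructor
  · refine div_le_div_of_nonneg_right (measureReal_mono ?_) measureReal_nonneg
    rintro ω ⟨⟨hy1, hac⟩, hωE⟩
    exact ⟨(hy_one hy1).trans ((hxE ω hωE).trans_le hac), hωE⟩
  · refine measureReal_div_le_one_sub_of_disjoint
      ((measurableSet_le hv measurable_const).inter hE) ?_ (fun _ h ↦ h.2) (fun _ h ↦ h.2)
    refine Set.disjoint_left.mpr ?_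
    rintro ω ⟨hvc, hωE⟩ ⟨⟨hy0, hca⟩, -⟩
    have := hy_zero hy0
    rw [hxE ω hωE] at this
    linarith

theorem stmt_13_general
    {Ω : Type*} [MeasurableSpace Ω] (P : Measure Ω) [IsProbabilityMeasure P]
    {T dw : ℕ}
    (W : Fin T → Ω → (Fin dw → ℝ)) (v : Fin T → Ω → ℝ)
    (hW : ∀ t, Measurable (W t)) (hv : ∀ t, Measurable (v t))
    (θ₀ : Fin dw → ℝ)
    (Y : Fin T → Ω → ℝ)
    (hY : ∀ t ω, Y t ω = if v t ω ≤ W t ω ⬝ᵥ θ₀ then 1 else 0)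
    (w wtil : Fin T → (Fin dw → ℝ)) :
    ∀ t : Fin T,
      (∀ c : ℝ,
        (P {ω | (Y t ω = 1 ∧ w t ⬝ᵥ θ₀ ≤ c) ∧ (fun t' => W t' ω) = w}).toReal
            / (P {ω | (fun t' => W t' ω) = w}).toReal
          ≤ (P {ω | v t ω ≤ c ∧ (fun t' => W t' ω) = w}).toReal
            / (P {ω | (fun t' => W t' ω) = w}).toReal ∧
        (P {ω | v t ω ≤ c ∧ (fun t' => W t' ω) = w}).toReal
            / (P {ω | (fun t' => W t' ω) = w}).toReal
          ≤ 1 - (P {ω | (Y t ω = 0 ∧ c ≤ w t ⬝ᵥ θ₀) ∧ (fun t' => W t' ω) = w}).toReal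
            / (P {ω | (fun t' => W t' ω) = w}).toReal) ∧
      ((P {ω | (Y t ω = 1 ∧ w t ⬝ᵥ θ₀ ≤ wtil t ⬝ᵥ θ₀) ∧
            (fun t' => W t' ω) = w}).toReal
          / (P {ω | (fun t' => W t' ω) = w}).toReal
        ≤ (P {ω | v t ω ≤ wtil t ⬝ᵥ θ₀ ∧ (fun t' => W t' ω) = w}).toReal
          / (P {ω | (fun t' => W t' ω) = w}).toReal ∧
       (P {ω | v t ω ≤ wtil t ⬝ᵥ θ₀ ∧ (fun t' => W t' ω) = w}).toReal
          / (P {ω | (fun t' => W t' ω) = w}).toReal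
        ≤ 1 - (P {ω | (Y t ω = 0 ∧ wtil t ⬝ᵥ θ₀ ≤ w t ⬝ᵥ θ₀) ∧
              (fun t' => W t' ω) = w}).toReal
          / (P {ω | (fun t' => W t' ω) = w}).toReal) := by
  intro t
  have hE : MeasurableSet {ω | (fun t' => W t' ω) = w} :=
    measurable_pi_lambda _ hW (measurableSet_singleton w)
  have bounds := threshold_choice_bounds P (x := fun ω ↦ W t ω ⬝ᵥ θ₀) (hv t) (hY t) hE
    (a := w t ⬝ᵥ θ₀) (fun ω hω ↦ by rw [congrFun hω t])
  exact ⟨bounds, bounds (wtil t ⬝ᵥ θ₀)⟩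

/-- Bounds on counterfactual conditional choice probabilities in the
panel binary choice model `Y_t = 1{v_t ≤ W_t·θ₀}`. Fix a covariate realization
`w = (w_1, …, w_T)` with `P(W = w) > 0` and a counterfactual value `wtil`. With the
counterfactual CCP `p̃_t(wtil) := P(v_t ≤ wtil_t·θ₀ │ W = w)`, for every `c ∈ ℝ`:
`P(Y_t = 1 ∧ w_t·θ₀ ≤ c │ W = w) ≤ P(v_t ≤ c │ W = w)
  ≤ 1 − P(Y_t = 0 ∧ w_t·θ₀ ≥ c │ W = w)`,
and in particular, with `c = wtil_t·θ₀`,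
`P(Y_t = 1 ∧ w_t·θ₀ ≤ wtil_t·θ₀ │ W = w) ≤ p̃_t(wtil)
  ≤ 1 − P(Y_t = 0 ∧ w_t·θ₀ ≥ wtil_t·θ₀ │ W = w)`.
Conditional probabilities are ordinary ratios against the positive-probability
event `{W = w}`. -/
theorem stmt_13
    {Ω : Type*} [MeasurableSpace Ω] (P : Measure Ω) [IsProbabilityMeasure P]
    {T dw : ℕ}
    (W : Fin T → Ω → (Fin dw → ℝ)) (v : Fin T → Ω → ℝ)
    (hW : ∀ t, Measurable (W t)) (hv : ∀ t, Measurable (v t))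
    (θ₀ : Fin dw → ℝ)
    (Y : Fin T → Ω → ℝ)
    (hY : ∀ t ω, Y t ω = if v t ω ≤ W t ω ⬝ᵥ θ₀ then 1 else 0)
    (w wtil : Fin T → (Fin dw → ℝ))
    (hw : 0 < P {ω | (fun t => W t ω) = w}) :
    ∀ t : Fin T,
      (∀ c : ℝ,
        (P {ω | (Y t ω = 1 ∧ w t ⬝ᵥ θ₀ ≤ c) ∧ (fun t' => W t' ω) = w}).toReal
            / (P {ω | (fun t' => W t' ω) = w}).toReal
          ≤ (P {ω | v t ω ≤ c ∧ (fun t' => W t' ω) = w}).toReal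
            / (P {ω | (fun t' => W t' ω) = w}).toReal ∧
        (P {ω | v t ω ≤ c ∧ (fun t' => W t' ω) = w}).toReal
            / (P {ω | (fun t' => W t' ω) = w}).toReal
          ≤ 1 - (P {ω | (Y t ω = 0 ∧ c ≤ w t ⬝ᵥ θ₀) ∧ (fun t' => W t' ω) = w}).toReal
            / (P {ω | (fun t' => W t' ω) = w}).toReal) ∧
      ((P {ω | (Y t ω = 1 ∧ w t ⬝ᵥ θ₀ ≤ wtil t ⬝ᵥ θ₀) ∧
            (fun t' => W t' ω) = w}).toReal
          / (P {ω | (fun t' => W t' ω) = w}).toReal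
        ≤ (P {ω | v t ω ≤ wtil t ⬝ᵥ θ₀ ∧ (fun t' => W t' ω) = w}).toReal
          / (P {ω | (fun t' => W t' ω) = w}).toReal ∧
       (P {ω | v t ω ≤ wtil t ⬝ᵥ θ₀ ∧ (fun t' => W t' ω) = w}).toReal
          / (P {ω | (fun t' => W t' ω) = w}).toReal
        ≤ 1 - (P {ω | (Y t ω = 0 ∧ wtil t ⬝ᵥ θ₀ ≤ w t ⬝ᵥ θ₀) ∧
              (fun t' => W t' ω) = w}).toReal
          / (P {ω | (fun t' => W t' ω) = w}).toReal) :=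
  stmt_13_general P W v hW hv θ₀ Y hY w wtil
end

section
/- Equivalence with Manski's maximum-score restriction: let z_t, z_s ∈ ℝ^{d}, β ∈ ℝ^{d}, and p_t, p_s ∈ [0,1] (interpreted as the conditional choice probabilities P(Y_t = 1│z) and P(Y_s = 1│z) in a model with no endogenous covariates). Then the family of inequalities [ for all c ∈ ℝ: p_t·1{z_t·β ≤ c} ≤ 1 − (1 − p_s)·1{z_s·β ≥ c} ] holds if and only if the maximum-score-type implication [ z_s·β ≥ z_t·β ⟹ p_t ≤ p_s ] holds. -/
open Matrix

/-- At a threshold `c` with `a ≤ c ≤ b` the inequality reads `p ≤ q`; at every other `c` one side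
of it is trivial (`p ≤ 1`, `0 ≤ q` or `0 ≤ 1`). -/
theorem forall_mul_ite_le_one_sub_mul_ite_iff {α R : Type*} [LinearOrder α] [Ring R]
    [LinearOrder R] [IsStrictOrderedRing R] (a b : α) {p q : R} (hp : p ≤ 1) (hq : 0 ≤ q) :
    (∀ c : α, p * (if a ≤ c then (1 : R) else 0) ≤ 1 - (1 - q) * (if c ≤ b then (1 : R) else 0))
      ↔ (a ≤ b → p ≤ q) := by
  refine ⟨fun h hab => by simpa [hab] using h a, fun h c => ?_⟩
  by_cases hac : a ≤ c <;> by_cases hcb : c ≤ b <;> simp [hac, hcb, hp, hq]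
  exact h (hac.trans hcb)

/-- Equivalence with Manski's maximum-score restriction. For covariate
realizations `z_t, z_s ∈ ℝ^d`, a coefficient `β ∈ ℝ^d`, and conditional choice
probabilities `p_t, p_s ∈ [0,1]`, the family of inequalities
`∀ c ∈ ℝ, p_t·1{z_t·β ≤ c} ≤ 1 − (1 − p_s)·1{z_s·β ≥ c}`
holds if and only if the maximum-score-type implication
`z_s·β ≥ z_t·β ⟹ p_t ≤ p_s` holds. -/
theorem stmt_14
    {d : ℕ} (zt zs : Fin d → ℝ) (β : Fin d → ℝ)
    (pt ps : ℝ)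
    (hpt : 0 ≤ pt ∧ pt ≤ 1) (hps : 0 ≤ ps ∧ ps ≤ 1) :
    (∀ c : ℝ,
        pt * (if zt ⬝ᵥ β ≤ c then (1 : ℝ) else 0)
          ≤ 1 - (1 - ps) * (if c ≤ zs ⬝ᵥ β then (1 : ℝ) else 0))
      ↔ (zt ⬝ᵥ β ≤ zs ⬝ᵥ β → pt ≤ ps) :=
  forall_mul_ite_le_one_sub_mul_ite_iff _ _ hpt.2 hps.1
end

section
/- Derivation of the KPT(v) restriction: let p, q, γ ∈ ℝ and a₁₁, a₁₀, d₁₁, d₁₀ ∈ [0,1] (interpreted in the AR(1) dynamic binary choice model as p = z_t·β₀, q = z_s·β₀, γ = γ₀, a₁₁ = P(Y_t = 1, Y_{t−1} = 1│z), a₁₀ = P(Y_t = 1, Y_{t−1} = 0│z), d₁₁ = P(Y_s = 0, Y_{s−1} = 1│z), d₁₀ = P(Y_s = 0, Y_{s−1} = 0│z)). Suppose that for every c ∈ ℝ: a₁₁·1{p + γ ≤ c} + a₁₀·1{p ≤ c} ≤ 1 − d₁₁·1{q + γ ≥ c} − d₁₀·1{q ≥ c}. Then a₁₁ > 1 − d₁₁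 implies p > q. -/
open Set

theorem le_one_sub_of_ineq_at_mem_Icc {p q γ a11 a10 d11 d10 c : ℝ}
    (ha10 : 0 ≤ a10) (hd10 : 0 ≤ d10) (hc : c ∈ Icc (p + γ) (q + γ))
    (hineq : a11 * (if p + γ ≤ c then (1 : ℝ) else 0) + a10 * (if p ≤ c then (1 : ℝ) else 0)
        ≤ 1 - d11 * (if c ≤ q + γ then (1 : ℝ) else 0)
            - d10 * (if c ≤ q then (1 : ℝ) else 0)) :
    a11 ≤ 1 - d11 := by
  rw [if_pos hc.1, if_pos hc.2, mul_one, mul_one] at hineq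
  have ha : 0 ≤ a10 * (if p ≤ c then (1 : ℝ) else 0) :=
    mul_nonneg ha10 (ite_nonneg zero_le_one le_rfl)
  have hd : 0 ≤ d10 * (if c ≤ q then (1 : ℝ) else 0) :=
    mul_nonneg hd10 (ite_nonneg zero_le_one le_rfl)
  linarith

theorem stmt_15_general
    (p q γ : ℝ) (a11 a10 d11 d10 : ℝ)
    (ha10 : 0 ≤ a10 ∧ a10 ≤ 1)
    (hd10 : 0 ≤ d10 ∧ d10 ≤ 1)
    (hineq : ∀ c : ℝ,
      a11 * (if p + γ ≤ c then (1 : ℝ) else 0) + a10 * (if p ≤ c then (1 : ℝ) else 0)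
        ≤ 1 - d11 * (if c ≤ q + γ then (1 : ℝ) else 0)
            - d10 * (if c ≤ q then (1 : ℝ) else 0)) :
    1 - d11 < a11 → q < p := by
  intro h
  by_contra! hpq
  have hc : p + γ ∈ Icc (p + γ) (q + γ) := ⟨le_rfl, by linarith⟩
  exact (le_one_sub_of_ineq_at_mem_Icc ha10.1 hd10.1 hc (hineq _)).not_gt h

/-- Derivation of the KPT(v) restriction. Let `p, q, γ ∈ ℝ` and
`a₁₁, a₁₀, d₁₁, d₁₀ ∈ [0,1]`. If for every `c ∈ ℝ`,
`a₁₁·1{p + γ ≤ c} + a₁₀·1{p ≤ c} ≤ 1 − d₁₁·1{q + γ ≥ c} − d₁₀·1{q ≥ c}`,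
then `a₁₁ > 1 − d₁₁` implies `p > q`. -/
theorem stmt_15
    (p q γ : ℝ) (a11 a10 d11 d10 : ℝ)
    (ha11 : 0 ≤ a11 ∧ a11 ≤ 1) (ha10 : 0 ≤ a10 ∧ a10 ≤ 1)
    (hd11 : 0 ≤ d11 ∧ d11 ≤ 1) (hd10 : 0 ≤ d10 ∧ d10 ≤ 1)
    (hineq : ∀ c : ℝ,
      a11 * (if p + γ ≤ c then (1 : ℝ) else 0) + a10 * (if p ≤ c then (1 : ℝ) else 0)
        ≤ 1 - d11 * (if c ≤ q + γ then (1 : ℝ) else 0)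
            - d10 * (if c ≤ q then (1 : ℝ) else 0)) :
    1 - d11 < a11 → q < p :=
  stmt_15_general p q γ a11 a10 d11 d10 ha10 hd10 hineq
end

section
/- Derivation of the KPT(i) restriction: let p, q, γ ∈ ℝ and a₁₁, a₁₀, d₁₁, d₁₀ ∈ [0,1]. Suppose that for every c ∈ ℝ: a₁₁·1{p + γ ≤ c} + a₁₀·1{p ≤ c} ≤ 1 − d₁₁·1{q + γ ≥ c} − d₁₀·1{q ≥ c}. Then a₁₁ + a₁₀ > 1 − d₁₁ − d₁₀ implies (p − q) + |γ| > 0. -/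
/-! At the threshold `c = max p (p + γ)` every indicator on the left equals one, and if
`(p - q) + |γ| ≤ 0` then `c ≤ min q (q + γ)`, so every indicator on the right equals one as well.
The moment inequality at this `c` then reads `a₁₁ + a₁₀ ≤ 1 - d₁₁ - d₁₀`. -/

theorem max_self_add_sub_min_self_add (p q γ : ℝ) :
    max p (p + γ) - min q (q + γ) = p - q + |γ| := by
  rcases le_total 0 γ with hγ | hγ
  · rw [max_eq_right (by linarith), min_eq_left (by linarith), abs_of_nonneg hγ]
    ring
  · rw [max_eq_left (by linarith), min_eq_right (by linarith), abs_of_nonpos hγ]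
    ring

theorem stmt_16_general
    (p q γ : ℝ) (a11 a10 d11 d10 : ℝ)
    (hineq : ∀ c : ℝ,
      a11 * (if p + γ ≤ c then (1 : ℝ) else 0) + a10 * (if p ≤ c then (1 : ℝ) else 0)
        ≤ 1 - d11 * (if c ≤ q + γ then (1 : ℝ) else 0)
            - d10 * (if c ≤ q then (1 : ℝ) else 0)) :
    1 - d11 - d10 < a11 + a10 → 0 < (p - q) + |γ| := by
  intro h
  by_contra! hgap
  set c := max p (p + γ)
  have hc_le : c ≤ min q (q + γ) := by
    linarith [max_self_add_sub_min_self_add p q γ]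
  have hmoment := hineq c
  rw [if_pos (le_max_right _ _), if_pos (le_max_left _ _),
    if_pos (hc_le.trans (min_le_right _ _)), if_pos (hc_le.trans (min_le_left _ _))] at hmoment
  linarith

/-- Derivation of the KPT(i) restriction. Let `p, q, γ ∈ ℝ` and
`a₁₁, a₁₀, d₁₁, d₁₀ ∈ [0,1]`. If for every `c ∈ ℝ`,
`a₁₁·1{p + γ ≤ c} + a₁₀·1{p ≤ c} ≤ 1 − d₁₁·1{q + γ ≥ c} − d₁₀·1{q ≥ c}`,
then `a₁₁ + a₁₀ > 1 − d₁₁ − d₁₀` implies `(p − q) + |γ| > 0`. -/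
theorem stmt_16
    (p q γ : ℝ) (a11 a10 d11 d10 : ℝ)
    (ha11 : 0 ≤ a11 ∧ a11 ≤ 1) (ha10 : 0 ≤ a10 ∧ a10 ≤ 1)
    (hd11 : 0 ≤ d11 ∧ d11 ≤ 1) (hd10 : 0 ≤ d10 ∧ d10 ≤ 1)
    (hineq : ∀ c : ℝ,
      a11 * (if p + γ ≤ c then (1 : ℝ) else 0) + a10 * (if p ≤ c then (1 : ℝ) else 0)
        ≤ 1 - d11 * (if c ≤ q + γ then (1 : ℝ) else 0)
            - d10 * (if c ≤ q then (1 : ℝ) else 0)) :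
    1 - d11 - d10 < a11 + a10 → 0 < (p - q) + |γ| :=
  stmt_16_general p q γ a11 a10 d11 d10 hineq
end

section
/- Sign identification of the exogenous index in the two-period model: in the two-period binary choice model (T = 2) under partial stationarity, if there exists a value x in the support of the endogenous covariates such that 1 − P(Y_1 = 0 and X_1 = x) < P(Y_2 = 1 and X_2 = x), then (z_2 − z_1)·β₀ > 0; symmetrically, if there exists x such that 1 − P(Y_1 = 1 and X_1 = x) < P(Y_2 = 0 and X_2 = x), then (z_2 − z_1)·β₀ < 0. -/
open MeasureTheory Matrix

/-! If `z₂·β₀ ≤ z₁·β₀`, the period-2 threshold `c₂ = z₂·β₀ + x·γ₀` at `x` is at most the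
period-1 threshold `c₁`, and since `v₁` and `v₂` have the same law,
`P(Y₂ = 1, X₂ = x) ≤ P(v₂ ≤ c₂) ≤ P(v₁ ≤ c₁) ≤ 1 − P(Y₁ = 0, X₁ = x)`.
The second claim is the first with the two periods exchanged. -/

open ProbabilityTheory

section

variable {Ω α : Type*}

lemma measureReal_add_measureReal_le_one_of_identDistrib [MeasurableSpace Ω] {P : Measure Ω}
    [IsProbabilityMeasure P]
    {v w : Ω → ℝ} (hvw : IdentDistrib v w P P) {c d : ℝ} (hcd : c ≤ d) {A B : Set Ω}
    (hA : A ⊆ {ω | v ω ≤ c}) (hB : B ⊆ {ω | d < w ω}) :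
    P.real A + P.real B ≤ 1 := by
  have hvw_cdf : P.real {ω | v ω ≤ d} = P.real {ω | w ω ≤ d} :=
    congrArg ENNReal.toReal (hvw.measure_mem_eq measurableSet_Iic)
  have hB_compl : P.real {ω | d < w ω} = 1 - P.real {ω | w ω ≤ d} := by
    rw [← probReal_compl_eq_one_sub₀ (s := {ω | w ω ≤ d})
      (hvw.aemeasurable_snd.nullMeasurable measurableSet_Iic)]
    simp only [Set.compl_ofPred, not_le]
  have hA_le : P.real A ≤ P.real {ω | v ω ≤ d} :=
    measureReal_mono (hA.trans fun ω (h : v ω ≤ c) => show v ω ≤ d from h.trans hcd)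
  have hB_le : P.real B ≤ P.real {ω | d < w ω} := measureReal_mono hB
  linarith

section BinaryOutcome

variable {Y v : Ω → ℝ} {X : Ω → α} {a : ℝ} {g : α → ℝ}

lemma setOf_outcome_eq_one_subset (hY : ∀ ω, Y ω = if v ω ≤ a + g (X ω) then 1 else 0) (x : α) :
    {ω | Y ω = 1 ∧ X ω = x} ⊆ {ω | v ω ≤ a + g x} := by
  rintro ω ⟨hY1, rfl⟩
  by_contra h
  simp only [Set.mem_ofPred_eq] at h
  simp [hY, h] at hY1

lemma setOf_outcome_eq_zero_subset (hY : ∀ ω, Y ω = if v ω ≤ a + g (X ω) then 1 else 0) (x : α) :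
    {ω | Y ω = 0 ∧ X ω = x} ⊆ {ω | a + g x < v ω} := by
  rintro ω ⟨hY0, rfl⟩
  by_contra h
  simp only [Set.mem_ofPred_eq, not_lt] at h
  simp [hY, h] at hY0

end BinaryOutcome

lemma index_lt_of_one_sub_lt [MeasurableSpace Ω] {P : Measure Ω} [IsProbabilityMeasure P]
    {v w Y W : Ω → ℝ} {X X' : Ω → α} (hvw : IdentDistrib v w P P) {a b : ℝ} {g : α → ℝ}
    (hY : ∀ ω, Y ω = if v ω ≤ a + g (X ω) then 1 else 0)
    (hW : ∀ ω, W ω = if w ω ≤ b + g (X' ω) then 1 else 0) {x : α}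
    (hx : 1 - P.real {ω | Y ω = 0 ∧ X ω = x} < P.real {ω | W ω = 1 ∧ X' ω = x}) :
    a < b := by
  by_contra! hba
  have := measureReal_add_measureReal_le_one_of_identDistrib hvw.symm (by linarith)
    (setOf_outcome_eq_one_subset hW x) (setOf_outcome_eq_zero_subset hY x)
  linarith

end

theorem stmt_17_general
    {Ω : Type*} [MeasurableSpace Ω] (P : Measure Ω) [IsProbabilityMeasure P]
    {dz dx : ℕ}
    (z : Fin 2 → (Fin dz → ℝ))
    (v : Fin 2 → Ω → ℝ) (X : Fin 2 → Ω → (Fin dx → ℝ))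
    (hv : ∀ t, Measurable (v t))
    (𝒳 : Finset (Fin dx → ℝ))
    (β₀ : Fin dz → ℝ) (γ₀ : Fin dx → ℝ)
    (Y : Fin 2 → Ω → ℝ)
    (hY : ∀ t ω, Y t ω = if v t ω ≤ z t ⬝ᵥ β₀ + X t ω ⬝ᵥ γ₀ then 1 else 0)
    (hstat : P.map (v 0) = P.map (v 1)) :
    ((∃ x ∈ 𝒳,
        1 - (P {ω | Y 0 ω = 0 ∧ X 0 ω = x}).toReal
          < (P {ω | Y 1 ω = 1 ∧ X 1 ω = x}).toReal) →
      0 < (z 1 - z 0) ⬝ᵥ β₀) ∧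
    ((∃ x ∈ 𝒳,
        1 - (P {ω | Y 0 ω = 1 ∧ X 0 ω = x}).toReal
          < (P {ω | Y 1 ω = 0 ∧ X 1 ω = x}).toReal) →
      (z 1 - z 0) ⬝ᵥ β₀ < 0) := by
  have hid : IdentDistrib (v 0) (v 1) P P := ⟨(hv 0).aemeasurable, (hv 1).aemeasurable, hstat⟩
  rw [sub_dotProduct, sub_pos, sub_neg]
  constructor
  · rintro ⟨x, -, hx⟩
    exact index_lt_of_one_sub_lt (g := (· ⬝ᵥ γ₀)) hid (hY 0) (hY 1) hx
  · rintro ⟨x, -, hx⟩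
    exact index_lt_of_one_sub_lt (g := (· ⬝ᵥ γ₀)) hid.symm (hY 1) (hY 0) (x := x)
      (by simp only [measureReal_def]; linarith)

/-- Sign identification of the exogenous index in the two-period
binary choice model `Y_t = 1{v_t ≤ z_t·β₀ + X_t·γ₀}` (periods `0, 1` standing for
`1, 2`) under partial stationarity. If there exists a value `x` in the (finite)
support `𝒳` of the endogenous covariates with
`1 − P(Y_1 = 0 ∧ X_1 = x) < P(Y_2 = 1 ∧ X_2 = x)`, then `(z_2 − z_1)·β₀ > 0`;
symmetrically, if there exists `x ∈ 𝒳` with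
`1 − P(Y_1 = 1 ∧ X_1 = x) < P(Y_2 = 0 ∧ X_2 = x)`, then `(z_2 − z_1)·β₀ < 0`. -/
theorem stmt_17
    {Ω : Type*} [MeasurableSpace Ω] (P : Measure Ω) [IsProbabilityMeasure P]
    {dz dx : ℕ}
    (z : Fin 2 → (Fin dz → ℝ))
    (v : Fin 2 → Ω → ℝ) (X : Fin 2 → Ω → (Fin dx → ℝ))
    (hv : ∀ t, Measurable (v t)) (hX : ∀ t, Measurable (X t))
    (𝒳 : Finset (Fin dx → ℝ)) (hsupp : ∀ t ω, X t ω ∈ 𝒳)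
    (β₀ : Fin dz → ℝ) (γ₀ : Fin dx → ℝ)
    (Y : Fin 2 → Ω → ℝ)
    (hY : ∀ t ω, Y t ω = if v t ω ≤ z t ⬝ᵥ β₀ + X t ω ⬝ᵥ γ₀ then 1 else 0)
    (hstat : P.map (v 0) = P.map (v 1)) :
    ((∃ x ∈ 𝒳,
        1 - (P {ω | Y 0 ω = 0 ∧ X 0 ω = x}).toReal
          < (P {ω | Y 1 ω = 1 ∧ X 1 ω = x}).toReal) →
      0 < (z 1 - z 0) ⬝ᵥ β₀) ∧
    ((∃ x ∈ 𝒳,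
        1 - (P {ω | Y 0 ω = 1 ∧ X 0 ω = x}).toReal
          < (P {ω | Y 1 ω = 0 ∧ X 1 ω = x}).toReal) →
      (z 1 - z 0) ⬝ᵥ β₀ < 0) :=
  stmt_17_general P z v X hv 𝒳 β₀ γ₀ Y hY hstat
end

section
/- Point identification of β₀ up to scale under the support condition: let Δ𝒵 ⊆ ℝ^{d} and β₀ ∈ ℝ^{d} satisfy: (1) Δ𝒵 is not contained in any proper linear subspace of ℝ^{d}; and (2) there exists a coordinate j* with β₀_{j*} ≠ 0 such that for every δ ∈ Δ𝒵 and every r ∈ ℝ, the vector obtained from δ by replacing its j*-th coordinate with r also lies in Δ𝒵 (the conditional support of the j*-th coordinate is all of ℝ). If b ∈ ℝ^{d} satisfies the sign-agreement condition (δ·b > 0 ⟺ δ·β₀ > 0) for every δ ∈ Δ𝒵, then b = k·β₀ for some scalar k > 0. Hence β₀ is point identified up to scale from the identified signs δ ↦ sign(δ·β₀) on Δ𝒵. -/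
/-!
Along the line `t ↦ δ` with its `j`-th coordinate replaced by `t`, both `· ⬝ᵥ b` and
`· ⬝ᵥ β₀` are affine in `t`, with slopes `b j` and `β₀ j ≠ 0`. Two affine functions with
the same positivity set on all of `ℝ` are positive multiples of each other (compare them at
the roots), so `δ ⬝ᵥ b = k * δ ⬝ᵥ β₀` on `Δ𝒵` with `k = b j / β₀ j > 0`, the same for
every `δ`. Hence `b - k • β₀` is orthogonal to `Δ𝒵`, and since `Δ𝒵` lies in no proper
subspace it is zero.
-/

open Matrix

theorem pos_div_and_eq_div_mul_of_pos_iff_pos {A B C E : ℝ} (hE : E ≠ 0)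
    (h : ∀ t : ℝ, 0 < A + t * B ↔ 0 < C + t * E) :
    0 < B / E ∧ A = B / E * C := by
  have hle : A - B / E * C ≤ 0 := by
    have hg : C + -C / E * E = 0 := by field_simp; ring
    have hf : A + -C / E * B = A - B / E * C := by ring
    rw [← hf, ← not_lt, h, hg]
    exact lt_irrefl 0
  have hlt : 0 < A - B / E * C + B / E := by
    have hg : C + (1 - C) / E * E = 1 := by field_simp; ring
    have hf : A + (1 - C) / E * B = A - B / E * C + B / E := by ring
    rw [← hf, h, hg]
    exact one_pos
  have hk : 0 < B / E := by linarith
  have hge : 0 ≤ A - B / E * C := by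
    have hB : B ≠ 0 := fun hB => hk.ne' (by rw [hB, zero_div])
    have hf : A + -A / B * B = 0 := by field_simp; ring
    have hg : C + -A / B * E = (B / E * C - A) / (B / E) := by field_simp; ring
    have := (not_congr (h (-A / B))).mp (by rw [hf]; exact lt_irrefl 0)
    rw [hg, not_lt, div_le_iff₀ hk, zero_mul] at this
    linarith
  exact ⟨hk, by linarith⟩

section Update

variable {n : Type*} [Fintype n] [DecidableEq n]

theorem update_dotProduct {R : Type*} [CommRing R] (u v : n → R) (j : n) (t : R) :
    Function.update u j t ⬝ᵥ v = Function.update u j 0 ⬝ᵥ v + t * v j := by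
  simp only [Pi.update_eq_sub_add_single, Pi.single_zero, add_zero, add_dotProduct,
    single_dotProduct]

theorem dotProduct_eq_div_mul_of_pos_iff_pos_update {δ b β : n → ℝ} {j : n} (hβ : β j ≠ 0)
    (h : ∀ t : ℝ, 0 < Function.update δ j t ⬝ᵥ b ↔ 0 < Function.update δ j t ⬝ᵥ β) :
    0 < b j / β j ∧ δ ⬝ᵥ b = b j / β j * (δ ⬝ᵥ β) := by
  have haffine : ∀ t : ℝ, 0 < Function.update δ j 0 ⬝ᵥ b + t * b j ↔
      0 < Function.update δ j 0 ⬝ᵥ β + t * β j := fun t => by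
    rw [← update_dotProduct, ← update_dotProduct]
    exact h t
  obtain ⟨hk, hconst⟩ := pos_div_and_eq_div_mul_of_pos_iff_pos hβ haffine
  refine ⟨hk, ?_⟩
  calc δ ⬝ᵥ b = Function.update δ j 0 ⬝ᵥ b + δ j * b j := by
        rw [← update_dotProduct, Function.update_eq_self]
    _ = b j / β j * (Function.update δ j 0 ⬝ᵥ β + δ j * β j) := by
        rw [hconst]; field_simp
    _ = b j / β j * (δ ⬝ᵥ β) := by
        rw [← update_dotProduct, Function.update_eq_self]

end Update

theorem eq_zero_of_forall_dotProduct_eq_zero {n : Type*} [Fintype n] (D : Set (n → ℝ))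
    (hD : ∀ S : Submodule ℝ (n → ℝ), S ≠ ⊤ → ¬(D ⊆ (S : Set (n → ℝ)))) {v : n → ℝ}
    (hv : ∀ δ ∈ D, δ ⬝ᵥ v = 0) : v = 0 := by
  have hker : LinearMap.ker (dotProductBilin ℝ ℝ v) = ⊤ := by
    by_contra hne
    exact hD _ hne fun δ hδ => by simpa [dotProduct_comm] using hv δ hδ
  exact dotProduct_self_eq_zero.mp (LinearMap.mem_ker.mp (hker ▸ Submodule.mem_top))

/-- Point identification of `β₀` up to scale under the support
condition. Let `Δ𝒵 ⊆ ℝ^d` satisfy: (1) `Δ𝒵` is not contained in any proper linear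
subspace of `ℝ^d`; (2) there is a coordinate `j*` with `β₀_{j*} ≠ 0` whose
conditional support is all of `ℝ` (replacing the `j*`-th coordinate of any `δ ∈ Δ𝒵`
by any real keeps it in `Δ𝒵`). If `b` satisfies the sign-agreement condition
`δ·b > 0 ⟺ δ·β₀ > 0` for every `δ ∈ Δ𝒵`, then `b = k·β₀` for some scalar `k > 0`. -/
theorem stmt_18
    {d : ℕ} (D : Set (Fin d → ℝ)) (β₀ : Fin d → ℝ)
    (h1 : ∀ S : Submodule ℝ (Fin d → ℝ), S ≠ ⊤ → ¬(D ⊆ (S : Set (Fin d → ℝ))))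
    (h2 : ∃ j : Fin d, β₀ j ≠ 0 ∧ ∀ δ ∈ D, ∀ r : ℝ, Function.update δ j r ∈ D)
    (b : Fin d → ℝ)
    (hsign : ∀ δ ∈ D, (0 < δ ⬝ᵥ b ↔ 0 < δ ⬝ᵥ β₀)) :
    ∃ k : ℝ, 0 < k ∧ b = k • β₀ := by
  obtain ⟨j, hβj, hupd⟩ := h2
  have hline : ∀ δ ∈ D, 0 < b j / β₀ j ∧ δ ⬝ᵥ b = b j / β₀ j * (δ ⬝ᵥ β₀) := fun δ hδ =>
    dotProduct_eq_div_mul_of_pos_iff_pos_update hβj fun t => hsign _ (hupd δ hδ t)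
  have : Nonempty (Fin d) := ⟨j⟩
  obtain ⟨δ₀, hδ₀, -⟩ := Set.not_subset.mp (h1 ⊥ bot_ne_top)
  refine ⟨b j / β₀ j, (hline δ₀ hδ₀).1, ?_⟩
  rw [← sub_eq_zero]
  refine eq_zero_of_forall_dotProduct_eq_zero D h1 fun δ hδ => ?_
  rw [dotProduct_sub, dotProduct_smul, smul_eq_mul, (hline δ hδ).2, sub_self]
end

section
/- Bounding and sign identification of the endogenous coefficient: in the two-period binary choice model (T = 2) under partial stationarity, fix a coordinate j ∈ {1, …, d_x}. If there exist values x₁, x₂ in the support of the endogenous covariates with x₁ⱼ ≠ x₂ⱼ and x₁ₘ = x₂ₘ for all m ≠ j, such that 1 − P(Y_1 = 0 and X_1 = x₁) < P(Y_2 = 1 and X_2 = x₂), then (x₁ⱼ − x₂ⱼ)·γ₀ⱼ < (z_2 − z_1)·β₀; symmetrically, if there exist such x₁, x₂ with 1 − P(Y_1 = 1 and X_1 = x₁) < P(Y_2 = 0 and X_2 = x₂), then (x₁ⱼ − x₂ⱼ)·γ₀ⱼ > (z_2 − z_1)·β₀. In particular, when the sign of (z_2 − z_1)·β₀ is identified as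 negative in the first case (or positive in the second case), the sign of γ₀ⱼ is identified. -/
/-!
A period-1 observation with `Y₁ = 0, X₁ = x₁` forces `v₁ > c₁ := z₁·β₀ + x₁·γ₀`, and a period-2
observation with `Y₂ = 1, X₂ = x₂` forces `v₂ ≤ c₂ := z₂·β₀ + x₂·γ₀`. Hence
`F(c₁) ≤ 1 - P(Y₁ = 0, X₁ = x₁) < P(Y₂ = 1, X₂ = x₂) ≤ F(c₂)`, where `F` is the common
distribution function of `v₁` and `v₂`, so `c₁ < c₂`; as `x₁` and `x₂` differ only in
coordinate `j`, this is the claimed bound on `γ₀ⱼ`. The second bound is the same argument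
with the roles of `Y = 0` and `Y = 1` exchanged.
-/

open MeasureTheory Matrix

section Probability

variable {Ω : Type*} [MeasurableSpace Ω] {P : Measure Ω}

lemma measureReal_lt_of_one_sub_lt [IsProbabilityMeasure P] {A B S₀ S₁ : Set Ω}
    (hS₀ : MeasurableSet S₀) (hA : Disjoint A S₀) (hB : B ⊆ S₁)
    (h : 1 - P.real A < P.real B) : P.real S₀ < P.real S₁ :=
  calc P.real S₀ ≤ 1 - P.real A := by
        have := measureReal_union (μ := P) hA hS₀
        linarith [measureReal_le_one (μ := P) (s := A ∪ S₀)]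
    _ < P.real B := h
    _ ≤ P.real S₁ := measureReal_mono hB

lemma measureReal_preimage_eq_of_map_eq {α : Type*} [MeasurableSpace α] {v₀ v₁ : Ω → α}
    (hv₀ : Measurable v₀) (hv₁ : Measurable v₁) (h : P.map v₀ = P.map v₁)
    {s : Set α} (hs : MeasurableSet s) : P.real (v₁ ⁻¹' s) = P.real (v₀ ⁻¹' s) :=
  congrArg ENNReal.toReal
    ((ProbabilityTheory.IdentDistrib.mk hv₀.aemeasurable hv₁.aemeasurable h).measure_mem_eq hs).symm

variable [IsFiniteMeasure P] {v : Ω → ℝ} {a b : ℝ}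

lemma lt_of_measureReal_setOf_le_lt
    (h : P.real {ω | v ω ≤ a} < P.real {ω | v ω ≤ b}) : a < b := by
  by_contra! hba
  exact h.not_ge (measureReal_mono fun ω hω => le_trans hω hba)

lemma lt_of_measureReal_setOf_lt_lt
    (h : P.real {ω | a < v ω} < P.real {ω | b < v ω}) : b < a := by
  by_contra! hab
  exact h.not_ge (measureReal_mono fun ω hω => lt_of_le_of_lt hab hω)

end Probability

section ThresholdCrossing

variable {Ω E : Type*} {Y v : Ω → ℝ} {X : Ω → E} {g : E → ℝ}

lemma setOf_eq_one_subset_setOf_le (hY : ∀ ω, Y ω = if v ω ≤ g (X ω) then 1 else 0) (x : E) :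
    {ω | Y ω = 1 ∧ X ω = x} ⊆ {ω | v ω ≤ g x} := by
  rintro ω ⟨hY1, rfl⟩
  show v ω ≤ g (X ω)
  by_contra hlt
  rw [hY, if_neg hlt] at hY1
  exact zero_ne_one hY1

lemma setOf_eq_zero_subset_setOf_lt (hY : ∀ ω, Y ω = if v ω ≤ g (X ω) then 1 else 0) (x : E) :
    {ω | Y ω = 0 ∧ X ω = x} ⊆ {ω | g x < v ω} := by
  rintro ω ⟨hY0, rfl⟩
  show g (X ω) < v ω
  by_contra hle
  rw [hY, if_pos (not_lt.mp hle)] at hY0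
  exact one_ne_zero hY0

end ThresholdCrossing

lemma sub_dotProduct_eq_mul_of_eq_of_ne {n R : Type*} [Fintype n] [DecidableEq n]
    [NonUnitalNonAssocRing R] {x₁ x₂ γ : n → R} {j : n} (h : ∀ m, m ≠ j → x₁ m = x₂ m) :
    (x₁ - x₂) ⬝ᵥ γ = (x₁ j - x₂ j) * γ j := by
  have hsingle : x₁ - x₂ = Pi.single j (x₁ j - x₂ j) := by
    ext m
    by_cases hm : m = j
    · subst hm; simp
    · simp [hm, h m hm]
  rw [hsingle, single_dotProduct]

theorem stmt_19_general
    {Ω : Type*} [MeasurableSpace Ω] (P : Measure Ω) [IsProbabilityMeasure P]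
    {dz dx : ℕ}
    (z : Fin 2 → (Fin dz → ℝ))
    (v : Fin 2 → Ω → ℝ) (X : Fin 2 → Ω → (Fin dx → ℝ))
    (hv : ∀ t, Measurable (v t))
    (𝒳 : Finset (Fin dx → ℝ))
    (β₀ : Fin dz → ℝ) (γ₀ : Fin dx → ℝ)
    (Y : Fin 2 → Ω → ℝ)
    (hY : ∀ t ω, Y t ω = if v t ω ≤ z t ⬝ᵥ β₀ + X t ω ⬝ᵥ γ₀ then 1 else 0)
    (hstat : P.map (v 0) = P.map (v 1))
    (j : Fin dx) :
    (∀ x₁ x₂ : Fin dx → ℝ, x₁ ∈ 𝒳 → x₂ ∈ 𝒳 →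
      x₁ j ≠ x₂ j → (∀ m : Fin dx, m ≠ j → x₁ m = x₂ m) →
      1 - (P {ω | Y 0 ω = 0 ∧ X 0 ω = x₁}).toReal
          < (P {ω | Y 1 ω = 1 ∧ X 1 ω = x₂}).toReal →
      (x₁ j - x₂ j) * γ₀ j < (z 1 - z 0) ⬝ᵥ β₀) ∧
    (∀ x₁ x₂ : Fin dx → ℝ, x₁ ∈ 𝒳 → x₂ ∈ 𝒳 →
      x₁ j ≠ x₂ j → (∀ m : Fin dx, m ≠ j → x₁ m = x₂ m) →
      1 - (P {ω | Y 0 ω = 1 ∧ X 0 ω = x₁}).toReal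
          < (P {ω | Y 1 ω = 0 ∧ X 1 ω = x₂}).toReal →
      (z 1 - z 0) ⬝ᵥ β₀ < (x₁ j - x₂ j) * γ₀ j) := by
  set c : Fin 2 → (Fin dx → ℝ) → ℝ := fun t x => z t ⬝ᵥ β₀ + x ⬝ᵥ γ₀
  have hγ : ∀ x₁ x₂ : Fin dx → ℝ, (∀ m, m ≠ j → x₁ m = x₂ m) →
      (x₁ j - x₂ j) * γ₀ j = c 0 x₁ - c 1 x₂ + (z 1 - z 0) ⬝ᵥ β₀ := by
    intro x₁ x₂ hm
    rw [← sub_dotProduct_eq_mul_of_eq_of_ne hm, sub_dotProduct, sub_dotProduct]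
    ring
  constructor
  · intro x₁ x₂ _ _ _ hm h
    have hdisj : Disjoint {ω | Y 0 ω = 0 ∧ X 0 ω = x₁} {ω | v 0 ω ≤ c 0 x₁} :=
      Set.disjoint_of_subset_left (setOf_eq_zero_subset_setOf_lt (g := c 0) (hY 0) x₁)
        ((Set.Iic_disjoint_Ioi le_rfl).preimage (v 0)).symm
    have hc : c 0 x₁ < c 1 x₂ := lt_of_measureReal_setOf_le_lt <| calc
      P.real {ω | v 0 ω ≤ c 0 x₁} < P.real {ω | v 1 ω ≤ c 1 x₂} :=
        measureReal_lt_of_one_sub_lt (measurableSet_le (hv 0) measurable_const) hdisj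
          (setOf_eq_one_subset_setOf_le (g := c 1) (hY 1) x₂) h
      _ = P.real {ω | v 0 ω ≤ c 1 x₂} :=
        measureReal_preimage_eq_of_map_eq (hv 0) (hv 1) hstat measurableSet_Iic
    linarith [hγ x₁ x₂ hm]
  · intro x₁ x₂ _ _ _ hm h
    have hdisj : Disjoint {ω | Y 0 ω = 1 ∧ X 0 ω = x₁} {ω | c 0 x₁ < v 0 ω} :=
      Set.disjoint_of_subset_left (setOf_eq_one_subset_setOf_le (g := c 0) (hY 0) x₁)
        ((Set.Iic_disjoint_Ioi le_rfl).preimage (v 0))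
    have hc : c 1 x₂ < c 0 x₁ := lt_of_measureReal_setOf_lt_lt <| calc
      P.real {ω | c 0 x₁ < v 0 ω} < P.real {ω | c 1 x₂ < v 1 ω} :=
        measureReal_lt_of_one_sub_lt (measurableSet_lt measurable_const (hv 0)) hdisj
          (setOf_eq_zero_subset_setOf_lt (g := c 1) (hY 1) x₂) h
      _ = P.real {ω | c 1 x₂ < v 0 ω} :=
        measureReal_preimage_eq_of_map_eq (hv 0) (hv 1) hstat measurableSet_Ioi
    linarith [hγ x₁ x₂ hm]

/-- Bounding and sign identification of the endogenous coefficient in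
the two-period binary choice model `Y_t = 1{v_t ≤ z_t·β₀ + X_t·γ₀}` (periods `0, 1`
standing for `1, 2`) under partial stationarity. Fix a coordinate `j`. For any
`x₁, x₂` in the (finite) support `𝒳` of the endogenous covariates with `x₁ⱼ ≠ x₂ⱼ`
and `x₁ₘ = x₂ₘ` for `m ≠ j`: if
`1 − P(Y_1 = 0 ∧ X_1 = x₁) < P(Y_2 = 1 ∧ X_2 = x₂)` then
`(x₁ⱼ − x₂ⱼ)·γ₀ⱼ < (z_2 − z_1)·β₀`; symmetrically, if
`1 − P(Y_1 = 1 ∧ X_1 = x₁) < P(Y_2 = 0 ∧ X_2 = x₂)` then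
`(x₁ⱼ − x₂ⱼ)·γ₀ⱼ > (z_2 − z_1)·β₀`. (When the sign of `(z_2 − z_1)·β₀` is identified
as negative in the first case, or positive in the second, the sign of `γ₀ⱼ` is
identified.) -/
theorem stmt_19
    {Ω : Type*} [MeasurableSpace Ω] (P : Measure Ω) [IsProbabilityMeasure P]
    {dz dx : ℕ}
    (z : Fin 2 → (Fin dz → ℝ))
    (v : Fin 2 → Ω → ℝ) (X : Fin 2 → Ω → (Fin dx → ℝ))
    (hv : ∀ t, Measurable (v t)) (hX : ∀ t, Measurable (X t))
    (𝒳 : Finset (Fin dx → ℝ)) (hsupp : ∀ t ω, X t ω ∈ 𝒳)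
    (β₀ : Fin dz → ℝ) (γ₀ : Fin dx → ℝ)
    (Y : Fin 2 → Ω → ℝ)
    (hY : ∀ t ω, Y t ω = if v t ω ≤ z t ⬝ᵥ β₀ + X t ω ⬝ᵥ γ₀ then 1 else 0)
    (hstat : P.map (v 0) = P.map (v 1))
    (j : Fin dx) :
    (∀ x₁ x₂ : Fin dx → ℝ, x₁ ∈ 𝒳 → x₂ ∈ 𝒳 →
      x₁ j ≠ x₂ j → (∀ m : Fin dx, m ≠ j → x₁ m = x₂ m) →
      1 - (P {ω | Y 0 ω = 0 ∧ X 0 ω = x₁}).toReal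
          < (P {ω | Y 1 ω = 1 ∧ X 1 ω = x₂}).toReal →
      (x₁ j - x₂ j) * γ₀ j < (z 1 - z 0) ⬝ᵥ β₀) ∧
    (∀ x₁ x₂ : Fin dx → ℝ, x₁ ∈ 𝒳 → x₂ ∈ 𝒳 →
      x₁ j ≠ x₂ j → (∀ m : Fin dx, m ≠ j → x₁ m = x₂ m) →
      1 - (P {ω | Y 0 ω = 1 ∧ X 0 ω = x₁}).toReal
          < (P {ω | Y 1 ω = 0 ∧ X 1 ω = x₂}).toReal →
      (z 1 - z 0) ⬝ᵥ β₀ < (x₁ j - x₂ j) * γ₀ j) :=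
  stmt_19_general P z v X hv 𝒳 β₀ γ₀ Y hY hstat j
end
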